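/- arXiv:2402.18670 — 12 statements merged into one kernel-verified Lean document; each statement's English description precedes it below -/
import Mathlib

section
/- A tree T is a graph of two parallel paths if and only if: (1) no vertex of T has degree at least 4, (2) T has at most two vertices of degree 3, and (3) any two vertices of degree 3 are adjacent in T. -/
/-!
In a tree, two edges between the parallel paths would close a cycle together with the two path
segments joining their ends, so there is at most one such edge. A vertex has at most two
neighbours on its own path, hence degree at most 3, and degree 3 only at an end of that edge.

Conversely, choose an edge `pq` containing every vertex of degree 3. Deleting it leaves two
components of maximum degree 2. A maximal path in such a component cannot be left through an
inner vertex, so it spans the component; and `pq` is the only edge between the two paths.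
-/

/-- `G` is a graph of two parallel paths: its vertex set partitions into two
(possibly empty) induced paths `v₁…v_k` and `u₁…u_ℓ` such that edges between the
two paths do not cross. -/
def IsTwoParallelPaths {V : Type*} (G : SimpleGraph V) : Prop :=
  ∃ (k l : ℕ) (v : Fin k → V) (u : Fin l → V),
    Function.Injective v ∧ Function.Injective u ∧
    (∀ i j, v i ≠ u j) ∧
    (∀ x, (∃ i, v i = x) ∨ (∃ j, u j = x)) ∧
    (∀ i i', G.Adj (v i) (v i') ↔ ((i : ℕ) + 1 = (i' : ℕ) ∨ (i' : ℕ) + 1 = (i : ℕ))) ∧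
    (∀ j j', G.Adj (u j) (u j') ↔ ((j : ℕ) + 1 = (j' : ℕ) ∨ (j' : ℕ) + 1 = (j : ℕ))) ∧
    (∀ i j i' j', G.Adj (v i) (u j) → G.Adj (v i') (u j') →
      ¬ ((i < i' ∧ j' < j) ∨ (i' < i ∧ j < j')))

open Finset

namespace SimpleGraph

variable {V : Type*} {G : SimpleGraph V} {a b : V}

theorem IsAcyclic.adj_getVert_iff (hG : G.IsAcyclic) {W : G.Walk a b} (hW : W.IsPath) {i j : ℕ}
    (hi : i ≤ W.length) (hj : j ≤ W.length) :
    G.Adj (W.getVert i) (W.getVert j) ↔ i + 1 = j ∨ j + 1 = i := by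
  refine ⟨fun h ↦ ?_, ?_⟩
  · wlog hij : i < j generalizing i j
    · have hne : i ≠ j := by rintro rfl; exact h.ne rfl
      exact (this hj hi h.symm (by omega)).symm
    have hmem : W.getVert j ∈ (W.drop i).support := by
      rw [Walk.mem_support_iff_exists_getVert]
      exact ⟨j - i, by simp [show i + (j - i) = j by omega], by simp; omega⟩
    have hsnd := hG.eq_snd_of_adj_start (hW.drop i) h hmem
    rw [Walk.snd, Walk.drop_getVert] at hsnd
    left
    exact (hW.getVert_injOn (by simp; omega) (by simp; omega) hsnd).symm
  · rintro (rfl | rfl)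
    · exact W.adj_getVert_succ (by omega)
    · exact (W.adj_getVert_succ (by omega)).symm

theorem Walk.IsPath.exists_maximal_extension [Fintype V] {a b : V} {W : G.Walk a b}
    (hW : W.IsPath) :
    ∃ (c d : V) (W' : G.Walk c d), W'.IsPath ∧ W.support ⊆ W'.support ∧
      (∀ z, G.Adj c z → z ∈ W'.support) ∧ (∀ z, G.Adj d z → z ∈ W'.support) := by
  by_cases ha : ∃ z, G.Adj a z ∧ z ∉ W.support
  · obtain ⟨z, hz, hzW⟩ := ha
    obtain ⟨c, d, W', hW', hsub, hc, hd⟩ :=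
      exists_maximal_extension (hW.cons (h := hz.symm) hzW)
    exact ⟨c, d, W', hW', fun x hx ↦ hsub (by simp [hx]), hc, hd⟩
  by_cases hb : ∃ z, G.Adj b z ∧ z ∉ W.support
  · obtain ⟨z, hz, hzW⟩ := hb
    obtain ⟨c, d, W', hW', hsub, hc, hd⟩ := exists_maximal_extension (hW.concat hzW hz)
    exact ⟨c, d, W', hW', fun x hx ↦ hsub (by simp [Walk.support_concat, hx]), hc, hd⟩
  push Not at ha hb
  exact ⟨a, b, W, hW, List.Subset.refl _, ha, hb⟩
termination_by Fintype.card V - W.length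
decreasing_by
  · have := (hW.cons (h := hz.symm) hzW).length_lt
    rw [Walk.length_cons] at this ⊢
    omega
  · have := (hW.concat hzW hz).length_lt
    rw [Walk.length_concat] at this ⊢
    omega

theorem Walk.IsPath.mem_support_of_adj [Fintype V] [DecidableRel G.Adj]
    (hdeg : ∀ x, G.degree x ≤ 2) {W : G.Walk a b} (hW : W.IsPath)
    (ha : ∀ z, G.Adj a z → z ∈ W.support) (hb : ∀ z, G.Adj b z → z ∈ W.support) {w z : V}
    (hw : w ∈ W.support) (hwz : G.Adj w z) :
    z ∈ W.support := by
  obtain ⟨i, rfl, hi⟩ := Walk.mem_support_iff_exists_getVert.mp hw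
  rcases Nat.eq_zero_or_pos i with rfl | hi0
  · exact ha z (by simpa using hwz)
  rcases hi.eq_or_lt with rfl | hilt
  · exact hb z (by simpa using hwz)
  -- an inner vertex already has two neighbours on the path, and it has no room for more
  have hnbr : G.neighborSet (W.getVert i) = W.toSubgraph.neighborSet (W.getVert i) := by
    refine (Set.eq_of_subset_of_ncard_le (W.toSubgraph.neighborSet_subset _) ?_
      (G.neighborSet _).toFinite).symm
    rw [hW.ncard_neighborSet_toSubgraph_internal_eq_two hi0.ne' hilt,
      Set.ncard_eq_toFinset_card']
    exact hdeg _
  have hz : z ∈ W.toSubgraph.neighborSet (W.getVert i) := hnbr ▸ hwz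
  exact (W.mem_verts_toSubgraph).mp (W.toSubgraph.edge_vert hz.symm)

theorem exists_isPath_support_eq_reachable [Fintype V] [DecidableRel G.Adj]
    (hdeg : ∀ x, G.degree x ≤ 2) (a : V) :
    ∃ (b c : V) (W : G.Walk b c), W.IsPath ∧ ∀ z, z ∈ W.support ↔ G.Reachable a z := by
  obtain ⟨b, c, W, hW, hsub, hb, hc⟩ :=
    (Walk.IsPath.nil (G := G) (u := a)).exists_maximal_extension
  have ha : a ∈ W.support := hsub (by simp)
  refine ⟨b, c, W, hW, fun z ↦ ⟨fun hz ↦ ?_, fun hz ↦ ?_⟩⟩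
  · classical
    exact (W.takeUntil a ha).reachable.symm.trans (W.takeUntil z hz).reachable
  · exact hz.mem_subgraphVerts (H := (⊤ : G.Subgraph).induce {x | x ∈ W.support})
      (fun x hx y hxy ↦ ⟨hx, hW.mem_support_of_adj hdeg hb hc hx hxy, hxy⟩) ha

theorem Reachable.deleteEdges_or {p q z : V} (h : G.Reachable p z) :
    (G.deleteEdges {s(p, q)}).Reachable p z ∨ (G.deleteEdges {s(p, q)}).Reachable q z := by
  rw [reachable_iff_reflTransGen] at h
  induction h with
  | refl => exact .inl .rfl
  | @tail y z _ hyz ih =>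
    by_cases he : s(y, z) = s(p, q)
    · rcases Sym2.eq_iff.mp he with ⟨-, rfl⟩ | ⟨-, rfl⟩
      exacts [.inr .rfl, .inl .rfl]
    · have hyz' : (G.deleteEdges {s(p, q)}).Reachable y z :=
        (deleteEdges_adj.mpr ⟨hyz, he⟩).reachable
      exact ih.imp (·.trans hyz') (·.trans hyz')

theorem degree_deleteEdges_lt_of_mem [Fintype V] [DecidableEq V] [DecidableRel G.Adj]
    {e : Sym2 V} (he : e ∈ G.edgeSet) {x : V} (hx : x ∈ e) :
    (G.deleteEdges {e}).degree x < G.degree x := by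
  obtain ⟨y, rfl⟩ := Sym2.mem_iff_exists.mp hx
  rw [← card_neighborFinset_eq_degree, ← card_neighborFinset_eq_degree]
  refine card_lt_card ((ssubset_iff_of_subset fun z hz ↦ ?_).mpr ⟨y, ?_, ?_⟩)
  · simp only [mem_neighborFinset, deleteEdges_adj] at hz ⊢
    exact hz.1
  · simpa using he
  · simp

theorem reachable_of_adj_succ {k : ℕ} {f : Fin k → V}
    (hf : ∀ i i' : Fin k, (i : ℕ) + 1 = i' → G.Adj (f i) (f i')) (i i' : Fin k) :
    G.Reachable (f i) (f i') :=
  let φ : pathGraph k →g G := ⟨f, fun h ↦ (pathGraph_adj.mp h).elim (hf _ _) (hf _ _ · |>.symm)⟩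
  (pathGraph_preconnected k i i').map φ

section TwoFamilies

variable {k l : ℕ} {v : Fin k → V} {u : Fin l → V}

theorem IsAcyclic.eq_and_eq_of_adj_of_adj (hG : G.IsAcyclic) (hv : Function.Injective v)
    (hu : Function.Injective u) (hvu : ∀ i j, v i ≠ u j)
    (hvadj : ∀ i i' : Fin k, (i : ℕ) + 1 = i' → G.Adj (v i) (v i'))
    (huadj : ∀ j j' : Fin l, (j : ℕ) + 1 = j' → G.Adj (u j) (u j')) {i i' : Fin k} {j j' : Fin l}
    (h : G.Adj (v i) (u j)) (h' : G.Adj (v i') (u j')) : i = i' ∧ j = j' := by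
  by_contra hne
  -- otherwise the edge `v i - u j` would not be a bridge
  set G' := G.deleteEdges {s(v i, u j)}
  have hne' : s(v i', u j') ≠ s(v i, u j) := by
    rw [Ne, Sym2.eq_iff]
    rintro (⟨hi, hj⟩ | ⟨hi, -⟩)
    exacts [hne ⟨(hv hi).symm, (hu hj).symm⟩, hvu _ _ hi]
  have hvadj' : ∀ a b : Fin k, (a : ℕ) + 1 = b → G'.Adj (v a) (v b) := fun a b hab ↦
    deleteEdges_adj.mpr ⟨hvadj a b hab, by simp [hvu]⟩
  have huadj' : ∀ a b : Fin l, (a : ℕ) + 1 = b → G'.Adj (u a) (u b) := fun a b hab ↦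
    deleteEdges_adj.mpr ⟨huadj a b hab, by simp [(hvu _ _).symm]⟩
  exact isAcyclic_iff_forall_adj_isBridge.mp hG h <| (reachable_of_adj_succ hvadj' i i').trans <|
    (deleteEdges_adj.mpr ⟨h', hne'⟩).reachable.trans (reachable_of_adj_succ huadj' j' j)

theorem degree_le_three_of_cover [Fintype V] [DecidableEq V] [DecidableRel G.Adj]
    (hcov : ∀ x, (∃ i, v i = x) ∨ (∃ j, u j = x))
    (hv : ∀ i i', G.Adj (v i) (v i') ↔ ((i : ℕ) + 1 = (i' : ℕ) ∨ (i' : ℕ) + 1 = (i : ℕ)))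
    {i : Fin k} (huniq : ∀ j j', G.Adj (v i) (u j) → G.Adj (v i) (u j') → j = j') :
    G.degree (v i) ≤ 3 ∧ (G.degree (v i) = 3 → ∃ j, G.Adj (v i) (u j)) := by
  set pred := univ.filter fun i' : Fin k ↦ (i' : ℕ) + 1 = i
  set succ := univ.filter fun i' : Fin k ↦ (i : ℕ) + 1 = i'
  set cross := univ.filter fun j ↦ G.Adj (v i) (u j)
  have hsub : G.neighborFinset (v i) ⊆ pred.image v ∪ succ.image v ∪ cross.image u := by
    intro x hx
    rw [mem_neighborFinset] at hx
    rcases hcov x with ⟨i', rfl⟩ | ⟨j, rfl⟩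
    · rcases (hv i i').mp hx with h | h
      · exact mem_union_left _ (mem_union_right _ (mem_image_of_mem v (by simpa [succ] using h)))
      · exact mem_union_left _ (mem_union_left _ (mem_image_of_mem v (by simpa [pred] using h)))
    · exact mem_union_right _ (mem_image_of_mem u (by simpa [cross] using hx))
  have hpred : #pred ≤ 1 := card_le_one.mpr fun a ha b hb ↦ by
    simp only [pred, mem_filter] at ha hb; omega
  have hsucc : #succ ≤ 1 := card_le_one.mpr fun a ha b hb ↦ by
    simp only [succ, mem_filter] at ha hb; omega
  have hcross : #cross ≤ 1 := card_le_one.mpr fun a ha b hb ↦ by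
    simp only [cross, mem_filter] at ha hb; exact huniq a b ha.2 hb.2
  have hdeg : G.degree (v i) ≤ #pred + #succ + #cross := by
    rw [← card_neighborFinset_eq_degree]
    refine (card_le_card hsub).trans ((card_union_le _ _).trans (add_le_add ?_ card_image_le))
    exact (card_union_le _ _).trans (add_le_add card_image_le card_image_le)
  refine ⟨by omega, fun h3 ↦ ?_⟩
  obtain ⟨j, hj⟩ := card_pos.mp (show 0 < #cross by omega)
  exact ⟨j, (mem_filter.mp hj).2⟩

end TwoFamilies

theorem card_filter_degree_eq_three_le_two [Fintype V] [DecidableEq V] [DecidableRel G.Adj]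
    {p q : V} (h : ∀ x, G.degree x = 3 → x = p ∨ x = q) :
    #{x | G.degree x = 3} ≤ 2 :=
  (card_le_card (t := {p, q}) fun x hx ↦ by
    rcases h x (mem_filter.mp hx).2 with rfl | rfl <;> simp).trans card_le_two

theorem adj_of_degree_eq_three [Fintype V] [DecidableRel G.Adj] {p q : V} (hpq : G.Adj p q)
    (h : ∀ x, G.degree x = 3 → x = p ∨ x = q) {x y : V} (hx : G.degree x = 3)
    (hy : G.degree y = 3) (hxy : x ≠ y) : G.Adj x y := by
  rcases h x hx with rfl | rfl <;> rcases h y hy with rfl | rfl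
  exacts [absurd rfl hxy, hpq, hpq.symm, absurd rfl hxy]

theorem exists_adj_forall_degree_eq_three_or_eq_bot [Fintype V] [DecidableRel G.Adj]
    (h2 : #{x | G.degree x = 3} ≤ 2)
    (h3 : ∀ x y, G.degree x = 3 → G.degree y = 3 → x ≠ y → G.Adj x y) :
    (∃ p q, G.Adj p q ∧ ∀ x, G.degree x = 3 → x = p ∨ x = q) ∨ G = ⊥ := by
  by_cases hx : ∃ x, G.degree x = 3
  · obtain ⟨x, hx⟩ := hx
    left
    by_cases hy : ∃ y, G.degree y = 3 ∧ y ≠ x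
    · obtain ⟨y, hy, hyx⟩ := hy
      refine ⟨x, y, h3 x y hx hy hyx.symm, fun z hz ↦ ?_⟩
      by_contra! hne
      exact h2.not_gt <| two_lt_card_iff.mpr
        ⟨x, y, z, by simp [hx], by simp [hy], by simp [hz], hyx.symm, hne.1.symm, hne.2.symm⟩
    · push Not at hy
      obtain ⟨q, hq⟩ := (G.degree_pos_iff_exists_adj x).mp (by omega)
      exact ⟨x, q, hq, fun z hz ↦ .inl (hy z hz)⟩
  · push Not at hx
    by_cases he : ∃ p q, G.Adj p q
    · obtain ⟨p, q, hpq⟩ := he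
      exact .inl ⟨p, q, hpq, fun x h ↦ absurd h (hx x)⟩
    · push Not at he
      exact .inr (by ext x y; simpa using he x y)

end SimpleGraph

open SimpleGraph

section

variable {V : Type*} {G : SimpleGraph V}

theorem isTwoParallelPaths_of_subsingleton [Fintype V] [Subsingleton V] :
    IsTwoParallelPaths G := by
  have hcard : Fintype.card V ≤ 1 := Fintype.card_le_one_iff_subsingleton.mpr ‹_›
  set e := (Fintype.equivFin V).symm
  refine ⟨Fintype.card V, 0, e, Fin.elim0, e.injective, fun j ↦ j.elim0, fun _ j ↦ j.elim0,
    fun x ↦ .inl (e.surjective x), fun i i' ↦ ?_, fun j ↦ j.elim0, fun _ j ↦ j.elim0⟩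
  rw [Subsingleton.elim (e i') (e i)]
  simp only [G.irrefl, false_iff]
  omega

theorem isTwoParallelPaths_of_isPath (hG : G.IsAcyclic) {a b c d p q : V} {W₁ : G.Walk a b}
    {W₂ : G.Walk c d} (h₁ : W₁.IsPath) (h₂ : W₂.IsPath)
    (hdisj : ∀ x ∈ W₁.support, x ∉ W₂.support) (hcov : ∀ x, x ∈ W₁.support ∨ x ∈ W₂.support)
    (hcross : ∀ x ∈ W₁.support, ∀ y ∈ W₂.support, G.Adj x y → x = p ∧ y = q) :
    IsTwoParallelPaths G := by
  have hinj₁ : Function.Injective fun i : Fin (W₁.length + 1) ↦ W₁.getVert i := fun i i' h ↦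
    Fin.ext (h₁.getVert_injOn i.is_le i'.is_le h)
  have hinj₂ : Function.Injective fun j : Fin (W₂.length + 1) ↦ W₂.getVert j := fun j j' h ↦
    Fin.ext (h₂.getVert_injOn j.is_le j'.is_le h)
  refine ⟨W₁.length + 1, W₂.length + 1, fun i ↦ W₁.getVert i, fun j ↦ W₂.getVert j, hinj₁, hinj₂,
    fun i j h ↦ ?_, fun x ↦ ?_, fun i i' ↦ hG.adj_getVert_iff h₁ i.is_le i'.is_le,
    fun j j' ↦ hG.adj_getVert_iff h₂ j.is_le j'.is_le, fun i j i' j' h h' ↦ ?_⟩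
  · simp only at h
    exact hdisj _ (W₁.getVert_mem_support i) (h ▸ W₂.getVert_mem_support j)
  · rcases hcov x with hx | hx <;>
      obtain ⟨n, rfl, hn⟩ := Walk.mem_support_iff_exists_getVert.mp hx
    exacts [.inl ⟨⟨n, by omega⟩, rfl⟩, .inr ⟨⟨n, by omega⟩, rfl⟩]
  obtain ⟨hi, hj⟩ := hcross _ (W₁.getVert_mem_support i) _ (W₂.getVert_mem_support j) h
  obtain ⟨hi', hj'⟩ := hcross _ (W₁.getVert_mem_support i') _ (W₂.getVert_mem_support j') h'
  obtain rfl : i = i' := hinj₁ (hi.trans hi'.symm)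
  obtain rfl : j = j' := hinj₂ (hj.trans hj'.symm)
  simp

theorem SimpleGraph.IsTree.isTwoParallelPaths_of_adj [Fintype V] [DecidableEq V]
    [DecidableRel G.Adj] (hG : G.IsTree) {p q : V} (hpq : G.Adj p q) (hdeg : ∀ x, G.degree x ≤ 3)
    (h3 : ∀ x, G.degree x = 3 → x = p ∨ x = q) : IsTwoParallelPaths G := by
  set G' := G.deleteEdges {s(p, q)}
  have hle : G' ≤ G := deleteEdges_le _
  have hdeg' : ∀ x, G'.degree x ≤ 2 := fun x ↦ by
    by_cases hx : x ∈ s(p, q)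
    · have : G'.degree x < G.degree x := degree_deleteEdges_lt_of_mem hpq hx
      have := hdeg x
      omega
    · have : G.degree x ≠ 3 := fun h ↦ hx (by rcases h3 x h with rfl | rfl <;> simp)
      have := degree_le_of_le (v := x) hle
      have := hdeg x
      omega
  have hbridge : ¬ G'.Reachable p q := isAcyclic_iff_forall_adj_isBridge.mp hG.isAcyclic hpq
  obtain ⟨a, b, W₁, hW₁, hsupp₁⟩ := exists_isPath_support_eq_reachable hdeg' p
  obtain ⟨c, d, W₂, hW₂, hsupp₂⟩ := exists_isPath_support_eq_reachable hdeg' q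
  refine isTwoParallelPaths_of_isPath hG.isAcyclic (p := p) (q := q) (hW₁.mapLe hle)
    (hW₂.mapLe hle) ?_ ?_ ?_ <;> simp only [Walk.support_mapLe_eq_support, hsupp₁, hsupp₂]
  · exact fun x hp hq ↦ hbridge (hp.trans hq.symm)
  · exact fun x ↦ (hG.connected.preconnected p x).deleteEdges_or
  · intro x hx y hy hxy
    by_cases he : s(x, y) = s(p, q)
    · rcases Sym2.eq_iff.mp he with h | ⟨rfl, -⟩
      exacts [h, absurd hx hbridge]
    · exact absurd (hx.trans ((deleteEdges_adj.mpr ⟨hxy, he⟩).reachable.trans hy.symm)) hbridge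

theorem IsTwoParallelPaths.degree_le_three [Fintype V] [DecidableEq V] [DecidableRel G.Adj]
    (hG : G.IsAcyclic) (h : IsTwoParallelPaths G) :
    (∀ x, G.degree x ≤ 3) ∧
      ((∀ x, G.degree x ≠ 3) ∨ ∃ p q, G.Adj p q ∧ ∀ x, G.degree x = 3 → x = p ∨ x = q) := by
  obtain ⟨k, l, v, u, hv, hu, hvu, hcov, hadjv, hadju, -⟩ := h
  have hcross : ∀ {i i' j j'}, G.Adj (v i) (u j) → G.Adj (v i') (u j') → i = i' ∧ j = j' :=
    hG.eq_and_eq_of_adj_of_adj hv hu hvu (fun i i' h ↦ (hadjv i i').mpr (.inl h))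
      (fun j j' h ↦ (hadju j j').mpr (.inl h))
  have hdv (i : Fin k) := degree_le_three_of_cover hcov hadjv (i := i)
    fun j j' h h' ↦ (hcross h h').2
  have hdu (j : Fin l) := degree_le_three_of_cover (fun x ↦ (hcov x).symm) hadju (i := j)
    fun i i' h h' ↦ (hcross h.symm h'.symm).1
  refine ⟨fun x ↦ ?_, ?_⟩
  · rcases hcov x with ⟨i, rfl⟩ | ⟨j, rfl⟩
    exacts [(hdv i).1, (hdu j).1]
  by_cases hc : ∃ i j, G.Adj (v i) (u j)
  · obtain ⟨i₀, j₀, h₀⟩ := hc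
    refine .inr ⟨v i₀, u j₀, h₀, fun x hx ↦ ?_⟩
    rcases hcov x with ⟨i, rfl⟩ | ⟨j, rfl⟩
    · obtain ⟨j, hj⟩ := (hdv i).2 hx
      exact .inl (congrArg v (hcross hj h₀).1)
    · obtain ⟨i, hi⟩ := (hdu j).2 hx
      exact .inr (congrArg u (hcross hi.symm h₀).2)
  · push Not at hc
    refine .inl fun x hx ↦ ?_
    rcases hcov x with ⟨i, rfl⟩ | ⟨j, rfl⟩
    · obtain ⟨j, hj⟩ := (hdv i).2 hx
      exact hc i j hj
    · obtain ⟨i, hi⟩ := (hdu j).2 hx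
      exact hc i j hi.symm

end

/-- A tree T is a graph of two parallel paths iff no vertex has degree ≥ 4,
there are at most two vertices of degree 3, and any two degree-3 vertices are
adjacent. -/
theorem stmt_4 {V : Type*} [Fintype V] [DecidableEq V]
    (T : SimpleGraph V) [DecidableRel T.Adj] (hT : T.IsTree) :
    IsTwoParallelPaths T ↔
      ((∀ x, T.degree x ≤ 3) ∧
       (Finset.univ.filter fun x => T.degree x = 3).card ≤ 2 ∧
       (∀ x y, T.degree x = 3 → T.degree y = 3 → x ≠ y → T.Adj x y)) := by
  constructor
  · intro h
    obtain ⟨hdeg, hcases⟩ := h.degree_le_three hT.isAcyclic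
    rcases hcases with hno | ⟨p, q, hpq, h3⟩
    · exact ⟨hdeg, by simp [hno], fun x _ hx ↦ absurd hx (hno x)⟩
    · exact ⟨hdeg, card_filter_degree_eq_three_le_two h3,
        fun _ _ hx hy hxy ↦ adj_of_degree_eq_three hpq h3 hx hy hxy⟩
  · rintro ⟨hdeg, hcard, hadj⟩
    rcases exists_adj_forall_degree_eq_three_or_eq_bot hcard hadj with ⟨p, q, hpq, h3⟩ | hbot
    · exact hT.isTwoParallelPaths_of_adj hpq hdeg h3
    · have := (connected_bot_iff.mp (hbot ▸ hT.connected)).1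
      exact isTwoParallelPaths_of_subsingleton
end

section
/- If a tree T contains a vertex of degree at least 4, then the vertex set of T cannot be partitioned into two sets each inducing a path. -/
/-- The subset `S` induces a path in `G` (possibly empty or a single vertex):
there is an enumeration of `S` so that the induced subgraph on `S` is exactly a
path in that order. -/
def InducesPath {V : Type*} (G : SimpleGraph V) (S : Set V) : Prop :=
  ∃ (k : ℕ) (v : Fin k → V), Function.Injective v ∧ Set.range v = S ∧
    ∀ i i', G.Adj (v i) (v i') ↔ ((i : ℕ) + 1 = (i' : ℕ) ∨ (i' : ℕ) + 1 = (i : ℕ))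

/-!
Let `x` have degree at least 4 and, say, `x ∈ S₁`. Inside the path `S₁` the vertex `x` has at
most two neighbours, so it has two distinct neighbours `a, b ∈ S₂`. The path `S₂` is connected
and avoids `x`, so it joins `a` to `b` without passing through `x`; together with `a - x - b`
this gives two different paths between `a` and `b`, impossible in a tree.
-/

namespace SimpleGraph

variable {V : Type*} {G : SimpleGraph V}

lemma IsAcyclic.mem_support_of_adj_of_adj (hG : G.IsAcyclic) {a x b : V} (hax : G.Adj a x)
    (hxb : G.Adj x b) (hab : a ≠ b) (p : G.Walk a b) : x ∈ p.support := by
  classical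
  let q : G.Path a b := ⟨.cons hax (.cons hxb .nil), by simp [hax.ne, hxb.ne, hab]⟩
  have hpq : p.bypass = q.1 :=
    congrArg Subtype.val ((hG.subsingleton_path a b).elim ⟨_, p.bypass_isPath⟩ q)
  exact p.support_bypass_subset_support (by simp [hpq, q])

lemma IsAcyclic.subsingleton_neighborSet_inter (hG : G.IsAcyclic) {S : Set V}
    (hS : (G.induce S).Preconnected) {x : V} (hx : x ∉ S) :
    (G.neighborSet x ∩ S).Subsingleton := by
  rintro a ⟨hxa, haS⟩ b ⟨hxb, hbS⟩
  by_contra hab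
  obtain ⟨p⟩ := hS ⟨a, haS⟩ ⟨b, hbS⟩
  have hxp : x ∈ (p.map (Embedding.induce S).toHom).support :=
    hG.mem_support_of_adj_of_adj hxa.symm hxb hab _
  rw [Walk.support_map, List.mem_map] at hxp
  obtain ⟨y, -, rfl⟩ := hxp
  exact hx y.2

end SimpleGraph

namespace InducesPath

open SimpleGraph

variable {V : Type*} {G : SimpleGraph V} {S : Set V}

lemma preconnected_induce (h : InducesPath G S) : (G.induce S).Preconnected := by
  obtain ⟨k, v, -, rfl, hadj⟩ := h
  have hreach : ∀ (n : ℕ) (hn : n < k),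
      (G.induce (Set.range v)).Reachable ⟨v ⟨0, by omega⟩, by simp⟩ ⟨v ⟨n, hn⟩, by simp⟩ := by
    intro n
    induction n with
    | zero => exact fun _ => .rfl
    | succ n ih =>
      intro hn
      refine (ih (by omega)).trans (Adj.reachable ?_)
      rw [comap_adj, Function.Embedding.subtype_apply, Function.Embedding.subtype_apply, hadj]
      exact Or.inl rfl
  rintro ⟨_, i, rfl⟩ ⟨_, j, rfl⟩
  exact (hreach i i.2).symm.trans (hreach j j.2)

lemma ncard_neighborSet_inter_le_two (h : InducesPath G S) {x : V} (hx : x ∈ S) :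
    (G.neighborSet x ∩ S).ncard ≤ 2 := by
  obtain ⟨k, v, -, rfl, hadj⟩ := h
  obtain ⟨i, rfl⟩ := hx
  have hsub : G.neighborSet (v i) ∩ Set.range v ⊆
      v '' {m | (m : ℕ) + 1 = i} ∪ v '' {m | (i : ℕ) + 1 = m} := by
    rintro _ ⟨hm, m, rfl⟩
    rcases (hadj i m).1 hm with h | h
    · exact Or.inr ⟨m, h, rfl⟩
    · exact Or.inl ⟨m, h, rfl⟩
  have hsingle : ∀ s : Set (Fin k), s.Subsingleton → (v '' s).ncard ≤ 1 := fun s hs =>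
    Set.ncard_le_one_iff_subsingleton.2 (hs.image v)
  calc _ ≤ _ := Set.ncard_le_ncard hsub
    _ ≤ _ := Set.ncard_union_le _ _
    _ ≤ 1 + 1 := add_le_add
        (hsingle _ fun m (hm : (m : ℕ) + 1 = i) m' (hm' : (m' : ℕ) + 1 = i) => Fin.ext (by omega))
        (hsingle _ fun m (hm : (i : ℕ) + 1 = m) m' (hm' : (i : ℕ) + 1 = m') => Fin.ext (by omega))

end InducesPath

theorem stmt_5_general {V : Type*} [Fintype V]
    (T : SimpleGraph V) [DecidableRel T.Adj] (hT : T.IsTree)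
    (hdeg : ∃ x, 4 ≤ T.degree x) :
    ¬ ∃ S₁ S₂ : Set V, Disjoint S₁ S₂ ∧ S₁ ∪ S₂ = Set.univ ∧
        InducesPath T S₁ ∧ InducesPath T S₂ := by
  rintro ⟨S₁, S₂, hdisj, huniv, h₁, h₂⟩
  obtain ⟨x, hx⟩ := hdeg
  wlog hx₁ : x ∈ S₁ generalizing S₁ S₂
  · refine this S₂ S₁ hdisj.symm (by rwa [Set.union_comm]) h₂ h₁ ?_
    simpa [hx₁] using huniv.symm.subset (Set.mem_univ x)
  have hsplit : T.neighborSet x = T.neighborSet x ∩ S₁ ∪ T.neighborSet x ∩ S₂ := by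
    rw [← Set.inter_union_distrib_left, huniv, Set.inter_univ]
  have hle : (T.neighborSet x).ncard ≤ 2 + 1 := by
    rw [hsplit]
    refine (Set.ncard_union_le _ _).trans (add_le_add (h₁.ncard_neighborSet_inter_le_two hx₁) ?_)
    exact Set.ncard_le_one_iff_subsingleton.2 <| hT.isAcyclic.subsingleton_neighborSet_inter
      h₂.preconnected_induce (hdisj.notMem_of_mem_left hx₁)
  rw [← Nat.card_coe_set_eq, Nat.card_eq_fintype_card, SimpleGraph.card_neighborSet_eq_degree]
    at hle
  omega

/-- If a tree T contains a vertex of degree at least 4, then V(T) cannot be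
partitioned into two sets each inducing a path. -/
theorem stmt_5 {V : Type*} [Fintype V] [DecidableEq V]
    (T : SimpleGraph V) [DecidableRel T.Adj] (hT : T.IsTree)
    (hdeg : ∃ x, 4 ≤ T.degree x) :
    ¬ ∃ S₁ S₂ : Set V, Disjoint S₁ S₂ ∧ S₁ ∪ S₂ = Set.univ ∧
        InducesPath T S₁ ∧ InducesPath T S₂ :=
  stmt_5_general T hT hdeg
end

section
/- If a tree T has three or more vertices of degree 3, then the vertex set of T cannot be partitioned into two sets each inducing a path. -/
open Finset

namespace SimpleGraph

variable {V W : Type*} {G : SimpleGraph V} [DecidableRel G.Adj]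

section Interedges

lemma interedges_union_left [DecidableEq V] (s t u : Finset V) :
    G.interedges (s ∪ t) u = G.interedges s u ∪ G.interedges t u := by
  ext
  simp only [mem_interedges_iff, mem_union]
  tauto

lemma interedges_union_right [DecidableEq V] (s t u : Finset V) :
    G.interedges s (t ∪ u) = G.interedges s t ∪ G.interedges s u := by
  ext
  simp only [mem_interedges_iff, mem_union]
  tauto

lemma card_interedges_comm (s t : Finset V) :
    #(G.interedges s t) = #(G.interedges t s) :=
  have := G.symm
  Rel.card_interedges_comm s t

lemma card_le_two_mul_card_interedges_compl [DecidableEq V] [Fintype V] {s t : Finset V}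
    (ht : ∀ x ∈ t, ∃ y, G.Adj x y ∧ (x ∈ s ↔ y ∉ s)) :
    #t ≤ 2 * #(G.interedges s sᶜ) := by
  have hsub : t ⊆ (G.interedges s sᶜ ∪ G.interedges sᶜ s).image Prod.fst := by
    intro x hx
    obtain ⟨y, hxy, hside⟩ := ht x hx
    refine mem_image.2 ⟨(x, y), ?_, rfl⟩
    by_cases hxs : x ∈ s
    · exact mem_union_left _ ((mk_mem_interedges_iff G).2 ⟨hxs, mem_compl.2 (hside.1 hxs), hxy⟩)
    · exact mem_union_right _ ((mk_mem_interedges_iff G).2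
        ⟨mem_compl.2 hxs, not_not.1 (mt hside.2 hxs), hxy⟩)
  calc #t ≤ #((G.interedges s sᶜ ∪ G.interedges sᶜ s).image Prod.fst) := card_le_card hsub
    _ ≤ #(G.interedges s sᶜ) + #(G.interedges sᶜ s) := card_image_le.trans (card_union_le _ _)
    _ = 2 * #(G.interedges s sᶜ) := by rw [card_interedges_comm sᶜ s]; ring

variable [Fintype V]

lemma card_interedges_univ_univ : #(G.interedges univ univ) = 2 * #G.edgeFinset := by
  rw [two_mul_card_edgeFinset, interedges_def, univ_product_univ]

lemma card_interedges_univ_univ_eq [DecidableEq V] (s : Finset V) :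
    #(G.interedges univ univ) =
      #(G.interedges s s) + #(G.interedges sᶜ sᶜ) + 2 * #(G.interedges s sᶜ) := by
  have hs : Disjoint s sᶜ := disjoint_compl_right
  rw [← union_compl s, interedges_union_left, card_union_of_disjoint
    (interedges_disjoint_left G hs _), interedges_union_right, interedges_union_right,
    card_union_of_disjoint (interedges_disjoint_right G _ hs),
    card_union_of_disjoint (interedges_disjoint_right G _ hs), card_interedges_comm sᶜ s]
  ring

lemma IsTree.card_interedges_compl_le_one [DecidableEq V] (hG : G.IsTree) (s : Finset V)
    (hs : 2 * (#s - 1) ≤ #(G.interedges s s)) (hsc : 2 * (#sᶜ - 1) ≤ #(G.interedges sᶜ sᶜ)) :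
    #(G.interedges s sᶜ) ≤ 1 := by
  have hcard := G.card_interedges_univ_univ_eq s
  have hedges := hG.card_edgeFinset
  rw [card_interedges_univ_univ] at hcard
  rw [card_compl] at hsc
  have := card_le_univ s
  omega

end Interedges

section Embedding

variable [Fintype W] {H : SimpleGraph W} [DecidableRel H.Adj]

lemma Embedding.card_interedges_map_univ (f : H ↪g G) :
    #(G.interedges (univ.map f.toEmbedding) (univ.map f.toEmbedding)) =
      #(H.interedges univ univ) := by
  rw [← card_map (f.toEmbedding.prodMap f.toEmbedding)]
  congr 1
  ext ⟨x, y⟩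
  simp only [mem_interedges_iff, mem_map, mem_univ, true_and, Prod.exists,
    Function.Embedding.coe_prodMap, Prod.map, Prod.mk.injEq, RelEmbedding.coe_toEmbedding]
  constructor
  · rintro ⟨⟨i, rfl⟩, ⟨j, rfl⟩, hij⟩
    exact ⟨i, j, f.map_adj_iff.1 hij, rfl, rfl⟩
  · rintro ⟨i, j, hij, rfl, rfl⟩
    exact ⟨⟨i, rfl⟩, ⟨j, rfl⟩, f.map_adj_iff.2 hij⟩

lemma Embedding.exists_adj_notMem_range [Fintype V] (f : H ↪g G) {v : W}
    (h : H.degree v < G.degree (f v)) : ∃ w, G.Adj (f v) w ∧ w ∉ Set.range f := by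
  by_contra! hrange
  have hsub : G.neighborFinset (f v) ⊆ (H.neighborFinset v).map f.toEmbedding := by
    intro w hw
    rw [mem_neighborFinset] at hw
    obtain ⟨u, rfl⟩ := hrange w hw
    exact mem_map_of_mem _ ((mem_neighborFinset _ _ _).2 (f.map_adj_iff.1 hw))
  have := card_le_card hsub
  rw [card_map] at this
  exact h.not_ge this

end Embedding

instance (n : ℕ) : DecidableRel (pathGraph n).Adj :=
  fun _ _ ↦ decidable_of_iff' _ pathGraph_adj

lemma degree_pathGraph_le_two {n : ℕ} (i : Fin n) : (pathGraph n).degree i ≤ 2 :=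
  calc (pathGraph n).degree i ≤ #({(i : ℕ) + 1, (i : ℕ) - 1} : Finset ℕ) := by
        refine card_le_card_of_injOn Fin.val (fun j hj ↦ ?_) Fin.val_injective.injOn
        rw [coe_neighborFinset, mem_neighborSet, pathGraph_adj] at hj
        simp only [coe_insert, coe_singleton, Set.mem_insert_iff, Set.mem_singleton_iff]
        omega
    _ ≤ 2 := card_le_two

lemma two_mul_pred_le_card_interedges_pathGraph (n : ℕ) :
    2 * (n - 1) ≤ #((pathGraph n).interedges univ univ) := by
  rw [card_interedges_univ_univ]
  cases n with
  | zero => simp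
  | succ m =>
    have := (pathGraph_connected m).card_vert_le_card_edgeSet_add_one
    rw [Nat.card_eq_fintype_card, Fintype.card_fin, Nat.card_eq_fintype_card,
      ← edgeFinset_card] at this
    omega

end SimpleGraph

open SimpleGraph

namespace InducesPath

variable {V : Type*} {G : SimpleGraph V}

lemma exists_embedding {S : Set V} (h : InducesPath G S) :
    ∃ (k : ℕ) (f : pathGraph k ↪g G), Set.range f = S := by
  obtain ⟨k, v, hinj, hrange, hadj⟩ := h
  exact ⟨k, ⟨⟨v, hinj⟩, by simp [hadj, pathGraph_adj]⟩, hrange⟩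

variable [DecidableRel G.Adj]

lemma two_mul_pred_le_card_interedges [DecidableEq V] {s : Finset V} (h : InducesPath G s) :
    2 * (#s - 1) ≤ #(G.interedges s s) := by
  obtain ⟨k, f, hf⟩ := h.exists_embedding
  obtain rfl : univ.map f.toEmbedding = s := coe_injective (by simpa using hf)
  rw [f.card_interedges_map_univ, card_map, card_univ, Fintype.card_fin]
  exact two_mul_pred_le_card_interedges_pathGraph k

variable [Fintype V]

lemma exists_adj_notMem {S : Set V} (h : InducesPath G S) {v : V} (hv : v ∈ S)
    (hdeg : 2 < G.degree v) : ∃ w, G.Adj v w ∧ w ∉ S := by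
  obtain ⟨k, f, rfl⟩ := h.exists_embedding
  obtain ⟨i, rfl⟩ := hv
  exact f.exists_adj_notMem_range ((degree_pathGraph_le_two i).trans_lt hdeg)

lemma exists_adj_across [DecidableEq V] {s : Finset V} (hs : InducesPath G s)
    (hsc : InducesPath G ↑sᶜ) {v : V} (hdeg : 2 < G.degree v) :
    ∃ w, G.Adj v w ∧ (v ∈ s ↔ w ∉ s) := by
  by_cases hv : v ∈ s
  · obtain ⟨w, hvw, hw⟩ := hs.exists_adj_notMem hv hdeg
    exact ⟨w, hvw, iff_of_true hv hw⟩
  · obtain ⟨w, hvw, hw⟩ := hsc.exists_adj_notMem (by simpa using hv) hdeg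
    exact ⟨w, hvw, iff_of_false hv (by simpa using hw)⟩

end InducesPath

/-- If a tree T has three or more vertices of degree 3, then V(T) cannot be
partitioned into two sets each inducing a path. -/
theorem stmt_6 {V : Type*} [Fintype V] [DecidableEq V]
    (T : SimpleGraph V) [DecidableRel T.Adj] (hT : T.IsTree)
    (a b c : V) (hab : a ≠ b) (hac : a ≠ c) (hbc : b ≠ c)
    (ha : T.degree a = 3) (hb : T.degree b = 3) (hc : T.degree c = 3) :
    ¬ ∃ S₁ S₂ : Set V, Disjoint S₁ S₂ ∧ S₁ ∪ S₂ = Set.univ ∧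
        InducesPath T S₁ ∧ InducesPath T S₂ := by
  classical
  rintro ⟨S₁, S₂, hdisj, hunion, hp₁, hp₂⟩
  obtain rfl : S₂ = S₁ᶜ := (IsCompl.of_eq hdisj.eq_bot hunion).compl_eq.symm
  set s := S₁.toFinset
  have hs : InducesPath T ↑s := by simpa [s] using hp₁
  have hsc : InducesPath T ↑sᶜ := by simpa [s] using hp₂
  have hcross : #(T.interedges s sᶜ) ≤ 1 := hT.card_interedges_compl_le_one s
    hs.two_mul_pred_le_card_interedges hsc.two_mul_pred_le_card_interedges
  have habc : #{a, b, c} ≤ 2 * #(T.interedges s sᶜ) := by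
    refine card_le_two_mul_card_interedges_compl fun x hx ↦ hs.exists_adj_across hsc ?_
    simp only [mem_insert, mem_singleton] at hx
    rcases hx with rfl | rfl | rfl <;> omega
  rw [card_insert_of_notMem (by simp [hab, hac]), card_pair hbc] at habc
  omega
end

section
/- Let G be a connected outer-planar graph that is a graph of two parallel paths realized by induced paths P and Q partitioning V(G), and let R be the set of vertices of G lying on some cycle of G (the core). If R is nonempty, then the induced subgraph G[R] is 2-connected (has no cut vertex). -/
/-- `H` is a minor of `G`: there is an assignment of disjoint connected branch
sets of `G` to the vertices of `H` such that every edge of `H` is realized by an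
edge of `G` between the corresponding branch sets. -/
def HasMinor {V W : Type*} (G : SimpleGraph V) (H : SimpleGraph W) : Prop :=
  ∃ f : V → Option W,
    (∀ w : W, ∃ v, f v = some w) ∧
    (∀ w : W, (G.induce {v | f v = some w}).Connected) ∧
    (∀ w₁ w₂ : W, H.Adj w₁ w₂ → ∃ v₁ v₂, f v₁ = some w₁ ∧ f v₂ = some w₂ ∧ G.Adj v₁ v₂)

/-- Outer-planar: no K₄ minor and no K_{2,3} minor. -/
def IsOuterPlanar {V : Type*} (G : SimpleGraph V) : Prop :=
  ¬ HasMinor G (⊤ : SimpleGraph (Fin 4)) ∧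
  ¬ HasMinor G (completeBipartiteGraph (Fin 2) (Fin 3))

/-- The core of `G`: the set of vertices lying on some cycle. -/
def core {V : Type*} (G : SimpleGraph V) : Set V :=
  {x | ∃ w : G.Walk x x, w.IsCycle}

/-!
Number the two induced paths as `P i` and `Q j`. A core vertex has two neighbours in the core,
namely its neighbours on a cycle through it. At a core vertex of `P` of least or greatest index at
most one of them lies on `P`, so it has a core neighbour on `Q`, and symmetrically; in particular
the core meets both paths. Let `A ≤ B` and `C ≤ D` be the extreme indices of core vertices on `P`
and on `Q`. The non-crossing condition turns the chords at these four vertices into the edges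
`P A – Q C` and `P B – Q D`, so the cycle `P A, …, P B, Q D, …, Q C` passes through the whole core,
and a graph spanned by a cycle is 2-connected.
-/

open SimpleGraph

namespace SimpleGraph

variable {V : Type*} {G : SimpleGraph V}

lemma Connected.induce_induce_ne {s t : Set V} {x : s}
    (ht : ∀ v, v ∈ t ↔ v ∈ s ∧ v ≠ x) (h : (G.induce t).Connected) :
    ((G.induce s).induce {y | y ≠ x}).Connected := by
  refine h.map ⟨fun v : t => ⟨⟨v.1, ((ht v).1 v.2).1⟩,
    fun hv => ((ht v).1 v.2).2 (congrArg Subtype.val hv)⟩, id⟩ ?_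
  rintro ⟨⟨v, hvs⟩, hvx⟩
  exact ⟨⟨v, (ht v).2 ⟨hvs, fun h => hvx (Subtype.ext h)⟩⟩, rfl⟩

lemma pathGraph.exists_isPath_support_iff {n : ℕ} {i j : Fin n} (hij : i ≤ j) :
    ∃ p : (pathGraph n).Walk i j, p.IsPath ∧ ∀ m, m ∈ p.support ↔ i ≤ m ∧ m ≤ j := by
  obtain ⟨d, hd⟩ := Nat.exists_eq_add_of_le (Fin.le_def.mp hij)
  induction d generalizing j with
  | zero =>
    obtain rfl : j = i := Fin.ext hd
    exact ⟨.nil, .nil, fun m => by simp [le_antisymm_iff, and_comm]⟩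
  | succ d ih =>
    let j' : Fin n := ⟨i + d, by omega⟩
    have hj' : (j' : ℕ) = i + d := rfl
    obtain ⟨p, hp, hsupp⟩ := ih (j := j') (Fin.le_def.mpr (by omega)) hj'
    have hadj : (pathGraph n).Adj j' j := pathGraph_adj.mpr (.inl (by omega))
    refine ⟨p.concat hadj, hp.concat (fun hj => ?_) hadj, fun m => ?_⟩
    · have := Fin.le_def.mp ((hsupp j).mp hj).2
      omega
    · rw [Walk.support_concat, List.mem_append, List.mem_singleton, hsupp, Fin.le_def,
        Fin.le_def, Fin.le_def, Fin.ext_iff]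
      omega

namespace Walk

variable {u v x : V}

lemma mem_tail_support_iff_of_not_nil {c : G.Walk u u} (hc : ¬ c.Nil) :
    v ∈ c.support.tail ↔ v ∈ c.support := by
  rw [mem_support_iff, or_iff_right_of_imp]
  rintro rfl
  exact end_mem_tail_support hc

lemma IsCycle.three_le_ncard_support {c : G.Walk u u} (hc : c.IsCycle) :
    3 ≤ {v | v ∈ c.support}.ncard := by
  classical
  have hset : {v | v ∈ c.support} = (c.support.tail.toFinset : Set V) := by
    ext v
    simp [mem_tail_support_iff_of_not_nil hc.not_nil]
  rw [hset, Set.ncard_coe_finset, List.toFinset_card_of_nodup hc.support_nodup,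
    List.length_tail, length_support]
  have := hc.three_le_length
  omega

lemma IsCycle.exists_walk_support_iff_mem_and_ne {c : G.Walk u u} (hc : c.IsCycle)
    (hx : x ∈ c.support) :
    ∃ (y z : V) (q : G.Walk y z), ∀ v, v ∈ q.support ↔ v ∈ c.support ∧ v ≠ x := by
  classical
  set c' := c.rotate x hx
  have hc' : c'.IsCycle := hc.rotate hx
  have hnil : ¬ c'.dropLast.Nil := by
    rw [not_nil_iff_lt_length, length_dropLast]
    have := hc'.three_le_length
    omega
  refine ⟨_, _, c'.dropLast.tail, fun v => ?_⟩
  have hnd := hc'.nodup_dropLast_support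
  rw [← support_dropLast hc'.not_nil, ← cons_support_tail hnil, List.nodup_cons] at hnd
  rw [← mem_support_rotate_iff c x hx, ← mem_tail_support_iff_of_not_nil hc'.not_nil,
    ← support_tail_of_not_nil _ hc'.not_nil, (support_tail_perm_support_dropLast c').mem_iff,
    ← cons_support_tail hnil, List.mem_cons]
  grind

lemma IsCycle.twoConnected_induce_support {c : G.Walk u u}
    (hc : c.IsCycle) :
    3 ≤ {v | v ∈ c.support}.ncard ∧ (G.induce {v | v ∈ c.support}).Connected ∧
      ∀ x : {v | v ∈ c.support},
        ((G.induce {v | v ∈ c.support}).induce {y | y ≠ x}).Connected := by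
  refine ⟨hc.three_le_ncard_support, c.connected_induce_support, fun x => ?_⟩
  obtain ⟨y, z, q, hq⟩ := hc.exists_walk_support_iff_mem_and_ne x.2
  exact q.connected_induce_support.induce_induce_ne hq

end Walk

end SimpleGraph

section

variable {V : Type*} {G : SimpleGraph V}

lemma mem_core_of_mem_support {u v : V} {c : G.Walk u u} (hc : c.IsCycle) (hv : v ∈ c.support) :
    v ∈ core G := by
  classical
  exact ⟨c.rotate v hv, hc.rotate hv⟩

lemma exists_adj_adj_of_mem_core {x : V} (hx : x ∈ core G) :
    ∃ y z, y ≠ z ∧ G.Adj x y ∧ G.Adj x z ∧ y ∈ core G ∧ z ∈ core G := by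
  obtain ⟨c, hc⟩ := hx
  exact ⟨c.snd, c.penultimate, hc.snd_ne_penultimate, c.adj_snd hc.not_nil,
    (c.adj_penultimate hc.not_nil).symm, mem_core_of_mem_support hc (c.getVert_mem_support _),
    mem_core_of_mem_support hc (c.getVert_mem_support _)⟩

section TwoPaths

variable {k l : ℕ} (P : pathGraph k ↪g G) (Q : pathGraph l ↪g G)

lemma exists_isCycle_through_segments (hdisj : ∀ i j, P i ≠ Q j) {A B : Fin k} {C D : Fin l}
    (hAB : A ≤ B) (hCD : C ≤ D) (hAC : G.Adj (P A) (Q C)) (hBD : G.Adj (P B) (Q D))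
    (hne : A ≠ B ∨ C ≠ D) :
    ∃ (u : V) (c : G.Walk u u), c.IsCycle ∧ ∀ v, v ∈ c.support ↔
      (∃ i, A ≤ i ∧ i ≤ B ∧ P i = v) ∨ (∃ j, C ≤ j ∧ j ≤ D ∧ Q j = v) := by
  classical
  obtain ⟨pP, hpP, hsuppP⟩ := pathGraph.exists_isPath_support_iff hAB
  obtain ⟨pQ, hpQ, hsuppQ⟩ := pathGraph.exists_isPath_support_iff hCD
  set wP := pP.map P.toHom
  set wQ := (pQ.map Q.toHom).reverse
  have hwP : ∀ v, v ∈ wP.support ↔ ∃ i, A ≤ i ∧ i ≤ B ∧ P i = v := by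
    simp [wP, Walk.support_map, hsuppP, and_assoc]
  have hwQ : ∀ v, v ∈ wQ.support ↔ ∃ j, C ≤ j ∧ j ≤ D ∧ Q j = v := by
    simp [wQ, Walk.support_map, hsuppQ, and_assoc]
  set p := wP.append (.cons hBD wQ)
  have hsupp : p.support = wP.support ++ wQ.support := by
    simp [p, Walk.support_append]
  have hp : p.IsPath := by
    rw [Walk.isPath_def, hsupp, List.nodup_append]
    refine ⟨(hpP.map P.injective).support_nodup, (hpQ.map Q.injective).reverse.support_nodup, ?_⟩
    intro a ha b hb hab
    obtain ⟨i, -, -, rfl⟩ := (hwP a).mp ha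
    obtain ⟨j, -, -, rfl⟩ := (hwQ b).mp hb
    exact hdisj i j hab
  have hedge : s(Q C, P A) ∉ p.edges := by
    simp only [p, Walk.edges_append, Walk.edges_cons, List.mem_append, List.mem_cons, not_or]
    refine ⟨fun h => ?_, fun h => ?_, fun h => ?_⟩
    · obtain ⟨i, -, -, hi⟩ := (hwP _).mp (Walk.fst_mem_support_of_mem_edges _ h)
      exact hdisj i C hi
    · rcases Sym2.eq_iff.mp h with ⟨h, -⟩ | ⟨hQ, hP⟩
      · exact hdisj B C h.symm
      · exact hne.elim (· (P.injective hP)) (· (Q.injective hQ))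
    · obtain ⟨j, -, -, hj⟩ := (hwQ _).mp (Walk.snd_mem_support_of_mem_edges _ h)
      exact hdisj A j hj.symm
  refine ⟨_, .cons hAC.symm p, (Walk.cons_isCycle_iff p hAC.symm).mpr ⟨hp, hedge⟩, fun v => ?_⟩
  rw [Walk.support_cons, List.mem_cons, hsupp, List.mem_append, hwP, hwQ, or_iff_right_of_imp]
  rintro rfl
  exact .inr ⟨C, le_rfl, hCD, rfl⟩

lemma exists_mem_core_adj_of_extreme (hcover : ∀ x, x ∈ Set.range P ∨ x ∈ Set.range Q)
    {i : Fin k} (hi : P i ∈ core G)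
    (hext : (∀ j, P j ∈ core G → i ≤ j) ∨ (∀ j, P j ∈ core G → j ≤ i)) :
    ∃ j, Q j ∈ core G ∧ G.Adj (P i) (Q j) := by
  obtain ⟨y, z, hyz, hy, hz, hyc, hzc⟩ := exists_adj_adj_of_mem_core hi
  rcases hcover y with ⟨a, rfl⟩ | ⟨j, rfl⟩
  · rcases hcover z with ⟨b, rfl⟩ | ⟨j, rfl⟩
    · rw [P.map_adj_iff, pathGraph_adj] at hy hz
      have hab : a ≠ b := fun h => hyz (congrArg P h)
      rw [Ne, Fin.ext_iff] at hab
      simp only [Fin.le_def] at hext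
      rcases hext with h | h <;> have := h a hyc <;> have := h b hzc <;> omega
    · exact ⟨j, hzc, hz⟩
  · exact ⟨j, hyc, hy⟩

lemma exists_mem_core_of_nonempty (hcover : ∀ x, x ∈ Set.range P ∨ x ∈ Set.range Q)
    (hR : (core G).Nonempty) : ∃ i, P i ∈ core G := by
  obtain ⟨x, hx⟩ := hR
  rcases hcover x with ⟨i, rfl⟩ | ⟨j, rfl⟩
  · exact ⟨i, hx⟩
  obtain ⟨j', hj', hmin⟩ := Set.exists_min_image {j | Q j ∈ core G} id (Set.toFinite _) ⟨j, hx⟩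
  obtain ⟨i, hi, -⟩ := exists_mem_core_adj_of_extreme Q P (fun x => (hcover x).symm) hj'
    (.inl hmin)
  exact ⟨i, hi⟩

def NonCrossing : Prop :=
  ∀ i j i' j', G.Adj (P i) (Q j) → G.Adj (P i') (Q j') → ¬((i < i' ∧ j' < j) ∨ (i' < i ∧ j < j'))

variable {P Q}

lemma NonCrossing.adj_of_adj_of_adj (hnc : NonCrossing P Q) {a i : Fin k} {c j : Fin l}
    (h₁ : G.Adj (P a) (Q j)) (h₂ : G.Adj (P i) (Q c))
    (hle : (a ≤ i ∧ c ≤ j) ∨ (i ≤ a ∧ j ≤ c)) : G.Adj (P a) (Q c) := by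
  obtain rfl | hai := eq_or_ne a i
  · exact h₂
  obtain rfl : j = c := by
    have := hnc a j i c h₁ h₂
    rw [Ne, Fin.ext_iff] at hai
    simp only [Fin.lt_def, Fin.le_def, Fin.ext_iff] at this hle ⊢
    omega
  exact h₁

lemma core_subset_of_extremes (hcover : ∀ x, x ∈ Set.range P ∨ x ∈ Set.range Q)
    {A B : Fin k} {C D : Fin l} (hAB : ∀ i, P i ∈ core G → A ≤ i ∧ i ≤ B)
    (hCD : ∀ j, Q j ∈ core G → C ≤ j ∧ j ≤ D) {v : V} (hv : v ∈ core G) :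
    (∃ i, A ≤ i ∧ i ≤ B ∧ P i = v) ∨ (∃ j, C ≤ j ∧ j ≤ D ∧ Q j = v) := by
  rcases hcover v with ⟨i, rfl⟩ | ⟨j, rfl⟩
  · exact .inl ⟨i, (hAB i hv).1, (hAB i hv).2, rfl⟩
  · exact .inr ⟨j, (hCD j hv).1, (hCD j hv).2, rfl⟩

lemma exists_isCycle_support_eq_core (hdisj : ∀ i j, P i ≠ Q j)
    (hcover : ∀ x, x ∈ Set.range P ∨ x ∈ Set.range Q) (hnc : NonCrossing P Q)
    (hR : (core G).Nonempty) :
    ∃ (u : V) (c : G.Walk u u), c.IsCycle ∧ core G = {v | v ∈ c.support} := by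
  have hcover' : ∀ x, x ∈ Set.range Q ∨ x ∈ Set.range P := fun x => (hcover x).symm
  have hP := exists_mem_core_of_nonempty P Q hcover hR
  have hQ := exists_mem_core_of_nonempty Q P hcover' hR
  obtain ⟨A, hA, hAmin⟩ := Set.exists_min_image {i | P i ∈ core G} id (Set.toFinite _) hP
  obtain ⟨B, hB, hBmax⟩ := Set.exists_max_image {i | P i ∈ core G} id (Set.toFinite _) hP
  obtain ⟨C, hC, hCmin⟩ := Set.exists_min_image {j | Q j ∈ core G} id (Set.toFinite _) hQ
  obtain ⟨D, hD, hDmax⟩ := Set.exists_max_image {j | Q j ∈ core G} id (Set.toFinite _) hQ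
  have hPcore i (hi : P i ∈ core G) : A ≤ i ∧ i ≤ B := ⟨hAmin i hi, hBmax i hi⟩
  have hQcore j (hj : Q j ∈ core G) : C ≤ j ∧ j ≤ D := ⟨hCmin j hj, hDmax j hj⟩
  obtain ⟨jA, hjA, hAjA⟩ := exists_mem_core_adj_of_extreme P Q hcover hA (.inl hAmin)
  obtain ⟨jB, hjB, hBjB⟩ := exists_mem_core_adj_of_extreme P Q hcover hB (.inr hBmax)
  obtain ⟨iC, hiC, hCiC⟩ := exists_mem_core_adj_of_extreme Q P hcover' hC (.inl hCmin)
  obtain ⟨iD, hiD, hDiD⟩ := exists_mem_core_adj_of_extreme Q P hcover' hD (.inr hDmax)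
  have hAC := hnc.adj_of_adj_of_adj hAjA hCiC.symm (.inl ⟨hAmin iC hiC, hCmin jA hjA⟩)
  have hBD := hnc.adj_of_adj_of_adj hBjB hDiD.symm (.inr ⟨hBmax iD hiD, hDmax jB hjB⟩)
  have hne : A ≠ B ∨ C ≠ D := by
    by_contra! ⟨rfl, rfl⟩
    obtain ⟨x, c, hc⟩ := hR
    have hsub : {v | v ∈ c.support} ⊆ {P A, Q C} := fun v hv => by
      rcases core_subset_of_extremes hcover hPcore hQcore (mem_core_of_mem_support hc hv) with
        ⟨i, h₁, h₂, rfl⟩ | ⟨j, h₁, h₂, rfl⟩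
      · simp [le_antisymm h₂ h₁]
      · simp [le_antisymm h₂ h₁]
    have := (Set.ncard_le_ncard hsub).trans_eq (Set.ncard_pair (hdisj A C))
    have := hc.three_le_ncard_support
    omega
  obtain ⟨u, c, hc, hsupp⟩ :=
    exists_isCycle_through_segments P Q hdisj (hAmin B hB) (hCmin D hD) hAC hBD hne
  refine ⟨u, c, hc, Set.Subset.antisymm (fun v hv => ?_) fun v => mem_core_of_mem_support hc⟩
  exact (hsupp v).mpr (core_subset_of_extremes hcover hPcore hQcore hv)

end TwoPaths

lemma IsTwoParallelPaths.exists_pathGraph_embeddings (h : IsTwoParallelPaths G) :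
    ∃ (k l : ℕ) (P : pathGraph k ↪g G) (Q : pathGraph l ↪g G), (∀ i j, P i ≠ Q j) ∧
      (∀ x, x ∈ Set.range P ∨ x ∈ Set.range Q) ∧ NonCrossing P Q := by
  obtain ⟨k, l, v, u, hv, hu, hvu, hcover, hPadj, hQadj, hnc⟩ := h
  exact ⟨k, l, ⟨⟨v, hv⟩, fun {a b} => (hPadj a b).trans pathGraph_adj.symm⟩,
    ⟨⟨u, hu⟩, fun {a b} => (hQadj a b).trans pathGraph_adj.symm⟩, hvu, hcover, hnc⟩

end

theorem stmt_7_general {V : Type*} (G : SimpleGraph V)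
    (hpp : IsTwoParallelPaths G) (hR : (core G).Nonempty) :
    3 ≤ (core G).ncard ∧ (G.induce (core G)).Connected ∧
      ∀ x : core G, ((G.induce (core G)).induce {y | y ≠ x}).Connected := by
  obtain ⟨k, l, P, Q, hdisj, hcover, hnc⟩ := hpp.exists_pathGraph_embeddings
  obtain ⟨u, c, hc, hcore⟩ := exists_isCycle_support_eq_core hdisj hcover hnc hR
  rw [hcore]
  exact hc.twoConnected_induce_support

/-- If G is a connected outer-planar graph of two parallel paths with nonempty
core R, then G[R] is 2-connected: it has at least 3 vertices, is connected, and
has no cut vertex. -/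
theorem stmt_7 {V : Type*} [Fintype V] (G : SimpleGraph V)
    (hconn : G.Connected) (houter : IsOuterPlanar G)
    (hpp : IsTwoParallelPaths G) (hR : (core G).Nonempty) :
    3 ≤ (core G).ncard ∧ (G.induce (core G)).Connected ∧
      ∀ x : core G, ((G.induce (core G)).induce {y | y ≠ x}).Connected :=
  stmt_7_general G hpp hR
end

section
/- Suppose G is a graph of two parallel paths realized by induced paths P and Q, with nonempty core R whose induced subgraph G[R] has a Hamiltonian cycle C = c₀c₁…c_{r−1}c₀ bounding the outer face. Then V(P) ∩ R and V(Q) ∩ R are each sets of consecutive vertices on C (intervals in the cyclic order), and neither P nor Q uses any chord of C (interior edge). -/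
/-!
Walk around the outer boundary of the two paths, `v 0, …, v (k-1), u (l-1), …, u 0`, and place the
vertices on a line in this order (`boundaryPos`). Every edge of `G` joins two consecutive
positions or is a rung between the paths, and rungs do not interleave, so drawn as arcs above the
line the edges of `G` do not cross. A Hamiltonian cycle `c` of points on a line whose edges do not
cross visits them in their linear order, up to rotation and reflection: the rest of the cycle
cannot cross the edge `c x c (x+1)`, so it lies entirely under that arc or entirely outside it,
which makes the ranks of `c x` and `c (x+1)` differ by `±1` modulo `r`; for `r ≥ 3` the sign cannot
change along the cycle. Hence the core vertices of `P` (positions `< k`) and of `Q` (positions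
`≥ k`) form arcs of `c`, and consecutive vertices of a path are consecutive on `c`.
-/

open Function Finset

def rankBy {n : ℕ} (q : Fin n → ℕ) (x : Fin n) : ℕ := #{z | q z < q x}

section rankBy

variable {n : ℕ} {q : Fin n → ℕ} {x y : Fin n}

lemma lt_iff_rankBy_lt_card (K : ℕ) : q x < K ↔ rankBy q x < #{z | q z < K} := by
  constructor
  · intro h
    refine card_lt_card ((Finset.ssubset_iff_of_subset fun z hz => ?_).2 ⟨x, ?_, ?_⟩)
    all_goals simp_all only [mem_filter, mem_univ, true_and, lt_irrefl, not_false_eq_true]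
    omega
  · intro h
    by_contra! hK
    refine (card_le_card fun z hz => ?_).not_gt h
    simp only [mem_filter, mem_univ, true_and] at hz ⊢
    omega

lemma rankBy_lt (x : Fin n) : rankBy q x < n :=
  ((lt_iff_rankBy_lt_card (q x + 1)).1 (Nat.lt_succ_self _)).trans_le
    ((card_filter_le _ _).trans_eq (card_fin n))

lemma rankBy_lt_rankBy (h : q x < q y) : rankBy q x < rankBy q y :=
  (lt_iff_rankBy_lt_card (q y)).1 h

lemma rankBy_injective (hq : Injective q) : Injective (rankBy q) := by
  intro x y h
  by_contra hxy
  rcases (hq.ne hxy).lt_or_gt with hlt | hlt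
  · exact (rankBy_lt_rankBy hlt).ne h
  · exact (rankBy_lt_rankBy hlt).ne' h

lemma rankBy_eq_zero (h : ∀ z, q x ≤ q z) : rankBy q x = 0 := by
  simp [rankBy, h]

lemma rankBy_eq_sub_one (hq : Injective q) (h : ∀ z, q z ≤ q y) : rankBy q y = n - 1 := by
  have : ({z | q z < q y} : Finset (Fin n)) = univ.erase y := by
    ext z
    simp only [mem_filter, mem_univ, true_and, mem_erase, and_true]
    exact ⟨fun hz hzy => (hzy ▸ hz).false, fun hzy => (h z).lt_of_ne (hq.ne hzy)⟩
  rw [rankBy, this, card_erase_of_mem (mem_univ y), card_fin]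

lemma rankBy_eq_add_one (hq : Injective q) (hxy : q x < q y)
    (h : ∀ z, q z ∉ Set.Ioo (q x) (q y)) : rankBy q y = rankBy q x + 1 := by
  have : ({z | q z < q y} : Finset (Fin n)) =
      insert x ({z | q z < q x} : Finset (Fin n)) := by
    ext z
    have := h z
    simp only [Set.mem_Ioo, not_and, not_lt] at this
    simp only [mem_filter, mem_univ, true_and, Finset.mem_insert]
    constructor
    · intro hz
      by_cases hzx : q z < q x
      · exact Or.inr hzx
      · exact Or.inl (hq (by omega))
    · rintro (rfl | hz) <;> omega
  rw [rankBy, this, card_insert_of_notMem (by simp)]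
  rfl

end rankBy

def cyclicInterval {r : ℕ} (a : Fin r) (m : ℕ) : Set (Fin r) :=
  {x | ∃ t < m, ((a : ℕ) + t) % r = x}

namespace Fin

open Fin.CommRing

variable {r : ℕ} [NeZero r]

lemma natCast_inj_of_lt {s t : ℕ} (hs : s < r) (ht : t < r) : (s : Fin r) = t ↔ s = t := by
  refine ⟨fun h => ?_, congrArg _⟩
  simpa [val_cast_of_lt hs, val_cast_of_lt ht] using congrArg Fin.val h

lemma val_add_one_eq_mod (x : Fin r) : ((x + 1 : Fin r) : ℕ) = ((x : ℕ) + 1) % r := by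
  rw [val_add, val_one', Nat.add_mod_mod]

lemma mem_cyclicInterval {a x : Fin r} {m : ℕ} :
    x ∈ cyclicInterval a m ↔ ∃ t < m, a + (t : Fin r) = x := by
  simp only [cyclicInterval, Set.mem_ofPred_eq, Fin.ext_iff, val_add, val_natCast, Nat.add_mod_mod]

lemma exists_eq_add_mul_of_step (hr : 2 < r) {f : Fin r → Fin r} (hf : Injective f)
    (hstep : ∀ x, f (x + 1) = f x + 1 ∨ f (x + 1) = f x - 1) :
    ∃ d : Fin r, (d = 1 ∨ d = -1) ∧ ∀ x, f x = f 0 + d * x := by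
  have two_ne_zero : (2 : Fin r) ≠ 0 := by
    intro h
    have := (natCast_inj_of_lt (s := 2) (t := 0) hr (by omega)).1 (by simpa using h)
    omega
  set d := f 1 - f 0
  have hd : d = 1 ∨ d = -1 := by
    rcases hstep 0 with h | h <;> rw [zero_add] at h <;> simp [d, h]
  have hsucc : ∀ t : ℕ, f (t + 1) = f t + d := by
    intro t
    induction t with
    | zero => simp [d]
    | succ t ih =>
      have hback : f (t + 1 + 1) ≠ f t := fun h => two_ne_zero (by linear_combination hf h)
      push_cast
      rcases hd with hd | hd <;> rcases hstep (t + 1) with h | h <;> rw [hd] at ih ⊢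
      · exact h
      · exact absurd (by rw [h, ih]; ring) hback
      · exact absurd (by rw [h, ih]; ring) hback
      · rw [h]; ring
  have hlin : ∀ t : ℕ, f t = f 0 + d * t := by
    intro t
    induction t with
    | zero => simp
    | succ t ih => push_cast; rw [hsucc, ih]; ring
  exact ⟨d, hd, fun x => by simpa using hlin x⟩

lemma exists_cyclicInterval_eq_of_affine {g : Fin r → ℕ} (hg : ∀ x, g x < r) {b d : Fin r}
    (hd : d = 1 ∨ d = -1) (hgx : ∀ x, (g x : Fin r) = b + d * x) {m₀ m₁ : ℕ} (hm : m₁ ≤ r) :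
    ∃ a, {x | g x ∈ Set.Ico m₀ m₁} = cyclicInterval a (m₁ - m₀) := by
  simp only [Set.ext_iff, mem_cyclicInterval, Set.mem_ofPred_eq, Set.mem_Ico]
  rcases le_or_gt m₁ m₀ with hle | hlt
  · exact ⟨0, fun x => ⟨fun h => by omega, fun ⟨t, ht, _⟩ => by omega⟩⟩
  rcases hd with rfl | rfl
  · refine ⟨m₀ - b, fun x => ⟨fun ⟨h₀, h₁⟩ => ⟨g x - m₀, by omega, ?_⟩, fun ⟨t, ht, hx⟩ => ?_⟩⟩
    · rw [Nat.cast_sub h₀]; linear_combination hgx x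
    · have : g x = m₀ + t := (natCast_inj_of_lt (hg x) (by omega)).1 (by
        push_cast; linear_combination hgx x - hx)
      omega
  · refine ⟨b + 1 - m₁, fun x => ⟨fun ⟨h₀, h₁⟩ => ⟨m₁ - 1 - g x, by omega, ?_⟩,
      fun ⟨t, ht, hx⟩ => ?_⟩⟩
    · rw [Nat.cast_sub (by omega : g x ≤ m₁ - 1), Nat.cast_sub (by omega : 1 ≤ m₁)]
      linear_combination -(hgx x)
    · have : g x = m₁ - 1 - t := (natCast_inj_of_lt (hg x) (by omega)).1 (by
        rw [Nat.cast_sub (by omega : t ≤ m₁ - 1), Nat.cast_sub (by omega : 1 ≤ m₁)]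
        linear_combination hgx x + hx)
      omega

end Fin

section NoncrossingCycle

open Fin.CommRing

variable {r : ℕ} [NeZero r] {q : Fin r → ℕ}

lemma cast_rankBy_eq_add_one_or_sub_one (hq : Injective q) {x y : Fin r} (hxy : x ≠ y)
    (h : (∀ z, z ≠ x → z ≠ y → q z ∈ Set.uIoo (q x) (q y)) ∨
      (∀ z, z ≠ x → z ≠ y → q z ∉ Set.uIoo (q x) (q y))) :
    (rankBy q y : Fin r) = rankBy q x + 1 ∨ (rankBy q y : Fin r) = rankBy q x - 1 := by
  wlog hlt : q x < q y generalizing x y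
  · have hswap := h.imp (fun H z h₁ h₂ => Set.uIoo_comm (q x) (q y) ▸ H z h₂ h₁)
      (fun H z h₁ h₂ => Set.uIoo_comm (q x) (q y) ▸ H z h₂ h₁)
    rcases this hxy.symm hswap ((hq.ne hxy).symm.lt_of_le (not_lt.1 hlt)) with h' | h' <;>
      [right; left] <;> rw [h'] <;> ring
  rw [Set.uIoo_of_lt hlt] at h
  rcases h with hin | hout
  · right
    have hbounds : ∀ z, q x ≤ q z ∧ q z ≤ q y := fun z => by
      by_cases hzx : z = x
      · subst hzx; omega
      by_cases hzy : z = y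
      · subst hzy; omega
      have := hin z hzx hzy
      exact ⟨this.1.le, this.2.le⟩
    rw [rankBy_eq_zero fun z => (hbounds z).1, rankBy_eq_sub_one hq fun z => (hbounds z).2,
      Nat.cast_sub NeZero.one_le, Nat.cast_one, Fin.natCast_self]
    ring
  · left
    have hgap : ∀ z, q z ∉ Set.Ioo (q x) (q y) := fun z => by
      by_cases hzx : z = x
      · subst hzx; simp
      by_cases hzy : z = y
      · subst hzy; simp
      exact hout z hzx hzy
    rw [rankBy_eq_add_one hq hlt hgap]
    push_cast
    ring

/-- With the vertices of the cycle placed on a line in the order given by `q`, no two edges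
`x (x+1)` and `y (y+1)` without common ends cross. -/
def IsNoncrossingCycle (q : Fin r → ℕ) : Prop :=
  ∀ x y : Fin r, y + 1 ≠ x → y ≠ x → y ≠ x + 1 →
    (q y ∈ Set.uIoo (q x) (q (x + 1)) ↔ q (y + 1) ∈ Set.uIoo (q x) (q (x + 1)))

namespace IsNoncrossingCycle

variable (h : IsNoncrossingCycle q)
include h

lemma mem_uIoo_iff {x z w : Fin r} (hz₁ : z ≠ x) (hz₂ : z ≠ x + 1) (hw₁ : w ≠ x)
    (hw₂ : w ≠ x + 1) :
    q z ∈ Set.uIoo (q x) (q (x + 1)) ↔ q w ∈ Set.uIoo (q x) (q (x + 1)) := by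
  have hcancel : ∀ s t : ℕ, s < r → t < r → x + (s : Fin r) = x + t → s = t :=
    fun s t hs ht hst => (Fin.natCast_inj_of_lt hs ht).1 (add_left_cancel hst)
  have hform : ∀ z, z ≠ x → z ≠ x + 1 → ∃ t, 2 ≤ t ∧ t < r ∧ z = x + (t : Fin r) := by
    intro z hz₁ hz₂
    have hzx : z = x + ((z - x : Fin r) : ℕ) := by rw [Fin.cast_val_eq_self]; ring
    refine ⟨(z - x : Fin r), ?_, (z - x).isLt, hzx⟩
    by_contra! ht
    interval_cases hv : ((z - x : Fin r) : ℕ)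
    · exact hz₁ (by simpa using hzx)
    · exact hz₂ (by simpa using hzx)
  -- The arc `x + 2, …, x + (r - 1)` of the cycle meets neither end of the edge `x (x+1)`.
  suffices H : ∀ t, 2 ≤ t → t < r →
      (q (x + (t : Fin r)) ∈ Set.uIoo (q x) (q (x + 1)) ↔
        q (x + ((2 : ℕ) : Fin r)) ∈ Set.uIoo (q x) (q (x + 1))) by
    obtain ⟨s, hs₂, hsr, rfl⟩ := hform z hz₁ hz₂
    obtain ⟨t, ht₂, htr, rfl⟩ := hform w hw₁ hw₂
    exact (H s hs₂ hsr).trans (H t ht₂ htr).symm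
  intro t ht₂
  induction t, ht₂ using Nat.le_induction with
  | base => exact fun _ => Iff.rfl
  | succ t ht₂ ih =>
    intro htr
    have hsucc : x + ((t + 1 : ℕ) : Fin r) = x + (t : Fin r) + 1 := by push_cast; ring
    rw [hsucc]
    refine (h x _ ?_ ?_ ?_).symm.trans (ih (by omega))
    · intro he
      have := hcancel (t + 1) 0 htr (by omega) (by rw [hsucc, he]; simp)
      omega
    · intro he
      have := hcancel t 0 (by omega) (by omega) (by rw [he]; simp)
      omega
    · intro he
      have := hcancel t 1 (by omega) (by omega) (by rw [he]; simp)
      omega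

lemma cast_rankBy_add_one (hr : 1 < r) (hq : Injective q) (x : Fin r) :
    (rankBy q (x + 1) : Fin r) = rankBy q x + 1 ∨ (rankBy q (x + 1) : Fin r) = rankBy q x - 1 := by
  have : Nontrivial (Fin r) := Fin.nontrivial_iff_two_le.2 hr
  refine cast_rankBy_eq_add_one_or_sub_one hq (by simp) ?_
  by_cases hw : ∃ w, w ≠ x ∧ w ≠ x + 1 ∧ q w ∈ Set.uIoo (q x) (q (x + 1))
  · obtain ⟨w, hw₁, hw₂, hw⟩ := hw
    exact Or.inl fun z hz₁ hz₂ => (h.mem_uIoo_iff hz₁ hz₂ hw₁ hw₂).2 hw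
  · push Not at hw
    exact Or.inr hw

theorem exists_rankBy_eq (hr : 2 < r) (hq : Injective q) :
    ∃ d : Fin r, (d = 1 ∨ d = -1) ∧ ∀ x, (rankBy q x : Fin r) = rankBy q 0 + d * x :=
  Fin.exists_eq_add_mul_of_step hr
    (fun x y hxy => rankBy_injective hq ((Fin.natCast_inj_of_lt (rankBy_lt x) (rankBy_lt y)).1 hxy))
    (h.cast_rankBy_add_one (by omega) hq)

theorem exists_cyclicInterval_eq (hr : 2 < r) (hq : Injective q) (K₀ K₁ : ℕ) :
    ∃ a m, {x | q x ∈ Set.Ico K₀ K₁} = cyclicInterval a m := by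
  obtain ⟨d, hd, hrank⟩ := h.exists_rankBy_eq hr hq
  obtain ⟨a, ha⟩ := Fin.exists_cyclicInterval_eq_of_affine rankBy_lt hd hrank
    (m₀ := #{z | q z < K₀}) (m₁ := #{z | q z < K₁}) ((card_filter_le _ _).trans_eq (card_fin r))
  refine ⟨a, _, Eq.trans (Set.ext fun x => ?_) ha⟩
  exact and_congr (by rw [← not_lt, ← not_lt, lt_iff_rankBy_lt_card]) (lt_iff_rankBy_lt_card K₁)

theorem eq_add_one_or_of_eq_add_one (hr : 2 < r) (hq : Injective q) {x y : Fin r}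
    (hxy : q y = q x + 1) : y = x + 1 ∨ x = y + 1 := by
  obtain ⟨d, hd, hrank⟩ := h.exists_rankBy_eq hr hq
  have hsucc : rankBy q y = rankBy q x + 1 :=
    rankBy_eq_add_one hq (by omega) fun z hz => by simp only [Set.mem_Ioo] at hz; omega
  have : d * y = d * x + 1 := by
    have := congrArg (Nat.cast : ℕ → Fin r) hsucc
    push_cast at this
    rw [hrank y, hrank x] at this
    linear_combination this
  rcases hd with rfl | rfl
  · left; linear_combination this
  · right; linear_combination this

end IsNoncrossingCycle

end NoncrossingCycle

open Classical in
/-- The value `0` for a vertex on neither path is junk. -/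
noncomputable def boundaryPos {V : Type*} {k l : ℕ} (v : Fin k → V) (u : Fin l → V) (x : V) : ℕ :=
  if h : ∃ i, v i = x then h.choose
  else if h : ∃ j, u j = x then k + l - 1 - h.choose else 0

structure IsTwoParallelPaths_s8 {V : Type*} {k l : ℕ} (G : SimpleGraph V) (v : Fin k → V)
    (u : Fin l → V) : Prop where
  injective_left : Injective v
  injective_right : Injective u
  left_ne_right : ∀ i j, v i ≠ u j
  exists_eq : ∀ x, (∃ i, v i = x) ∨ (∃ j, u j = x)
  adj_left_iff : ∀ i i', G.Adj (v i) (v i') ↔ ((i : ℕ) + 1 = i' ∨ (i' : ℕ) + 1 = i)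
  adj_right_iff : ∀ j j', G.Adj (u j) (u j') ↔ ((j : ℕ) + 1 = j' ∨ (j' : ℕ) + 1 = j)
  not_crossing : ∀ i j i' j', G.Adj (v i) (u j) → G.Adj (v i') (u j') →
    ¬ ((i < i' ∧ j' < j) ∨ (i' < i ∧ j < j'))

namespace IsTwoParallelPaths_s8

variable {V : Type*} {k l : ℕ} {G : SimpleGraph V} {v : Fin k → V} {u : Fin l → V}
  (hG : IsTwoParallelPaths_s8 G v u)
include hG

lemma boundaryPos_left (i : Fin k) : boundaryPos v u (v i) = i := by
  have h : ∃ i', v i' = v i := ⟨i, rfl⟩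
  rw [boundaryPos, dif_pos h, hG.injective_left h.choose_spec]

lemma boundaryPos_right (j : Fin l) : boundaryPos v u (u j) = k + l - 1 - j := by
  have h : ∃ j', u j' = u j := ⟨j, rfl⟩
  rw [boundaryPos, dif_neg fun ⟨i, hi⟩ => hG.left_ne_right i j hi, dif_pos h,
    hG.injective_right h.choose_spec]

lemma boundaryPos_injective : Injective (boundaryPos v u) := by
  intro x y hxy
  rcases hG.exists_eq x with ⟨i, rfl⟩ | ⟨j, rfl⟩ <;>
    rcases hG.exists_eq y with ⟨i', rfl⟩ | ⟨j', rfl⟩ <;>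
    simp only [hG.boundaryPos_left, hG.boundaryPos_right] at hxy
  · rw [Fin.ext hxy]
  · omega
  · omega
  · rw [Fin.ext (by omega : (j : ℕ) = j')]

lemma mem_range_left_iff (x : V) : x ∈ Set.range v ↔ boundaryPos v u x < k := by
  refine ⟨fun ⟨i, hi⟩ => hi ▸ (hG.boundaryPos_left i).trans_lt i.isLt, fun hx => ?_⟩
  rcases hG.exists_eq x with ⟨i, rfl⟩ | ⟨j, rfl⟩
  · exact ⟨i, rfl⟩
  · rw [hG.boundaryPos_right] at hx
    omega

lemma mem_range_right_iff (x : V) : x ∈ Set.range u ↔ boundaryPos v u x ∈ Set.Ico k (k + l) := by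
  rw [Set.mem_Ico]
  refine ⟨fun ⟨j, hj⟩ => hj ▸ by rw [hG.boundaryPos_right]; omega, fun hx => ?_⟩
  rcases hG.exists_eq x with ⟨i, rfl⟩ | ⟨j, rfl⟩
  · rw [hG.boundaryPos_left] at hx
    omega
  · exact ⟨j, rfl⟩

lemma adj_cases {x y : V} (hxy : G.Adj x y) :
    boundaryPos v u x + 1 = boundaryPos v u y ∨ boundaryPos v u y + 1 = boundaryPos v u x ∨
      ∃ i j, G.Adj (v i) (u j) ∧ ((x = v i ∧ y = u j) ∨ (x = u j ∧ y = v i)) := by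
  rcases hG.exists_eq x with ⟨i, rfl⟩ | ⟨j, rfl⟩ <;>
    rcases hG.exists_eq y with ⟨i', rfl⟩ | ⟨j', rfl⟩
  · have := (hG.adj_left_iff i i').1 hxy
    rw [hG.boundaryPos_left, hG.boundaryPos_left]
    omega
  · exact Or.inr (Or.inr ⟨i, j', hxy, Or.inl ⟨rfl, rfl⟩⟩)
  · exact Or.inr (Or.inr ⟨i', j, hxy.symm, Or.inr ⟨rfl, rfl⟩⟩)
  · have := (hG.adj_right_iff j j').1 hxy
    rw [hG.boundaryPos_right, hG.boundaryPos_right]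
    omega

lemma uIoo_iff_of_cross {i i' : Fin k} {j j' : Fin l} (h : G.Adj (v i) (u j))
    (h' : G.Adj (v i') (u j')) (hi : i ≠ i') (hj : j ≠ j') :
    boundaryPos v u (v i') ∈ Set.uIoo (boundaryPos v u (v i)) (boundaryPos v u (u j)) ↔
      boundaryPos v u (u j') ∈ Set.uIoo (boundaryPos v u (v i)) (boundaryPos v u (u j)) := by
  have := hG.not_crossing i j i' j' h h'
  rw [hG.boundaryPos_left, hG.boundaryPos_left, hG.boundaryPos_right, hG.boundaryPos_right]
  simp only [Set.uIoo, Set.mem_Ioo, Fin.lt_def, ne_eq, Fin.ext_iff] at this hi hj ⊢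
  omega

lemma uIoo_iff_of_adj {x x' y y' : V} (hx : G.Adj x x') (hy : G.Adj y y') (hyx : y ≠ x)
    (hyx' : y ≠ x') (hy'x : y' ≠ x) (hy'x' : y' ≠ x') :
    boundaryPos v u y ∈ Set.uIoo (boundaryPos v u x) (boundaryPos v u x') ↔
      boundaryPos v u y' ∈ Set.uIoo (boundaryPos v u x) (boundaryPos v u x') := by
  have hinj := hG.boundaryPos_injective
  have := hinj.ne hyx; have := hinj.ne hyx'; have := hinj.ne hy'x; have := hinj.ne hy'x'
  rcases hG.adj_cases hx with hx | hx | ⟨i, j, hij, hx⟩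
  · simp only [Set.uIoo, Set.mem_Ioo]; omega
  · simp only [Set.uIoo, Set.mem_Ioo]; omega
  rcases hG.adj_cases hy with hy | hy | ⟨i', j', hij', hy⟩
  · simp only [Set.uIoo, Set.mem_Ioo]; omega
  · simp only [Set.uIoo, Set.mem_Ioo]; omega
  rcases hx with ⟨rfl, rfl⟩ | ⟨rfl, rfl⟩ <;> rcases hy with ⟨rfl, rfl⟩ | ⟨rfl, rfl⟩
  · exact hG.uIoo_iff_of_cross hij hij' (fun h => hyx (by rw [h])) (fun h => hy'x' (by rw [h]))
  · exact (hG.uIoo_iff_of_cross hij hij' (fun h => hy'x (by rw [h]))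
      (fun h => hyx' (by rw [h]))).symm
  · rw [Set.uIoo_comm]
    exact hG.uIoo_iff_of_cross hij hij' (fun h => hyx' (by rw [h])) (fun h => hy'x (by rw [h]))
  · rw [Set.uIoo_comm]
    exact (hG.uIoo_iff_of_cross hij hij' (fun h => hy'x' (by rw [h]))
      (fun h => hyx (by rw [h]))).symm

lemma isNoncrossingCycle {r : ℕ} [NeZero r] {c : Fin r → V} (hc : Injective c)
    (hadj : ∀ x, G.Adj (c x) (c (x + 1))) : IsNoncrossingCycle (boundaryPos v u ∘ c) :=
  fun x y h₁ h₂ h₃ => hG.uIoo_iff_of_adj (hadj x) (hadj y) (hc.ne h₂) (hc.ne h₃) (hc.ne h₁)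
    (hc.ne fun h => h₂ (add_right_cancel h))

end IsTwoParallelPaths_s8

theorem stmt_8_general {V : Type*} (G : SimpleGraph V)
    (k l : ℕ) (v : Fin k → V) (u : Fin l → V)
    (hvinj : Function.Injective v) (huinj : Function.Injective u)
    (hdisj : ∀ i j, v i ≠ u j)
    (hcover : ∀ x, (∃ i, v i = x) ∨ (∃ j, u j = x))
    (hvpath : ∀ i i', G.Adj (v i) (v i') ↔ ((i : ℕ) + 1 = (i' : ℕ) ∨ (i' : ℕ) + 1 = (i : ℕ)))
    (hupath : ∀ j j', G.Adj (u j) (u j') ↔ ((j : ℕ) + 1 = (j' : ℕ) ∨ (j' : ℕ) + 1 = (j : ℕ)))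
    (hcross : ∀ i j i' j', G.Adj (v i) (u j) → G.Adj (v i') (u j') →
      ¬ ((i < i' ∧ j' < j) ∨ (i' < i ∧ j < j')))
    (r : ℕ) (hr : 3 ≤ r) (c : Fin r → V)
    (hcinj : Function.Injective c) (hcrange : Set.range c = core G)
    (hcyc : ∀ i j : Fin r, ((i : ℕ) + 1) % r = (j : ℕ) → G.Adj (c i) (c j)) :
    (∃ a : Fin r, ∃ m : ℕ,
      {x : Fin r | c x ∈ Set.range v} =
        {x : Fin r | ∃ q < m, ((a : ℕ) + q) % r = (x : ℕ)}) ∧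
    (∃ a : Fin r, ∃ m : ℕ,
      {x : Fin r | c x ∈ Set.range u} =
        {x : Fin r | ∃ q < m, ((a : ℕ) + q) % r = (x : ℕ)}) ∧
    (∀ i i' : Fin k, (i : ℕ) + 1 = (i' : ℕ) → v i ∈ core G → v i' ∈ core G →
      ∃ j j' : Fin r, ((j : ℕ) + 1) % r = (j' : ℕ) ∧
        ((c j = v i ∧ c j' = v i') ∨ (c j = v i' ∧ c j' = v i))) ∧
    (∀ j j' : Fin l, (j : ℕ) + 1 = (j' : ℕ) → u j ∈ core G → u j' ∈ core G →
      ∃ a a' : Fin r, ((a : ℕ) + 1) % r = (a' : ℕ) ∧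
        ((c a = u j ∧ c a' = u j') ∨ (c a = u j' ∧ c a' = u j))) := by
  have hG : IsTwoParallelPaths_s8 G v u := ⟨hvinj, huinj, hdisj, hcover, hvpath, hupath, hcross⟩
  have : NeZero r := ⟨by omega⟩
  have hq : Injective (boundaryPos v u ∘ c) := hG.boundaryPos_injective.comp hcinj
  have hnc := hG.isNoncrossingCycle hcinj fun x => hcyc x _ (Fin.val_add_one_eq_mod x).symm
  have hedge : ∀ x y, x ∈ core G → y ∈ core G → boundaryPos v u y = boundaryPos v u x + 1 →
      ∃ a a' : Fin r, ((a : ℕ) + 1) % r = a' ∧ ((c a = x ∧ c a' = y) ∨ (c a = y ∧ c a' = x)) := by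
    intro x y hx hy hxy
    rw [← hcrange] at hx hy
    obtain ⟨a, rfl⟩ := hx
    obtain ⟨b, rfl⟩ := hy
    rcases hnc.eq_add_one_or_of_eq_add_one hr hq hxy with rfl | rfl
    · exact ⟨a, a + 1, (Fin.val_add_one_eq_mod a).symm, Or.inl ⟨rfl, rfl⟩⟩
    · exact ⟨b, b + 1, (Fin.val_add_one_eq_mod b).symm, Or.inr ⟨rfl, rfl⟩⟩
  refine ⟨?_, ?_, ?_, ?_⟩
  · obtain ⟨a, m, h⟩ := hnc.exists_cyclicInterval_eq hr hq 0 k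
    refine ⟨a, m, Eq.trans (Set.ext fun x => ?_) h⟩
    simp [hG.mem_range_left_iff]
  · obtain ⟨a, m, h⟩ := hnc.exists_cyclicInterval_eq hr hq k (k + l)
    exact ⟨a, m, Eq.trans (Set.ext fun x => hG.mem_range_right_iff (c x)) h⟩
  · intro i i' hii hvi hvi'
    exact hedge _ _ hvi hvi' (by rw [hG.boundaryPos_left, hG.boundaryPos_left, hii])
  · intro j j' hjj huj huj'
    obtain ⟨a, a', hsucc, hends⟩ := hedge _ _ huj' huj (by
      rw [hG.boundaryPos_right, hG.boundaryPos_right]; omega)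
    exact ⟨a, a', hsucc, hends.symm⟩

/-- Suppose G is a graph of two parallel paths realized by induced paths
`v : Fin k → V` and `u : Fin l → V`, with nonempty core whose induced subgraph
has a Hamiltonian cycle `c : Fin r → V`. Then the core vertices of each path
form an interval in the cyclic order of `c`, and the edges of each path between
core vertices are edges of the cycle `c` (no chords are used). -/
theorem stmt_8 {V : Type*} (G : SimpleGraph V)
    (k l : ℕ) (v : Fin k → V) (u : Fin l → V)
    (hvinj : Function.Injective v) (huinj : Function.Injective u)
    (hdisj : ∀ i j, v i ≠ u j)
    (hcover : ∀ x, (∃ i, v i = x) ∨ (∃ j, u j = x))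
    (hvpath : ∀ i i', G.Adj (v i) (v i') ↔ ((i : ℕ) + 1 = (i' : ℕ) ∨ (i' : ℕ) + 1 = (i : ℕ)))
    (hupath : ∀ j j', G.Adj (u j) (u j') ↔ ((j : ℕ) + 1 = (j' : ℕ) ∨ (j' : ℕ) + 1 = (j : ℕ)))
    (hcross : ∀ i j i' j', G.Adj (v i) (u j) → G.Adj (v i') (u j') →
      ¬ ((i < i' ∧ j' < j) ∨ (i' < i ∧ j < j')))
    (hRne : (core G).Nonempty)
    (r : ℕ) (hr : 3 ≤ r) (c : Fin r → V)
    (hcinj : Function.Injective c) (hcrange : Set.range c = core G)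
    (hcyc : ∀ i j : Fin r, ((i : ℕ) + 1) % r = (j : ℕ) → G.Adj (c i) (c j)) :
    (∃ a : Fin r, ∃ m : ℕ,
      {x : Fin r | c x ∈ Set.range v} =
        {x : Fin r | ∃ q < m, ((a : ℕ) + q) % r = (x : ℕ)}) ∧
    (∃ a : Fin r, ∃ m : ℕ,
      {x : Fin r | c x ∈ Set.range u} =
        {x : Fin r | ∃ q < m, ((a : ℕ) + q) % r = (x : ℕ)}) ∧
    (∀ i i' : Fin k, (i : ℕ) + 1 = (i' : ℕ) → v i ∈ core G → v i' ∈ core G →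
      ∃ j j' : Fin r, ((j : ℕ) + 1) % r = (j' : ℕ) ∧
        ((c j = v i ∧ c j' = v i') ∨ (c j = v i' ∧ c j' = v i))) ∧
    (∀ j j' : Fin l, (j : ℕ) + 1 = (j' : ℕ) → u j ∈ core G → u j' ∈ core G →
      ∃ a a' : Fin r, ((a : ℕ) + 1) % r = (a' : ℕ) ∧
        ((c a = u j ∧ c a' = u j') ∨ (c a = u j' ∧ c a' = u j))) :=
  stmt_8_general G k l v u hvinj huinj hdisj hcover hvpath hupath hcross r hr c hcinj hcrange hcyc
end

section
/- Let G be a graph of two parallel paths with nonempty core R and outer-cycle C. Then every induced cycle of G has at most two chords of C among its edges (at most two interior edges). -/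
theorem IsChain.exists_lt_lt {α : Type*} [PartialOrder α] {s : Set α}
    (hs : IsChain (· ≤ ·) s) (h : 2 < s.ncard) :
    ∃ x ∈ s, ∃ y ∈ s, ∃ z ∈ s, x < y ∧ y < z := by
  obtain ⟨a, b, c, ha, hb, hc, hab, hac, hbc⟩ :=
    (Set.two_lt_ncard_iff (Set.finite_of_ncard_pos (by omega))).1 h
  by_contra! H
  rcases hs.total ha hb with h₁ | h₁ <;> rcases hs.total hb hc with h₂ | h₂ <;>
    rcases hs.total ha hc with h₃ | h₃ <;>
    grind [lt_of_le_of_ne]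

section ParallelPaths

variable {V : Type*} {G : SimpleGraph V} {k l : ℕ} {v : Fin k → V} {u : Fin l → V}

structure IsParallelPaths (G : SimpleGraph V) (v : Fin k → V) (u : Fin l → V) : Prop where
  injective_left : Function.Injective v
  injective_right : Function.Injective u
  left_ne_right : ∀ i j, v i ≠ u j
  cover : ∀ x, (∃ i, v i = x) ∨ (∃ j, u j = x)
  adj_left : ∀ i i', G.Adj (v i) (v i') ↔ ((i : ℕ) + 1 = (i' : ℕ) ∨ (i' : ℕ) + 1 = (i : ℕ))
  adj_right : ∀ j j', G.Adj (u j) (u j') ↔ ((j : ℕ) + 1 = (j' : ℕ) ∨ (j' : ℕ) + 1 = (j : ℕ))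
  not_crossing : ∀ i j i' j', G.Adj (v i) (u j) → G.Adj (v i') (u j') →
    ¬ ((i < i' ∧ j' < j) ∨ (i' < i ∧ j < j'))

def IsLeft (v : Fin k → V) (u : Fin l → V) (p : Fin k) (q : Fin l) (x : V) : Prop :=
  (∃ a < p, v a = x) ∨ (∃ b < q, u b = x)

namespace IsParallelPaths

variable {p : Fin k} {q : Fin l}

theorem symm (h : IsParallelPaths G v u) : IsParallelPaths G u v where
  injective_left := h.injective_right
  injective_right := h.injective_left
  left_ne_right i j := (h.left_ne_right j i).symm
  cover x := (h.cover x).symm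
  adj_left := h.adj_right
  adj_right := h.adj_left
  not_crossing j i j' i' hji hji' := by
    have := h.not_crossing i j i' j' hji.symm hji'.symm
    tauto

theorem le_or_le_of_adj (h : IsParallelPaths G v u) {P Q : Fin k × Fin l}
    (hP : G.Adj (v P.1) (u P.2)) (hQ : G.Adj (v Q.1) (u Q.2)) : P ≤ Q ∨ Q ≤ P := by
  have := h.not_crossing _ _ _ _ hP hQ
  simp only [Prod.le_def]
  omega

theorem left_notMem (h : IsParallelPaths G v u) {a : Fin k} : v a ∉ s(v p, u q) ↔ a ≠ p := by
  simp [h.injective_left.eq_iff, h.left_ne_right]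

theorem right_notMem (h : IsParallelPaths G v u) {b : Fin l} : u b ∉ s(v p, u q) ↔ b ≠ q := by
  simp [h.injective_right.eq_iff, (h.left_ne_right _ _).symm]

theorem isLeft_left_iff (h : IsParallelPaths G v u) {a : Fin k} :
    IsLeft v u p q (v a) ↔ a < p := by
  refine ⟨?_, fun ha => Or.inl ⟨a, ha, rfl⟩⟩
  rintro (⟨a', ha', hva⟩ | ⟨b, -, hub⟩)
  · rwa [← h.injective_left hva]
  · exact absurd hub.symm (h.left_ne_right a b)

theorem isLeft_right_iff (h : IsParallelPaths G v u) {b : Fin l} :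
    IsLeft v u p q (u b) ↔ b < q := by
  refine ⟨?_, fun hb => Or.inr ⟨b, hb, rfl⟩⟩
  rintro (⟨a, -, hva⟩ | ⟨b', hb', hub⟩)
  · exact absurd hva (h.left_ne_right a b)
  · rwa [← h.injective_right hub]

theorem isLeft_of_adj (h : IsParallelPaths G v u) (hpq : G.Adj (v p) (u q)) {x y : V}
    (hxy : G.Adj x y) (hx : IsLeft v u p q x) (hy : y ∉ s(v p, u q)) : IsLeft v u p q y := by
  rcases hx with ⟨a, ha, rfl⟩ | ⟨b, hb, rfl⟩ <;> rcases h.cover y with ⟨a', rfl⟩ | ⟨b', rfl⟩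
  · have := (h.adj_left a a').1 hxy
    rw [h.left_notMem] at hy
    rw [h.isLeft_left_iff]
    omega
  · have := h.not_crossing _ _ _ _ hxy hpq
    rw [h.right_notMem] at hy
    rw [h.isLeft_right_iff]
    omega
  · have := h.not_crossing _ _ _ _ hxy.symm hpq
    rw [h.left_notMem] at hy
    rw [h.isLeft_left_iff]
    omega
  · have := (h.adj_right b b').1 hxy
    rw [h.right_notMem] at hy
    rw [h.isLeft_right_iff]
    omega

theorem isLeft_iff_of_adj (h : IsParallelPaths G v u) (hpq : G.Adj (v p) (u q)) {x y : V}
    (hxy : G.Adj x y) (hx : x ∉ s(v p, u q)) (hy : y ∉ s(v p, u q)) :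
    IsLeft v u p q x ↔ IsLeft v u p q y :=
  ⟨fun hl => h.isLeft_of_adj hpq hxy hl hy, fun hl => h.isLeft_of_adj hpq hxy.symm hl hx⟩

end IsParallelPaths

end ParallelPaths

section Cycle

open Fin.CommRing

variable {n : ℕ} [NeZero n]

theorem Fin.val_add_one_eq_mod_s9 (i : Fin n) : ((i + 1 : Fin n) : ℕ) = (i + 1) % n := by
  rw [Fin.val_add, Fin.val_one', Nat.add_mod_mod]

theorem Fin.add_one_ne_sub_one (hn : 2 < n) (t : Fin n) : t + 1 ≠ t - 1 := by
  intro h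
  have h2 : ((2 : ℕ) : Fin n) = 0 := by push_cast; linear_combination h
  have := congrArg Fin.val h2
  rw [Fin.val_natCast, Nat.mod_eq_of_lt hn] at this
  simp at this

theorem Fin.apply_sub_one_of_forall_add_one {P : Fin n → Prop} {x t : Fin n}
    (hx : P x) (hxt : x ≠ t) (hstep : ∀ s, P s → s + 1 ≠ t → P (s + 1)) : P (t - 1) := by
  have key : ∀ a : ℕ, (∀ b ≤ a, x + (b : Fin n) ≠ t) → P (x + a) := by
    intro a
    induction a with
    | zero => intro _; simpa using hx
    | succ a ih =>
      intro h
      have := hstep _ (ih fun b hb => h b (by omega)) (by simpa [add_assoc] using h (a + 1) le_rfl)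
      simpa [add_assoc] using this
  have hN := key (t - 1 - x).val ?_
  · simpa using hN
  intro b hb hbt
  have hb' : (b : Fin n) = (t - 1 - x) + 1 := by rw [← hbt]; ring
  have hv := congrArg Fin.val hb'
  rw [Fin.val_natCast, Nat.mod_eq_of_lt (by omega), Fin.val_add_one_eq_mod_s9] at hv
  rcases Nat.lt_or_ge ((t - 1 - x).val + 1) n with hlt | hge
  · rw [Nat.mod_eq_of_lt hlt] at hv; omega
  · have hb0 : b = 0 := by rw [hv, show (t - 1 - x).val + 1 = n by omega, Nat.mod_self]
    subst hb0
    exact hxt (by simpa using hbt)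

variable {V : Type*} {G : SimpleGraph V} {k l : ℕ} {v : Fin k → V} {u : Fin l → V}

structure IsCycleSeq (G : SimpleGraph V) (e : Fin n → V) : Prop where
  three_le : 3 ≤ n
  injective : Function.Injective e
  adj : ∀ t, G.Adj (e t) (e (t + 1))

def CycleAdj (e : Fin n → V) (x y : V) : Prop :=
  ∃ t, s(e t, e (t + 1)) = s(x, y)

def crossPositions (v : Fin k → V) (u : Fin l → V) (e : Fin n → V) : Set (Fin n) :=
  {t | ∃ p q, s(e t, e (t + 1)) = s(v p, u q)}

variable {e : Fin n → V}

theorem CycleAdj.left_mem_range {x y : V} (h : CycleAdj e x y) : x ∈ Set.range e := by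
  obtain ⟨t, ht⟩ := h
  rcases Sym2.eq_iff.1 ht with ⟨h₁, -⟩ | ⟨-, h₂⟩
  · exact ⟨t, h₁⟩
  · exact ⟨t + 1, h₂⟩

theorem CycleAdj.symm {x y : V} (h : CycleAdj e x y) : CycleAdj e y x := by
  obtain ⟨t, ht⟩ := h
  exact ⟨t, ht.trans Sym2.eq_swap⟩

namespace IsCycleSeq

theorem adj_of_cycleAdj (he : IsCycleSeq G e) {x y : V} (h : CycleAdj e x y) : G.Adj x y := by
  obtain ⟨t, ht⟩ := h
  rw [← SimpleGraph.mem_edgeSet, ← ht]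
  exact he.adj t

theorem eq_of_sym2_eq (he : IsCycleSeq G e) {t t' : Fin n}
    (h : s(e t, e (t + 1)) = s(e t', e (t' + 1))) : t = t' := by
  rcases Sym2.eq_iff.1 h with ⟨h₁, -⟩ | ⟨h₁, h₂⟩
  · exact he.injective h₁
  · have h₁ := he.injective h₁
    have h₂ := he.injective h₂
    exact absurd (by rw [← h₁, ← h₂, add_sub_cancel_right]) (Fin.add_one_ne_sub_one he.three_le t')

theorem mem_core (he : IsCycleSeq G e) (t : Fin n) : e t ∈ core G := by
  obtain ⟨n', rfl⟩ : ∃ n', n = n' + 3 := ⟨n - 3, by have := he.three_le; omega⟩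
  let φ : SimpleGraph.cycleGraph (n' + 3) →g G := ⟨fun s => e (s + t), fun {a b} hab => by
    rcases SimpleGraph.cycleGraph_adj.1 hab with h | h
    · rw [sub_eq_iff_eq_add] at h
      subst h
      rw [show 1 + b + t = b + t + 1 by ring]
      exact (he.adj _).symm
    · rw [sub_eq_iff_eq_add] at h
      subst h
      rw [show 1 + a + t = a + t + 1 by ring]
      exact he.adj _⟩
  have hφ : Function.Injective φ := fun a b hab => add_right_cancel (he.injective hab)
  have := (SimpleGraph.Walk.isCycle_map_iff_of_injective hφ).2 SimpleGraph.cycleGraph.isCycle_cycle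
  have h0 : φ 0 = e t := by simp [φ]
  exact h0 ▸ ⟨_, this⟩

theorem isLeft_iff_of_cycleAdj (he : IsCycleSeq G e) (hP : IsParallelPaths G v u)
    {p : Fin k} {q : Fin l} (hpq : CycleAdj e (v p) (u q)) {x y : V}
    (hx : x ∈ Set.range e) (hxpq : x ∉ s(v p, u q)) (hy : y ∈ Set.range e)
    (hypq : y ∉ s(v p, u q)) : IsLeft v u p q x ↔ IsLeft v u p q y := by
  have hadj := he.adj_of_cycleAdj hpq
  obtain ⟨t, ht⟩ := hpq
  have hmem : ∀ s, e s ∉ s(v p, u q) ↔ s ≠ t ∧ s ≠ t + 1 := by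
    simp [← ht, he.injective.eq_iff]
  -- walking forward from any vertex off the edge, the side is constant up to `e (t - 1)`
  suffices key : ∀ a, e a ∉ s(v p, u q) →
      (IsLeft v u p q (e a) ↔ IsLeft v u p q (e (t - 1))) by
    obtain ⟨a, rfl⟩ := hx
    obtain ⟨b, rfl⟩ := hy
    exact (key a hxpq).trans (key b hypq).symm
  intro a ha
  refine (Fin.apply_sub_one_of_forall_add_one (x := a)
    (P := fun s => e s ∉ s(v p, u q) ∧ (IsLeft v u p q (e a) ↔ IsLeft v u p q (e s)))
    ⟨ha, Iff.rfl⟩ ((hmem a).1 ha).1 ?_).2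
  rintro s ⟨hs, hsa⟩ hst
  have hs₁ : e (s + 1) ∉ s(v p, u q) :=
    (hmem _).2 ⟨hst, fun h => ((hmem s).1 hs).1 (add_right_cancel h)⟩
  exact ⟨hs₁, hsa.trans (hP.isLeft_iff_of_adj hadj (he.adj s) hs hs₁)⟩

theorem cycleAdj_of_adj (he : IsCycleSeq G e) (hP : IsParallelPaths G v u) {i j : Fin k}
    (hi : v i ∈ Set.range e) (hj : v j ∈ Set.range e) (hij : G.Adj (v i) (v j)) :
    CycleAdj e (v i) (v j) := by
  by_contra hne
  obtain ⟨a, ha⟩ := hi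
  have hnext : CycleAdj e (v i) (e (a + 1)) := ⟨a, by rw [ha]⟩
  have hprev : CycleAdj e (v i) (e (a - 1)) := ⟨a - 1, by rw [sub_add_cancel, ha, Sym2.eq_swap]⟩
  have hne_next : e (a + 1) ≠ v j := fun h => hne (h ▸ hnext)
  have hne_prev : e (a - 1) ≠ v j := fun h => hne (h ▸ hprev)
  have hnp : e (a + 1) ≠ e (a - 1) := he.injective.ne (Fin.add_one_ne_sub_one he.three_le a)
  have hij' := (hP.adj_left i j).1 hij
  -- a cycle neighbour `v j'` of `v i` other than `v j` lies on the other side of `v i`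
  have side : ∀ j', CycleAdj e (v i) (v j') → v j' ≠ v j → (j < i ↔ i < j') := by
    intro j' hj' hj'j
    have := (hP.adj_left i j').1 (he.adj_of_cycleAdj hj')
    have := hP.injective_left.ne_iff.1 hj'j
    omega
  have mixed : ∀ j' q, CycleAdj e (v i) (v j') → v j' ≠ v j → CycleAdj e (v i) (u q) → False := by
    intro j' q hj' hj'j hq
    have hj'i : j' ≠ i := hP.injective_left.ne_iff.1 (he.adj_of_cycleAdj hj').ne.symm
    have := he.isLeft_iff_of_cycleAdj hP hq hj'.symm.left_mem_range (hP.left_notMem.2 hj'i)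
      hj (hP.left_notMem.2 (hP.injective_left.ne_iff.1 hij.ne.symm))
    rw [hP.isLeft_left_iff, hP.isLeft_left_iff] at this
    have := side j' hj' hj'j
    omega
  rcases hP.cover (e (a + 1)) with ⟨j₁, hj₁⟩ | ⟨q₁, hq₁⟩ <;>
    rcases hP.cover (e (a - 1)) with ⟨j₂, hj₂⟩ | ⟨q₂, hq₂⟩
  · have := side j₁ (hj₁ ▸ hnext) (hj₁ ▸ hne_next)
    have := side j₂ (hj₂ ▸ hprev) (hj₂ ▸ hne_prev)
    have := (hP.adj_left i j₁).1 (he.adj_of_cycleAdj (hj₁ ▸ hnext))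
    have := (hP.adj_left i j₂).1 (he.adj_of_cycleAdj (hj₂ ▸ hprev))
    have : j₁ ≠ j₂ := fun h => hnp (by rw [← hj₁, ← hj₂, h])
    omega
  · exact mixed j₁ q₂ (hj₁ ▸ hnext) (hj₁ ▸ hne_next) (hq₂ ▸ hprev)
  · exact mixed j₂ q₁ (hj₂ ▸ hprev) (hj₂ ▸ hne_prev) (hq₁ ▸ hnext)
  · have hq : q₁ ≠ q₂ := fun h => hnp (by rw [← hq₁, ← hq₂, h])
    have hji : j ≠ i := hP.injective_left.ne_iff.1 hij.ne.symm
    have h₁ := he.isLeft_iff_of_cycleAdj hP (hq₁ ▸ hnext) (hq₂ ▸ hprev.symm.left_mem_range)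
      (hP.right_notMem.2 hq.symm) hj (hP.left_notMem.2 hji)
    have h₂ := he.isLeft_iff_of_cycleAdj hP (hq₂ ▸ hprev) (hq₁ ▸ hnext.symm.left_mem_range)
      (hP.right_notMem.2 hq) hj (hP.left_notMem.2 hji)
    rw [hP.isLeft_right_iff, hP.isLeft_left_iff] at h₁ h₂
    omega

theorem cycleAdj_or_cross (he : IsCycleSeq G e) (hP : IsParallelPaths G v u) {x y : V}
    (hx : x ∈ Set.range e) (hy : y ∈ Set.range e) (hxy : G.Adj x y) :
    CycleAdj e x y ∨ ∃ p q, s(x, y) = s(v p, u q) := by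
  rcases hP.cover x with ⟨i, rfl⟩ | ⟨j, rfl⟩ <;> rcases hP.cover y with ⟨i', rfl⟩ | ⟨j', rfl⟩
  · exact Or.inl (he.cycleAdj_of_adj hP hx hy hxy)
  · exact Or.inr ⟨i, j', rfl⟩
  · exact Or.inr ⟨i', j, Sym2.eq_swap⟩
  · exact Or.inl (he.cycleAdj_of_adj hP.symm hx hy hxy)

theorem not_lt_lt (he : IsCycleSeq G e) (hP : IsParallelPaths G v u) {A Z B : Fin k × Fin l}
    (hA : CycleAdj e (v A.1) (u A.2)) (hZ : CycleAdj e (v Z.1) (u Z.2))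
    (hB : CycleAdj e (v B.1) (u B.2)) (hAZ : A < Z) (hZB : Z < B) : False := by
  obtain ⟨x, hx, hxZ, hxl⟩ : ∃ x ∈ Set.range e, x ∉ s(v Z.1, u Z.2) ∧ IsLeft v u Z.1 Z.2 x := by
    rcases Prod.lt_iff.1 hAZ with ⟨h, -⟩ | ⟨-, h⟩
    · exact ⟨v A.1, hA.left_mem_range, hP.left_notMem.2 h.ne, hP.isLeft_left_iff.2 h⟩
    · exact ⟨u A.2, hA.symm.left_mem_range, hP.right_notMem.2 h.ne, hP.isLeft_right_iff.2 h⟩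
  obtain ⟨y, hy, hyZ, hyl⟩ : ∃ y ∈ Set.range e, y ∉ s(v Z.1, u Z.2) ∧ ¬ IsLeft v u Z.1 Z.2 y := by
    rcases Prod.lt_iff.1 hZB with ⟨h, -⟩ | ⟨-, h⟩
    · exact ⟨v B.1, hB.left_mem_range, hP.left_notMem.2 h.ne',
        fun hl => (hP.isLeft_left_iff.1 hl).not_gt h⟩
    · exact ⟨u B.2, hB.symm.left_mem_range, hP.right_notMem.2 h.ne',
        fun hl => (hP.isLeft_right_iff.1 hl).not_gt h⟩
  exact hyl ((he.isLeft_iff_of_cycleAdj hP hZ hx hxZ hy hyZ).1 hxl)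

theorem ncard_crossPositions_le_two (he : IsCycleSeq G e) (hP : IsParallelPaths G v u) :
    (crossPositions v u e).ncard ≤ 2 := by
  by_contra! h
  obtain ⟨t₁, t₂, t₃, ⟨p₁, q₁, h₁⟩, ⟨p₂, q₂, h₂⟩, ⟨p₃, q₃, h₃⟩, h₁₂, h₁₃, h₂₃⟩ :=
    (Set.two_lt_ncard_iff (Set.toFinite _)).1 h
  let S := {P : Fin k × Fin l | CycleAdj e (v P.1) (u P.2)}
  have hchain : IsChain (· ≤ ·) S := fun P hP' Q hQ _ =>
    hP.le_or_le_of_adj (he.adj_of_cycleAdj hP') (he.adj_of_cycleAdj hQ)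
  have hsub : {(p₁, q₁), (p₂, q₂), (p₃, q₃)} ⊆ S := by
    rintro P (rfl | rfl | rfl)
    exacts [⟨t₁, h₁⟩, ⟨t₂, h₂⟩, ⟨t₃, h₃⟩]
  have hne : ∀ {t t' : Fin n} {p p' q q'}, t ≠ t' → s(e t, e (t + 1)) = s(v p, u q) →
      s(e t', e (t' + 1)) = s(v p', u q') → (p, q) ≠ (p', q') := by
    intro t t' p p' q q' htt' h h' hpq
    obtain ⟨rfl, rfl⟩ := Prod.mk.inj hpq
    exact htt' (he.eq_of_sym2_eq (h.trans h'.symm))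
  have hcard : ({(p₁, q₁), (p₂, q₂), (p₃, q₃)} : Set (Fin k × Fin l)).ncard = 3 :=
    Set.ncard_eq_three.2 ⟨_, _, _, hne h₁₂ h₁ h₂, hne h₁₃ h₁ h₃, hne h₂₃ h₂ h₃, rfl⟩
  obtain ⟨A, hA, Z, hZ, B, hB, hAZ, hZB⟩ := (hchain.mono hsub).exists_lt_lt (by omega)
  exact he.not_lt_lt hP (hsub hA) (hsub hZ) (hsub hB) hAZ hZB

end IsCycleSeq

end Cycle

theorem stmt_9_general {V : Type*} (G : SimpleGraph V)
    (hpp : IsTwoParallelPaths G)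
    (r : ℕ) (hr : 3 ≤ r) (c : Fin r → V)
    (hcinj : Function.Injective c) (hcrange : Set.range c = core G)
    (hcyc : ∀ i j : Fin r, ((i : ℕ) + 1) % r = (j : ℕ) → G.Adj (c i) (c j)) :
    ∀ (m : ℕ), 3 ≤ m → ∀ (d : Fin m → V), Function.Injective d →
      (∀ i j : Fin m, G.Adj (d i) (d j) ↔
        (((i : ℕ) + 1) % m = (j : ℕ) ∨ ((j : ℕ) + 1) % m = (i : ℕ))) →
      {p : Fin m × Fin m | ((p.1 : ℕ) + 1) % m = (p.2 : ℕ) ∧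
        ¬ ∃ j j' : Fin r, ((j : ℕ) + 1) % r = (j' : ℕ) ∧
          s(c j, c j') = s(d p.1, d p.2)}.ncard ≤ 2 := by
  intro m hm d hdinj hd
  obtain ⟨k, l, v, u, hv, hu, hvu, hcover, hvadj, huadj, hnc⟩ := hpp
  have hP : IsParallelPaths G v u := ⟨hv, hu, hvu, hcover, hvadj, huadj, hnc⟩
  have : NeZero r := ⟨by omega⟩
  have : NeZero m := ⟨by omega⟩
  have hC : IsCycleSeq G c := ⟨hr, hcinj, fun i => hcyc _ _ (Fin.val_add_one_eq_mod_s9 i).symm⟩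
  have hD : IsCycleSeq G d :=
    ⟨hm, hdinj, fun i => (hd _ _).2 (Or.inl (Fin.val_add_one_eq_mod_s9 i).symm)⟩
  have hDC : ∀ i, d i ∈ Set.range c := fun i => hcrange ▸ hD.mem_core i
  refine (Set.ncard_le_ncard_of_injOn Prod.fst ?_ ?_ (Set.toFinite _)).trans
    (hD.ncard_crossPositions_le_two hP)
  · rintro ⟨i, j⟩ ⟨hij, hnot⟩
    obtain rfl : j = i + 1 := Fin.ext (by rw [Fin.val_add_one_eq_mod_s9, hij])
    rcases hC.cycleAdj_or_cross hP (hDC i) (hDC (i + 1)) (hD.adj i) with ⟨t, ht⟩ | hcross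
    · exact absurd ⟨t, t + 1, (Fin.val_add_one_eq_mod_s9 t).symm, ht⟩ hnot
    · exact hcross
  · rintro ⟨i, j⟩ ⟨hij, -⟩ ⟨i', j'⟩ ⟨hij', -⟩ (rfl : i = i')
    simp only [Prod.mk.injEq, true_and]
    exact Fin.ext (hij.symm.trans hij')

/-- Let G be a graph of two parallel paths with nonempty core and outer-cycle
`c : Fin r → V` (a Hamiltonian cycle of the core). Then every induced cycle
`d : Fin m → V` of G has at most two edges that are not edges of the
outer-cycle (at most two interior edges). -/
theorem stmt_9 {V : Type*} (G : SimpleGraph V)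
    (hpp : IsTwoParallelPaths G) (hRne : (core G).Nonempty)
    (r : ℕ) (hr : 3 ≤ r) (c : Fin r → V)
    (hcinj : Function.Injective c) (hcrange : Set.range c = core G)
    (hcyc : ∀ i j : Fin r, ((i : ℕ) + 1) % r = (j : ℕ) → G.Adj (c i) (c j)) :
    ∀ (m : ℕ), 3 ≤ m → ∀ (d : Fin m → V), Function.Injective d →
      (∀ i j : Fin m, G.Adj (d i) (d j) ↔
        (((i : ℕ) + 1) % m = (j : ℕ) ∨ ((j : ℕ) + 1) % m = (i : ℕ))) →
      {p : Fin m × Fin m | ((p.1 : ℕ) + 1) % m = (p.2 : ℕ) ∧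
        ¬ ∃ j j' : Fin r, ((j : ℕ) + 1) % r = (j' : ℕ) ∧
          s(c j, c j') = s(d p.1, d p.2)}.ncard ≤ 2 :=
  stmt_9_general G hpp r hr c hcinj hcrange hcyc
end

section
/- Let G be a graph of two parallel paths (realized by induced paths P and Q) with nonempty core R. Then G − R is a disjoint union of at most 4 paths P¹,…,P^k (k ≤ 4), and for each i there is exactly one edge x_i y_i of G with x_i a leaf of Pⁱ and y_i ∈ R; moreover every vertex of G − R has degree at most 2 in G. -/
/-!
Number the two paths `P` and `Q`. Since edges between them do not cross, the cross edge with the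
least `P`-index also has the least `Q`-index, and likewise for the greatest: these are the corners
`(a, c)` and `(b, d)` of a box containing every cross edge. The core is exactly
`P[a, b] ∪ Q[c, d]`: the boundary `P a, …, P b, Q d, …, Q c` of the box is a cycle, and the
vertex of largest (or smallest) `P`-index on any cycle must leave `P` along a cross edge, so no
cycle reaches past the corners. Hence `G − R` consists of the four tails `P[< a]`, `P[> b]`,
`Q[< c]`, `Q[> d]`: subpaths without cross edges, each attached to the core only by the edge at its
inner end.
-/

theorem exists_lower_corner {α β : Type*} [LinearOrder α] [LinearOrder β] [Finite α] [Finite β]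
    {r : α → β → Prop} (hr : ∀ {i i' j j'}, r i j → r i' j' → i < i' → j ≤ j')
    (hne : ∃ i j, r i j) : ∃ a c, r a c ∧ ∀ i j, r i j → a ≤ i ∧ c ≤ j := by
  obtain ⟨i₀, j₀, h₀⟩ := hne
  obtain ⟨a, ⟨j₁, h₁⟩, ha⟩ :=
    Set.exists_min_image {i | ∃ j, r i j} id (Set.toFinite _) ⟨i₀, j₀, h₀⟩
  obtain ⟨c, ⟨i₂, h₂⟩, hc⟩ :=
    Set.exists_min_image {j | ∃ i, r i j} id (Set.toFinite _) ⟨j₀, i₀, h₀⟩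
  refine ⟨a, c, ?_, fun i j h => ⟨ha i ⟨j, h⟩, hc j ⟨i, h⟩⟩⟩
  rcases (ha i₂ ⟨c, h₂⟩).lt_or_eq with hlt | rfl
  · rwa [le_antisymm (hr h₁ h₂ hlt) (hc j₁ ⟨a, h₁⟩)] at h₁
  · exact h₂

theorem exists_upper_corner {α β : Type*} [LinearOrder α] [LinearOrder β] [Finite α] [Finite β]
    {r : α → β → Prop} (hr : ∀ {i i' j j'}, r i j → r i' j' → i < i' → j ≤ j')
    (hne : ∃ i j, r i j) : ∃ b d, r b d ∧ ∀ i j, r i j → i ≤ b ∧ j ≤ d :=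
  exists_lower_corner (α := αᵒᵈ) (β := βᵒᵈ) (fun h h' hlt => hr h' h hlt) hne

theorem exists_fin_reindex_nonempty {ι α : Type*} [Fintype ι] (S : ι → Set α) :
    ∃ n ≤ Fintype.card ι, ∃ e : Fin n → ι, Function.Injective e ∧ (∀ m, (S (e m)).Nonempty) ∧
      ⋃ m, S (e m) = ⋃ i, S i := by
  classical
  let e := (Fintype.equivFin {i // (S i).Nonempty}).symm
  refine ⟨_, Fintype.card_subtype_le _, fun m => (e m).1, Subtype.val_injective.comp e.injective,
    fun m => (e m).2, ?_⟩
  refine subset_antisymm (Set.iUnion_subset fun m => Set.subset_iUnion S _)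
    (Set.iUnion_subset fun i x hx => Set.mem_iUnion.mpr ⟨e.symm ⟨i, x, hx⟩, ?_⟩)
  simpa using hx

namespace SimpleGraph

variable {V : Type*} {G : SimpleGraph V} {k l : ℕ}

theorem mem_core_of_mem_support [DecidableEq V] {u x : V} {c : G.Walk u u} (hc : c.IsCycle)
    (hx : x ∈ c.support) : x ∈ core G :=
  ⟨c.rotate x hx, hc.rotate hx⟩

theorem Walk.IsCycle.exists_adj_ne [DecidableEq V] {u x : V} {c : G.Walk u u} (hc : c.IsCycle)
    (hx : x ∈ c.support) :
    ∃ y z, y ≠ z ∧ G.Adj x y ∧ G.Adj x z ∧ y ∈ c.support ∧ z ∈ c.support := by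
  have hc' := hc.rotate hx
  refine ⟨_, _, hc'.snd_ne_penultimate, Walk.adj_snd hc'.not_nil,
    (Walk.adj_penultimate hc'.not_nil).symm, ?_, ?_⟩ <;>
  exact (Walk.mem_support_rotate_iff c x hx).mp (Walk.getVert_mem_support _ _)

theorem cycleGraph_adj_val {n : ℕ} {s t : Fin n} (h : (cycleGraph n).Adj s t) :
    (s : ℕ) + 1 = t ∨ (t : ℕ) + 1 = s ∨ ((s : ℕ) = 0 ∧ (t : ℕ) + 1 = n) ∨
      ((t : ℕ) = 0 ∧ (s : ℕ) + 1 = n) := by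
  rw [cycleGraph_adj'] at h
  rcases lt_trichotomy s t with hst | rfl | hts
  · rw [Fin.coe_sub_iff_lt.mpr hst, Fin.coe_sub_iff_le.mpr hst.le] at h
    omega
  · rw [Fin.coe_sub_iff_le.mpr le_rfl] at h
    omega
  · rw [Fin.coe_sub_iff_lt.mpr hts, Fin.coe_sub_iff_le.mpr hts.le] at h
    omega

theorem range_subset_core_of_cycleGraph {n : ℕ} (hn : 3 ≤ n) (f : cycleGraph n →g G)
    (hf : Function.Injective f) : Set.range f ⊆ core G := by
  classical
  obtain ⟨n, rfl⟩ : ∃ m, n = m + 3 := ⟨n - 3, by omega⟩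
  rintro _ ⟨t, rfl⟩
  have ht : t ∈ (cycleGraph.cycle n).support := by
    convert (cycleGraph.cycle n).getVert_mem_support (n + 3 - t)
    rw [cycleGraph.getVert_cycle (by omega)]
    ext
    simp [Nat.sub_sub_self t.is_le', Nat.mod_eq_of_lt t.isLt]
  exact mem_core_of_mem_support (cycleGraph.isCycle_cycle.map hf)
    (by rw [Walk.support_map]; exact List.mem_map_of_mem ht)

def pathGraph.revIso (k : ℕ) : pathGraph k ≃g pathGraph k where
  toEquiv := Fin.revPerm
  map_rel_iff' := by intro a b; simp [pathGraph_adj]; omega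

def IsJoinedByLeafEdge (G : SimpleGraph V) (S C : Set V) : Prop :=
  ∃ x y, x ∈ S ∧ y ∈ C ∧ G.Adj x y ∧ {z | z ∈ S ∧ G.Adj x z}.ncard ≤ 1 ∧
    ∀ x' y', x' ∈ S → y' ∈ C → G.Adj x' y' → x' = x ∧ y' = y

section PathEmbedding

variable (P : pathGraph k ↪g G)

theorem range_comp_revIso : Set.range (P.comp (pathGraph.revIso k).toEmbedding) = Set.range P :=
  Fin.revPerm.surjective.range_comp P

theorem image_comp_revIso_Ioi (m : Fin k) :
    P.comp (pathGraph.revIso k).toEmbedding '' Set.Ioi m.rev = P '' Set.Iio m := by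
  change (P ∘ Fin.rev) '' _ = _
  rw [Set.image_comp, Fin.image_rev, Fin.preimage_rev_Ioi, Fin.rev_rev]

theorem exists_ge_adj_notMem_range [DecidableEq V] {u : V} {c : G.Walk u u} (hc : c.IsCycle)
    {i : Fin k} (hi : P i ∈ c.support) : ∃ i', i ≤ i' ∧ ∃ y ∉ Set.range P, G.Adj (P i') y := by
  obtain ⟨m, ⟨him, hm⟩, hmax⟩ :=
    Set.exists_max_image {a | i ≤ a ∧ P a ∈ c.support} id (Set.toFinite _) ⟨i, le_rfl, hi⟩
  refine ⟨m, him, ?_⟩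
  by_contra! hP
  -- `P (m + 1)` is off the cycle, so both cycle neighbours of `P m` would be `P (m - 1)`
  have below : ∀ y, G.Adj (P m) y → y ∈ c.support → ∃ a : Fin k, (a : ℕ) + 1 = m ∧ P a = y := by
    intro y hy hyc
    obtain ⟨a, rfl⟩ : y ∈ Set.range P := by_contra fun h => hP y h hy
    rw [P.map_adj_iff, pathGraph_adj] at hy
    refine ⟨a, hy.resolve_left fun h => ?_, rfl⟩
    have : a ≤ m := hmax a ⟨by omega, hyc⟩
    omega
  obtain ⟨y, z, hyz, hy, hz, hyc, hzc⟩ := hc.exists_adj_ne hm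
  obtain ⟨a, ha, rfl⟩ := below y hy hyc
  obtain ⟨b, hb, rfl⟩ := below z hz hzc
  exact hyz (congrArg P (Fin.ext (by omega)))

theorem exists_le_adj_notMem_range [DecidableEq V] {u : V} {c : G.Walk u u} (hc : c.IsCycle)
    {i : Fin k} (hi : P i ∈ c.support) : ∃ i' ≤ i, ∃ y ∉ Set.range P, G.Adj (P i') y := by
  obtain ⟨i', hi', y, hy, hadj⟩ :=
    exists_ge_adj_notMem_range (P.comp (pathGraph.revIso k).toEmbedding) hc (i := i.rev)
      (by simpa [pathGraph.revIso] using hi)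
  exact ⟨i'.rev, Fin.rev_le_iff.mp hi', y, by rwa [range_comp_revIso] at hy, hadj⟩

theorem inducesPath_image_Ioi (m : Fin k) : InducesPath G (P '' Set.Ioi m) := by
  refine ⟨k - (m + 1), fun t => P ⟨m + 1 + t, by omega⟩, fun s t h => Fin.ext ?_, ?_,
    fun s t => by rw [P.map_adj_iff, pathGraph_adj]; dsimp only; omega⟩
  · simpa using P.injective h
  · ext x
    simp only [Set.mem_range, Set.mem_image, Set.mem_Ioi]
    constructor
    · rintro ⟨t, rfl⟩
      exact ⟨_, Fin.lt_def.mpr (by dsimp only; omega), rfl⟩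
    · rintro ⟨i, hi, rfl⟩
      exact ⟨⟨i - (m + 1), by omega⟩, congrArg P (Fin.ext (by dsimp only; omega))⟩

theorem inducesPath_image_Iio (m : Fin k) : InducesPath G (P '' Set.Iio m) := by
  rw [← image_comp_revIso_Ioi]
  exact inducesPath_image_Ioi _ _

theorem ncard_adj_le_two (i : Fin k) (hN : ∀ y, G.Adj (P i) y → y ∈ Set.range P) :
    {z | G.Adj (P i) z}.ncard ≤ 2 := by
  have hsub : {z | G.Adj (P i) z} ⊆ P '' (pathGraph k).neighborSet i := by
    intro z hz
    obtain ⟨a, rfl⟩ := hN z hz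
    exact ⟨a, P.map_adj_iff.mp hz, rfl⟩
  calc {z | G.Adj (P i) z}.ncard ≤ (P '' (pathGraph k).neighborSet i).ncard :=
        Set.ncard_le_ncard hsub
    _ ≤ ((pathGraph k).neighborSet i).ncard := Set.ncard_image_le
    _ ≤ ({(i : ℕ) - 1, (i : ℕ) + 1} : Set ℕ).ncard :=
        Set.ncard_le_ncard_of_injOn Fin.val
          (fun a ha => by
            rw [mem_neighborSet, pathGraph_adj] at ha
            rw [Set.mem_insert_iff, Set.mem_singleton_iff]
            omega)
          Fin.val_injective.injOn
    _ ≤ 2 := (Set.ncard_insert_le _ _).trans (by simp)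

theorem isJoinedByLeafEdge_image_Ioi {C : Set V} {m : Fin k} (hm : P m ∈ C)
    (hC : ∀ x ∈ P '' Set.Ioi m, x ∉ C)
    (hN : ∀ x ∈ P '' Set.Ioi m, ∀ y, G.Adj x y → y ∈ Set.range P)
    (hne : (P '' Set.Ioi m).Nonempty) : IsJoinedByLeafEdge G (P '' Set.Ioi m) C := by
  obtain ⟨_, t, ht, rfl⟩ := hne
  have ht : m < t := ht
  let m' : Fin k := ⟨m + 1, by omega⟩
  have hm' : (m' : ℕ) = m + 1 := rfl
  refine ⟨P m', P m, ⟨m', show m < m' by omega, rfl⟩, hm,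
    P.map_adj_iff.mpr (pathGraph_adj.mpr (Or.inr hm'.symm)), ?_, ?_⟩
  · rw [Set.ncard_le_one_iff ((Set.toFinite (P '' Set.Ioi m)).subset fun z hz => hz.1)]
    rintro _ _ ⟨⟨a, ha : m < a, rfl⟩, hadj⟩ ⟨⟨b, hb : m < b, rfl⟩, hbdj⟩
    rw [P.map_adj_iff, pathGraph_adj] at hadj hbdj
    exact congrArg P (Fin.ext (by omega))
  · rintro _ y ⟨i, hi : m < i, rfl⟩ hy hadj
    obtain ⟨a, rfl⟩ := hN _ ⟨i, hi, rfl⟩ y hadj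
    have ha : ¬ m < a := fun h => hC _ ⟨a, h, rfl⟩ hy
    rw [P.map_adj_iff, pathGraph_adj] at hadj
    exact ⟨congrArg P (Fin.ext (by omega)), congrArg P (Fin.ext (by omega))⟩

theorem isJoinedByLeafEdge_image_Iio {C : Set V} {m : Fin k} (hm : P m ∈ C)
    (hC : ∀ x ∈ P '' Set.Iio m, x ∉ C)
    (hN : ∀ x ∈ P '' Set.Iio m, ∀ y, G.Adj x y → y ∈ Set.range P)
    (hne : (P '' Set.Iio m).Nonempty) : IsJoinedByLeafEdge G (P '' Set.Iio m) C := by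
  rw [← image_comp_revIso_Ioi] at hC hN hne ⊢
  rw [← range_comp_revIso] at hN
  exact isJoinedByLeafEdge_image_Ioi _ (by simpa [pathGraph.revIso]) hC hN hne

end PathEmbedding

structure TwoParallelPaths (G : SimpleGraph V) (k l : ℕ) where
  P : pathGraph k ↪g G
  Q : pathGraph l ↪g G
  P_ne_Q : ∀ i j, P i ≠ Q j
  mem_range : ∀ x, x ∈ Set.range P ∨ x ∈ Set.range Q
  cross_monotone : ∀ {i i' j j'}, G.Adj (P i) (Q j) → G.Adj (P i') (Q j') → i < i' → j ≤ j'

theorem _root_.IsTwoParallelPaths.exists_twoParallelPaths (h : IsTwoParallelPaths G) :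
    ∃ k l, Nonempty (G.TwoParallelPaths k l) := by
  obtain ⟨k, l, v, u, hv, hu, hvu, hcov, hav, hau, hx⟩ := h
  exact ⟨k, l, ⟨⟨⟨v, hv⟩, (hav _ _).trans pathGraph_adj.symm⟩,
    ⟨⟨u, hu⟩, (hau _ _).trans pathGraph_adj.symm⟩, hvu, hcov,
    fun h h' hlt => not_lt.mp fun hj => hx _ _ _ _ h h' (Or.inl ⟨hlt, hj⟩)⟩⟩

namespace TwoParallelPaths

variable (T : G.TwoParallelPaths k l)

def swap : G.TwoParallelPaths l k where
  P := T.Q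
  Q := T.P
  P_ne_Q j i := (T.P_ne_Q i j).symm
  mem_range x := (T.mem_range x).symm
  cross_monotone h h' hlt := by
    by_contra! h''
    have := T.cross_monotone h'.symm h.symm h''
    omega

theorem exists_cross_le_ge_of_P_mem_core {i : Fin k} (hi : T.P i ∈ core G) :
    ∃ i₁ j₁ i₂ j₂, i₁ ≤ i ∧ i ≤ i₂ ∧ G.Adj (T.P i₁) (T.Q j₁) ∧ G.Adj (T.P i₂) (T.Q j₂) := by
  classical
  obtain ⟨c, hc⟩ := hi
  obtain ⟨i₁, hi₁, y₁, hy₁, h₁⟩ := exists_le_adj_notMem_range T.P hc c.start_mem_support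
  obtain ⟨i₂, hi₂, y₂, hy₂, h₂⟩ := exists_ge_adj_notMem_range T.P hc c.start_mem_support
  obtain ⟨j₁, rfl⟩ := (T.mem_range y₁).resolve_left hy₁
  obtain ⟨j₂, rfl⟩ := (T.mem_range y₂).resolve_left hy₂
  exact ⟨i₁, j₁, i₂, j₂, hi₁, hi₂, h₁, h₂⟩

theorem exists_cross_of_core_nonempty (hR : (core G).Nonempty) :
    ∃ i j, G.Adj (T.P i) (T.Q j) := by
  obtain ⟨x, hx⟩ := hR
  rcases T.mem_range x with ⟨i, rfl⟩ | ⟨j, rfl⟩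
  · obtain ⟨i₁, j₁, -, -, -, -, h₁, -⟩ := T.exists_cross_le_ge_of_P_mem_core hx
    exact ⟨i₁, j₁, h₁⟩
  · obtain ⟨j₁, i₁, -, -, -, -, h₁, -⟩ := T.swap.exists_cross_le_ge_of_P_mem_core hx
    exact ⟨i₁, j₁, h₁.symm⟩

structure IsCrossBox (a b : Fin k) (c d : Fin l) : Prop where
  lower : G.Adj (T.P a) (T.Q c)
  upper : G.Adj (T.P b) (T.Q d)
  le_of_adj : ∀ i j, G.Adj (T.P i) (T.Q j) → a ≤ i ∧ c ≤ j
  ge_of_adj : ∀ i j, G.Adj (T.P i) (T.Q j) → i ≤ b ∧ j ≤ d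

theorem exists_isCrossBox (hR : (core G).Nonempty) : ∃ a b c d, T.IsCrossBox a b c d := by
  have hne := T.exists_cross_of_core_nonempty hR
  obtain ⟨a, c, hac, hmin⟩ := exists_lower_corner T.cross_monotone hne
  obtain ⟨b, d, hbd, hmax⟩ := exists_upper_corner T.cross_monotone hne
  exact ⟨a, b, c, d, hac, hbd, hmin, hmax⟩

def tails (a b : Fin k) (c d : Fin l) : Fin 4 → Set V :=
  ![T.P '' Set.Iio a, T.P '' Set.Ioi b, T.Q '' Set.Iio c, T.Q '' Set.Ioi d]

theorem inducesPath_tails (a b : Fin k) (c d : Fin l) (s : Fin 4) :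
    InducesPath G (T.tails a b c d s) := by
  fin_cases s
  exacts [inducesPath_image_Iio T.P a, inducesPath_image_Ioi T.P b,
    inducesPath_image_Iio T.Q c, inducesPath_image_Ioi T.Q d]

namespace IsCrossBox

variable {T} {a b : Fin k} {c d : Fin l}

theorem swap (hB : T.IsCrossBox a b c d) : T.swap.IsCrossBox c d a b :=
  ⟨hB.lower.symm, hB.upper.symm, fun j i h => (hB.le_of_adj i j h.symm).symm,
    fun j i h => (hB.ge_of_adj i j h.symm).symm⟩

theorem le (hB : T.IsCrossBox a b c d) : a ≤ b ∧ c ≤ d :=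
  hB.le_of_adj _ _ hB.upper

theorem mem_Icc_of_P_mem_core (hB : T.IsCrossBox a b c d) {i : Fin k} (hi : T.P i ∈ core G) :
    i ∈ Set.Icc a b := by
  obtain ⟨i₁, j₁, i₂, j₂, hi₁, hi₂, h₁, h₂⟩ := T.exists_cross_le_ge_of_P_mem_core hi
  exact ⟨(hB.le_of_adj _ _ h₁).1.trans hi₁, hi₂.trans (hB.ge_of_adj _ _ h₂).1⟩

theorem not_degenerate (hB : T.IsCrossBox a b c d) (hR : (core G).Nonempty) :
    ¬ (a = b ∧ c = d) := by
  classical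
  rintro ⟨rfl, rfl⟩
  have two : ∀ x ∈ core G, x = T.P a ∨ x = T.Q c := by
    intro x hx
    rcases T.mem_range x with ⟨i, rfl⟩ | ⟨j, rfl⟩
    · have hi := hB.mem_Icc_of_P_mem_core hx
      exact Or.inl (congrArg T.P (le_antisymm hi.2 hi.1))
    · have hj := hB.swap.mem_Icc_of_P_mem_core hx
      exact Or.inr (congrArg T.Q (le_antisymm hj.2 hj.1))
  -- a cycle has three distinct vertices, but the core has at most two
  obtain ⟨x, w, hw⟩ := hR
  obtain ⟨y, z, hyz, hy, hz, hyw, hzw⟩ := hw.exists_adj_ne w.start_mem_support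
  have hx := two x ⟨w, hw⟩
  have hy' := two y (mem_core_of_mem_support hw hyw)
  have hz' := two z (mem_core_of_mem_support hw hzw)
  rcases hx with rfl | rfl <;> rcases hy' with rfl | rfl <;> rcases hz' with rfl | rfl <;>
    simp_all

theorem image_Icc_subset_core (hB : T.IsCrossBox a b c d) (hR : (core G).Nonempty) :
    T.P '' Set.Icc a b ∪ T.Q '' Set.Icc c d ⊆ core G := by
  obtain ⟨hab, hcd⟩ := hB.le
  have hnd := hB.not_degenerate hR
  have corner : ∀ (i : Fin k) (j : Fin l),
      ((i : ℕ) = a ∧ (j : ℕ) = c) ∨ ((i : ℕ) = b ∧ (j : ℕ) = d) → G.Adj (T.P i) (T.Q j) := by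
    rintro i j (⟨hi, hj⟩ | ⟨hi, hj⟩)
    · rw [Fin.ext hi, Fin.ext hj]; exact hB.lower
    · rw [Fin.ext hi, Fin.ext hj]; exact hB.upper
  -- the boundary of the box, `P a, …, P b, Q d, …, Q c`, is a cycle
  let f : Fin ((b - a + 1) + (d - c + 1)) → V :=
    Fin.append (fun t : Fin (b - a + 1) => T.P ⟨a + t, by omega⟩)
      (fun t : Fin (d - c + 1) => T.Q ⟨d - t, by omega⟩)
  have hf : Function.Injective f := by
    intro s t
    refine Fin.addCases (fun s => ?_) (fun s => ?_) s <;>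
      refine Fin.addCases (fun t => ?_) (fun t => ?_) t <;>
      simp only [f, Fin.append_left, Fin.append_right] <;> intro h
    · have := congrArg Fin.val (T.P.injective h)
      simp only [Fin.ext_iff, Fin.val_castAdd] at this ⊢
      omega
    · exact absurd h (T.P_ne_Q _ _)
    · exact absurd h.symm (T.P_ne_Q _ _)
    · have := congrArg Fin.val (T.Q.injective h)
      simp only [Fin.ext_iff, Fin.val_natAdd] at this ⊢
      omega
  have hadj : ∀ s t, (cycleGraph _).Adj s t → G.Adj (f s) (f t) := by
    intro s t hst
    have h := cycleGraph_adj_val hst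
    clear hst
    revert h
    refine Fin.addCases (fun s => ?_) (fun s => ?_) s <;>
      refine Fin.addCases (fun t => ?_) (fun t => ?_) t <;>
      simp only [f, Fin.append_left, Fin.append_right, Fin.val_castAdd, Fin.val_natAdd] <;>
      intro h
    · rw [T.P.map_adj_iff, pathGraph_adj]; dsimp only; omega
    · exact corner _ _ (by dsimp only; omega)
    · exact (corner _ _ (by dsimp only; omega)).symm
    · rw [T.Q.map_adj_iff, pathGraph_adj]; dsimp only; omega
  have hsub : Set.range f ⊆ core G :=
    range_subset_core_of_cycleGraph (by omega) ⟨f, hadj _ _⟩ hf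
  rintro _ (⟨i, ⟨hai, hib⟩, rfl⟩ | ⟨j, ⟨hcj, hjd⟩, rfl⟩)
  · refine hsub ⟨Fin.castAdd _ ⟨i - a, by omega⟩, ?_⟩
    simp only [f, Fin.append_left]
    exact congrArg T.P (Fin.ext (by dsimp only; omega))
  · refine hsub ⟨Fin.natAdd _ ⟨d - j, by omega⟩, ?_⟩
    simp only [f, Fin.append_right]
    exact congrArg T.Q (Fin.ext (by dsimp only; omega))

theorem P_mem_core_iff (hB : T.IsCrossBox a b c d) (hR : (core G).Nonempty) {i : Fin k} :
    T.P i ∈ core G ↔ i ∈ Set.Icc a b :=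
  ⟨hB.mem_Icc_of_P_mem_core, fun hi => hB.image_Icc_subset_core hR (Or.inl ⟨i, hi, rfl⟩)⟩

theorem Q_mem_core_iff (hB : T.IsCrossBox a b c d) (hR : (core G).Nonempty) {j : Fin l} :
    T.Q j ∈ core G ↔ j ∈ Set.Icc c d :=
  ⟨hB.swap.mem_Icc_of_P_mem_core, fun hj => hB.image_Icc_subset_core hR (Or.inr ⟨j, hj, rfl⟩)⟩

theorem mem_range_P_of_adj (hB : T.IsCrossBox a b c d) {i : Fin k} (hi : i < a ∨ b < i) {y : V}
    (h : G.Adj (T.P i) y) : y ∈ Set.range T.P := by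
  rcases T.mem_range y with hy | ⟨j, rfl⟩
  · exact hy
  · have := hB.le_of_adj i j h
    have := hB.ge_of_adj i j h
    omega

theorem ncard_adj_le_two_of_notMem_core (hB : T.IsCrossBox a b c d) (hR : (core G).Nonempty)
    {x : V} (hx : x ∉ core G) : {z | G.Adj x z}.ncard ≤ 2 := by
  rcases T.mem_range x with ⟨i, rfl⟩ | ⟨j, rfl⟩
  · rw [hB.P_mem_core_iff hR, Set.mem_Icc] at hx
    exact ncard_adj_le_two T.P i fun y => hB.mem_range_P_of_adj (by omega)
  · rw [hB.Q_mem_core_iff hR, Set.mem_Icc] at hx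
    exact ncard_adj_le_two T.Q j fun y => hB.swap.mem_range_P_of_adj (by omega)

theorem isJoinedByLeafEdge_P_Iio (hB : T.IsCrossBox a b c d) (hR : (core G).Nonempty)
    (hne : (T.P '' Set.Iio a).Nonempty) : IsJoinedByLeafEdge G (T.P '' Set.Iio a) (core G) := by
  refine isJoinedByLeafEdge_image_Iio T.P ((hB.P_mem_core_iff hR).mpr ⟨le_rfl, hB.le.1⟩)
    ?_ ?_ hne <;> rintro _ ⟨i, hi : i < a, rfl⟩
  · rw [hB.P_mem_core_iff hR, Set.mem_Icc]
    omega
  · exact fun y => hB.mem_range_P_of_adj (Or.inl hi)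

theorem isJoinedByLeafEdge_P_Ioi (hB : T.IsCrossBox a b c d) (hR : (core G).Nonempty)
    (hne : (T.P '' Set.Ioi b).Nonempty) : IsJoinedByLeafEdge G (T.P '' Set.Ioi b) (core G) := by
  refine isJoinedByLeafEdge_image_Ioi T.P ((hB.P_mem_core_iff hR).mpr ⟨hB.le.1, le_rfl⟩)
    ?_ ?_ hne <;> rintro _ ⟨i, hi : b < i, rfl⟩
  · rw [hB.P_mem_core_iff hR, Set.mem_Icc]
    omega
  · exact fun y => hB.mem_range_P_of_adj (Or.inr hi)

theorem isJoinedByLeafEdge_tails (hB : T.IsCrossBox a b c d) (hR : (core G).Nonempty)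
    {s : Fin 4} (hne : (T.tails a b c d s).Nonempty) :
    IsJoinedByLeafEdge G (T.tails a b c d s) (core G) := by
  fin_cases s
  exacts [hB.isJoinedByLeafEdge_P_Iio hR hne, hB.isJoinedByLeafEdge_P_Ioi hR hne,
    hB.swap.isJoinedByLeafEdge_P_Iio hR hne, hB.swap.isJoinedByLeafEdge_P_Ioi hR hne]

theorem iUnion_tails (hB : T.IsCrossBox a b c d) (hR : (core G).Nonempty) :
    ⋃ s, T.tails a b c d s = (core G)ᶜ := by
  ext x
  have hQP : ∀ i j, T.Q j ≠ T.P i := fun i j => (T.P_ne_Q i j).symm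
  simp only [Set.mem_iUnion, Fin.exists_fin_succ, tails]
  rcases T.mem_range x with ⟨i, rfl⟩ | ⟨j, rfl⟩
  · simp [hB.P_mem_core_iff hR, T.P.injective.eq_iff, hQP, imp_iff_not_or]
  · simp [hB.Q_mem_core_iff hR, T.Q.injective.eq_iff, T.P_ne_Q, imp_iff_not_or]

theorem tails_separated (hB : T.IsCrossBox a b c d) {s t : Fin 4} (hst : s ≠ t) {x y : V}
    (hx : x ∈ T.tails a b c d s) (hy : y ∈ T.tails a b c d t) : x ≠ y ∧ ¬ G.Adj x y := by
  have hPQ : ∀ i j, (i < a ∨ b < i) → T.P i ≠ T.Q j ∧ ¬ G.Adj (T.P i) (T.Q j) := fun i j hi =>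
    ⟨T.P_ne_Q i j, fun h => by have := hB.le_of_adj i j h; have := hB.ge_of_adj i j h; omega⟩
  have hab := hB.le
  fin_cases s <;> fin_cases t <;> (try exact absurd rfl hst) <;>
    obtain ⟨i, hi, rfl⟩ := hx <;> obtain ⟨j, hj, rfl⟩ := hy <;>
    simp only [Set.mem_Iio, Set.mem_Ioi] at hi hj
  all_goals first
    | exact hPQ i j (by omega)
    | exact (hPQ j i (by omega)).imp Ne.symm fun h h' => h h'.symm
    | rw [Ne, T.P.injective.eq_iff, T.P.map_adj_iff, pathGraph_adj]; omega
    | rw [Ne, T.Q.injective.eq_iff, T.Q.map_adj_iff, pathGraph_adj]; omega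

end IsCrossBox

end TwoParallelPaths

end SimpleGraph

theorem stmt_11_general {V : Type*} (G : SimpleGraph V)
    (hpp : IsTwoParallelPaths G) (hR : (core G).Nonempty) :
    (∀ x, x ∉ core G → {z | G.Adj x z}.ncard ≤ 2) ∧
    ∃ k : ℕ, k ≤ 4 ∧ ∃ S : Fin k → Set V,
      (∀ i, (S i).Nonempty) ∧
      (∀ i j, i ≠ j → Disjoint (S i) (S j)) ∧
      (⋃ i, S i) = (core G)ᶜ ∧
      (∀ i, InducesPath G (S i)) ∧
      (∀ i j, i ≠ j → ∀ x ∈ S i, ∀ y ∈ S j, ¬ G.Adj x y) ∧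
      (∀ i, ∃ x y, x ∈ S i ∧ y ∈ core G ∧ G.Adj x y ∧
        {z | z ∈ S i ∧ G.Adj x z}.ncard ≤ 1 ∧
        ∀ x' y', x' ∈ S i → y' ∈ core G → G.Adj x' y' → x' = x ∧ y' = y) := by
  obtain ⟨k, l, ⟨T⟩⟩ := hpp.exists_twoParallelPaths
  obtain ⟨a, b, c, d, hB⟩ := T.exists_isCrossBox hR
  refine ⟨fun x => hB.ncard_adj_le_two_of_notMem_core hR, ?_⟩
  obtain ⟨n, hn, e, he, hne, hU⟩ := exists_fin_reindex_nonempty (T.tails a b c d)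
  refine ⟨n, by simpa using hn, fun m => T.tails a b c d (e m), hne, fun m m' h => ?_,
    hU.trans (hB.iUnion_tails hR), fun m => T.inducesPath_tails a b c d _,
    fun m m' h x hx y hy => (hB.tails_separated (he.ne h) hx hy).2,
    fun m => hB.isJoinedByLeafEdge_tails hR (hne m)⟩
  exact Set.disjoint_left.mpr fun x hx hx' => (hB.tails_separated (he.ne h) hx hx').1 rfl

/-- If G is a graph of two parallel paths with nonempty core R, then every
vertex outside R has degree at most 2 in G, and G − R is a disjoint union of at
most 4 paths, each joined to R by exactly one edge, whose endpoint in the path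
is a leaf of that path. -/
theorem stmt_11 {V : Type*} [Fintype V] (G : SimpleGraph V)
    (hpp : IsTwoParallelPaths G) (hR : (core G).Nonempty) :
    (∀ x, x ∉ core G → {z | G.Adj x z}.ncard ≤ 2) ∧
    ∃ k : ℕ, k ≤ 4 ∧ ∃ S : Fin k → Set V,
      (∀ i, (S i).Nonempty) ∧
      (∀ i j, i ≠ j → Disjoint (S i) (S j)) ∧
      (⋃ i, S i) = (core G)ᶜ ∧
      (∀ i, InducesPath G (S i)) ∧
      (∀ i j, i ≠ j → ∀ x ∈ S i, ∀ y ∈ S j, ¬ G.Adj x y) ∧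
      (∀ i, ∃ x y, x ∈ S i ∧ y ∈ core G ∧ G.Adj x y ∧
        {z | z ∈ S i ∧ G.Adj x z}.ncard ≤ 1 ∧
        ∀ x' y', x' ∈ S i → y' ∈ core G → G.Adj x' y' → x' = x ∧ y' = y) :=
  stmt_11_general G hpp hR
end

section
/- If G is an outer-planar graph whose core G[R] has two distinct Hamiltonian cycles, then G contains a K₄ minor; hence if G is outer-planar (contains no K₄ minor), the Hamiltonian cycle of G[R] bounding the outer face is unique. -/
/-!
Let `ab` be an edge of the second cycle that is not an edge of the first one: the two cycles
have the same number of edges, so each has an edge missing from the other. In the first cycle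
`ab` is a chord, and it splits the other vertices into two nonempty arcs. The second cycle
without the edge `ab` is a Hamiltonian path from `b` to `a` whose interior starts in one arc
and ends in the other (at the neighbours of `a` on the first cycle), so one of its edges `uv`
joins the two arcs. The chords `ab` and `uv` cross, and contracting the four arcs of the first
cycle between `a`, `u`, `b`, `v` leaves a `K₄`.
-/

open Function Finset Fin.NatCast SimpleGraph

theorem Nat.exists_boundary_of_le {Q : ℕ → Prop} {i j : ℕ} (hij : i ≤ j) (hi : Q i)
    (hj : ¬ Q j) : ∃ k, i ≤ k ∧ k < j ∧ Q k ∧ ¬ Q (k + 1) := by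
  induction j, hij using Nat.le_induction with
  | base => exact absurd hi hj
  | succ j hij ih =>
    by_cases hQ : Q j
    · exact ⟨j, hij, j.lt_succ_self, hQ, hj⟩
    · obtain ⟨k, hik, hkj, hk⟩ := ih hQ
      exact ⟨k, hik, hkj.trans j.lt_succ_self, hk⟩

namespace SimpleGraph

variable {V : Type*} {G : SimpleGraph V}

theorem induce_image_Icc_connected {d : ℕ → V} {l r : ℕ} (hlr : l ≤ r)
    (hd : ∀ m, l ≤ m → m < r → G.Adj (d m) (d (m + 1))) :
    (G.induce (d '' Set.Icc l r)).Connected := by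
  have hmem {m} (hl : l ≤ m) (hr : m ≤ r) : d m ∈ d '' Set.Icc l r := ⟨m, ⟨hl, hr⟩, rfl⟩
  have hreach (m) (hl : l ≤ m) (hr : m ≤ r) :
      (G.induce (d '' Set.Icc l r)).Reachable ⟨d l, hmem le_rfl hlr⟩ ⟨d m, hmem hl hr⟩ := by
    induction m, hl using Nat.le_induction with
    | base => exact .rfl
    | succ m hl ih => exact (ih (by omega)).trans (Adj.reachable (hd m hl hr))
  rw [connected_iff]
  refine ⟨?_, ⟨_, hmem le_rfl hlr⟩⟩
  rintro ⟨_, m, ⟨hl, hr⟩, rfl⟩ ⟨_, m', ⟨hl', hr'⟩, rfl⟩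
  exact (hreach m hl hr).symm.trans (hreach m' hl' hr')

theorem hasMinor_top_of_lt {W : Type*} [LinearOrder W] (f : V → Option W)
    (hne : ∀ w, ∃ v, f v = some w) (hconn : ∀ w, (G.induce {v | f v = some w}).Connected)
    (hadj : ∀ w₁ w₂, w₁ < w₂ → ∃ v₁ v₂, f v₁ = some w₁ ∧ f v₂ = some w₂ ∧ G.Adj v₁ v₂) :
    HasMinor G (⊤ : SimpleGraph W) := by
  refine ⟨f, hne, hconn, fun w₁ w₂ hw => ?_⟩
  rcases hw.ne.lt_or_gt with h | h
  · exact hadj w₁ w₂ h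
  · obtain ⟨v₁, v₂, h₁, h₂, hv⟩ := hadj w₂ w₁ h
    exact ⟨v₂, v₁, h₂, h₁, hv.symm⟩

variable {n : ℕ} [NeZero n]

structure IsHamiltonianCycleEnum (G : SimpleGraph V) (c : Fin n → V) : Prop where
  bijective : Bijective c
  adj : ∀ i, G.Adj (c i) (c (i + 1))

def cycleEdges [DecidableEq V] (c : Fin n → V) : Finset (Sym2 V) :=
  univ.image fun i => s(c i, c (i + 1))

section cycleEdges

variable [DecidableEq V]

theorem mem_cycleEdges (c : Fin n → V) (i : Fin n) : s(c i, c (i + 1)) ∈ cycleEdges c :=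
  mem_image_of_mem _ (mem_univ i)

theorem cycleEdges_rotate (c : Fin n → V) (k : Fin n) :
    cycleEdges (fun i => c (k + i)) = cycleEdges c := by
  ext x
  simp only [cycleEdges, mem_image, mem_univ, true_and, ← add_assoc]
  exact ((add_left_surjective k).exists (p := fun a => s(c a, c (a + 1)) = x)).symm

theorem card_cycleEdges (hn : 3 ≤ n) {c : Fin n → V} (hc : Injective c) :
    #(cycleEdges c) = n := by
  rw [cycleEdges, card_image_of_injective, card_univ, Fintype.card_fin]
  intro i j hij
  rcases Sym2.eq_iff.1 hij with ⟨h, -⟩ | ⟨h, h'⟩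
  · exact hc h
  · have h2 : j + 1 + 1 = j := by rw [← hc h, hc h']
    rw [add_assoc, add_eq_left, Fin.ext_iff, Fin.val_add, Fin.val_one', Fin.val_zero,
      Nat.mod_eq_of_lt (by omega : 1 < n), Nat.mod_eq_of_lt (by omega : 1 + 1 < n)] at h2
    omega

theorem exists_notMem_cycleEdges (hn : 3 ≤ n) {c e : Fin n → V} (hc : Injective c)
    (he : Injective e) (h : ¬ cycleEdges c ⊆ cycleEdges e) :
    ∃ k, s(e k, e (k + 1)) ∉ cycleEdges c := by
  have hsub : ¬ cycleEdges e ⊆ cycleEdges c := fun hsub =>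
    h (eq_of_subset_of_card_le hsub (by rw [card_cycleEdges hn hc, card_cycleEdges hn he])).ge
  obtain ⟨x, hxe, hxc⟩ := not_subset.1 hsub
  obtain ⟨k, -, rfl⟩ := mem_image.1 hxe
  exact ⟨k, hxc⟩

end cycleEdges

namespace IsHamiltonianCycleEnum

variable {c : Fin n → V}

theorem rotate (hc : IsHamiltonianCycleEnum G c) (k : Fin n) :
    IsHamiltonianCycleEnum G fun i => c (k + i) where
  bijective := hc.bijective.comp (add_right_injective k).bijective_of_finite
  adj i := by simpa only [add_assoc] using hc.adj (k + i)

theorem adj_natCast (hc : IsHamiltonianCycleEnum G c) (m : ℕ) :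
    G.Adj (c (m : Fin n)) (c ((m + 1 : ℕ) : Fin n)) := by
  rw [Nat.cast_succ]
  exact hc.adj m

theorem natCast_inj (hc : IsHamiltonianCycleEnum G c) {m m' : ℕ} (hm : m < n) (hm' : m' < n) :
    c m = c m' ↔ m = m' := by
  rw [hc.bijective.injective.eq_iff, Fin.ext_iff, Fin.val_natCast, Fin.val_natCast,
    Nat.mod_eq_of_lt hm, Nat.mod_eq_of_lt hm']

noncomputable def pos (hc : IsHamiltonianCycleEnum G c) (x : V) : ℕ :=
  (Equiv.ofBijective c hc.bijective).symm x

theorem pos_lt (hc : IsHamiltonianCycleEnum G c) (x : V) : hc.pos x < n :=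
  Fin.is_lt _

theorem apply_pos (hc : IsHamiltonianCycleEnum G c) (x : V) : c (hc.pos x) = x := by
  rw [pos, Fin.cast_val_eq_self]
  exact Equiv.ofBijective_apply_symm_apply c hc.bijective x

theorem pos_apply (hc : IsHamiltonianCycleEnum G c) {m : ℕ} (hm : m < n) : hc.pos (c m) = m :=
  (hc.natCast_inj (hc.pos_lt _) hm).1 (hc.apply_pos _)

theorem induce_connected_of_arc (hc : IsHamiltonianCycleEnum G c) {S : Set V} {l r : ℕ}
    (hlr : l ≤ r) (hr : r < n) (hS : ∀ x, x ∈ S ↔ l ≤ hc.pos x ∧ hc.pos x ≤ r) :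
    (G.induce S).Connected := by
  have hS' : S = (fun m : ℕ => c m) '' Set.Icc l r := by
    ext x
    refine ⟨fun hx => ⟨hc.pos x, (hS x).1 hx, hc.apply_pos x⟩, ?_⟩
    rintro ⟨m, hm, rfl⟩
    rw [hS, hc.pos_apply (hm.2.trans_lt hr)]
    exact hm
  rw [hS']
  exact induce_image_Icc_connected hlr fun m _ _ => hc.adj_natCast m

theorem hasMinor_top_fin_four_of_crossing_chords (hc : IsHamiltonianCycleEnum G c)
    {p s q : ℕ} (hp : 0 < p) (hps : p < s) (hsq : s < q) (hq : q < n)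
    (h0s : G.Adj (c 0) (c s)) (hpq : G.Adj (c p) (c q)) :
    HasMinor G (⊤ : SimpleGraph (Fin 4)) := by
  -- the branch sets are the arcs `[0, p)`, `[p, s)`, `[s, q)`, `[q, n)`
  let label : ℕ → Fin 4 := fun m =>
    if m < p then 0 else if m < s then 1 else if m < q then 2 else 3
  let f : V → Option (Fin 4) := fun x => some (label (hc.pos x))
  have hf {m : ℕ} (hm : m < n) : f (c m) = some (label m) := by
    simp only [f, hc.pos_apply hm]
  obtain ⟨l0, lp1, lp, ls1, ls, lq1, lq, ln1⟩ : label 0 = 0 ∧ label (p - 1) = 0 ∧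
      label p = 1 ∧ label (s - 1) = 1 ∧ label s = 2 ∧ label (q - 1) = 2 ∧
      label q = 3 ∧ label (n - 1) = 3 := by
    simp only [label]
    refine ⟨?_, ?_, ?_, ?_, ?_, ?_, ?_, ?_⟩ <;> split_ifs <;> first | rfl | omega
  have hbranch {w : Fin 4} {l r : ℕ} (hlr : l ≤ r) (hr : r < n)
      (hw : ∀ m < n, label m = w ↔ l ≤ m ∧ m ≤ r) :
      (G.induce {x | f x = some w}).Connected :=
    hc.induce_connected_of_arc hlr hr fun x => (Option.some_inj.trans (hw _ (hc.pos_lt x)))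
  have hedge {w₁ w₂ : Fin 4} {m m' : ℕ} (hm : m < n) (hm' : m' < n) (h₁ : label m = w₁)
      (h₂ : label m' = w₂) (hadj : G.Adj (c m) (c m')) :
      ∃ v₁ v₂, f v₁ = some w₁ ∧ f v₂ = some w₂ ∧ G.Adj v₁ v₂ :=
    ⟨_, _, by rw [hf hm, h₁], by rw [hf hm', h₂], hadj⟩
  have hstep {m : ℕ} (hm : 0 < m) : G.Adj (c (m - 1 : ℕ)) (c m) := by
    simpa only [Nat.sub_add_cancel hm] using hc.adj_natCast (m - 1)
  have hwrap : G.Adj (c (0 : ℕ)) (c (n - 1 : ℕ)) := by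
    simpa only [Fin.natCast_self, Nat.cast_zero] using (hstep (NeZero.pos n)).symm
  refine hasMinor_top_of_lt f (fun w => ?_) (fun w => ?_) (fun w₁ w₂ h => ?_)
  · fin_cases w
    exacts [⟨_, (hf (m := 0) (by omega)).trans (congrArg some l0)⟩,
      ⟨_, (hf (m := p) (by omega)).trans (congrArg some lp)⟩,
      ⟨_, (hf (m := s) (by omega)).trans (congrArg some ls)⟩,
      ⟨_, (hf (m := q) (by omega)).trans (congrArg some lq)⟩]
  · fin_cases w
    · exact hbranch (l := 0) (r := p - 1) (by omega) (by omega)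
        (by intro m _; simp only [label]; split_ifs <;> simp <;> omega)
    · exact hbranch (l := p) (r := s - 1) (by omega) (by omega)
        (by intro m _; simp only [label]; split_ifs <;> simp <;> omega)
    · exact hbranch (l := s) (r := q - 1) (by omega) (by omega)
        (by intro m _; simp only [label]; split_ifs <;> simp <;> omega)
    · exact hbranch (l := q) (r := n - 1) (by omega) (by omega)
        (by intro m _; simp only [label]; split_ifs <;> simp <;> omega)
  · fin_cases w₁ <;> fin_cases w₂ <;> try exact absurd h (by decide)
    · exact hedge (by omega) (by omega) lp1 lp (hstep hp)
    · exact hedge (by omega) (by omega) l0 ls (by rwa [Nat.cast_zero])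
    · exact hedge (by omega) (by omega) l0 ln1 hwrap
    · exact hedge (by omega) (by omega) ls1 ls (hstep (by omega))
    · exact hedge (by omega) (by omega) lp lq hpq
    · exact hedge (by omega) (by omega) lq1 lq (hstep (by omega))

theorem exists_crossing_chord {e : Fin n → V} (hc : IsHamiltonianCycleEnum G c)
    (he : IsHamiltonianCycleEnum G e) {s : ℕ} (hs : 2 ≤ s) (hsn : s + 2 ≤ n)
    (h0 : e 0 = c 0) (h1 : e 1 = c s) :
    ∃ p q : ℕ, 0 < p ∧ p < s ∧ s < q ∧ q < n ∧ G.Adj (c p) (c q) := by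
  have he0 : e (0 : ℕ) = c (0 : ℕ) := by rwa [Nat.cast_zero]
  have he1 : e (1 : ℕ) = c s := by rwa [Nat.cast_one]
  have hvert {t : ℕ} (ht : t < n) (ht0 : t ≠ 0) (hts : t ≠ s) :
      ∃ m, 2 ≤ m ∧ m < n ∧ e m = c t := by
    refine ⟨he.pos (c t), ?_, he.pos_lt _, he.apply_pos _⟩
    have hm0 : he.pos (c t) ≠ 0 := fun h => ht0 <| (hc.natCast_inj ht (by omega)).1 <| by
      rw [← he.apply_pos (c t), h, he0]
    have hm1 : he.pos (c t) ≠ 1 := fun h => hts <| (hc.natCast_inj ht (by omega)).1 <| by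
      rw [← he.apply_pos (c t), h, he1]
    omega
  have hmid {m : ℕ} (hm : 2 ≤ m) (hmn : m < n) : hc.pos (e m) ≠ 0 ∧ hc.pos (e m) ≠ s := by
    constructor <;> intro h
    · have := (he.natCast_inj (m' := 0) hmn (by omega)).1 (by rw [he0, ← h, hc.apply_pos])
      omega
    · have := (he.natCast_inj (m' := 1) hmn (by omega)).1 (by rw [he1, ← h, hc.apply_pos])
      omega
  let inside (m : ℕ) : Prop := hc.pos (e m) < s
  have hcross {k k' : ℕ} (hk : 2 ≤ k) (hkn : k < n) (hk' : 2 ≤ k') (hkn' : k' < n)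
      (hadj : G.Adj (e k) (e k')) (hin : inside k) (hout : ¬ inside k') :
      ∃ p q : ℕ, 0 < p ∧ p < s ∧ s < q ∧ q < n ∧ G.Adj (c p) (c q) := by
    refine ⟨hc.pos (e k), hc.pos (e k'), ?_, hin, ?_, hc.pos_lt _, by
      rwa [hc.apply_pos, hc.apply_pos]⟩
    · exact Nat.pos_of_ne_zero (hmid hk hkn).1
    · exact lt_of_le_of_ne (not_lt.1 hout) (hmid hk' hkn').2.symm
  -- the path `e 2, …, e (n - 1)` avoids `c 0` and `c s` and joins `c 1`, inside the arc
  -- `(0, s)`, to `c (n - 1)`, outside it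
  obtain ⟨i, hi2, hin, hi⟩ := hvert (t := 1) (by omega) one_ne_zero (by omega)
  obtain ⟨j, hj2, hjn, hj⟩ := hvert (t := n - 1) (by omega) (by omega) (by omega)
  have hin_i : inside i := by simp only [inside, hi, hc.pos_apply (by omega : 1 < n)]; omega
  have hout_j : ¬ inside j := by
    simp only [inside, hj, hc.pos_apply (by omega : n - 1 < n)]; omega
  rcases le_total i j with hij | hji
  · obtain ⟨k, hik, hkj, hk, hk'⟩ := Nat.exists_boundary_of_le hij hin_i hout_j
    exact hcross (by omega) (by omega) (by omega) (by omega) (he.adj_natCast k) hk hk'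
  · obtain ⟨k, hjk, hki, hk, hk'⟩ :=
      Nat.exists_boundary_of_le (Q := fun m => ¬ inside m) hji hout_j (not_not.2 hin_i)
    exact hcross (by omega) (by omega) (by omega) (by omega) (he.adj_natCast k).symm
      (not_not.1 hk') hk

theorem hasMinor_top_fin_four_of_notMem_cycleEdges [DecidableEq V] {e : Fin n → V}
    (hc : IsHamiltonianCycleEnum G c) (he : IsHamiltonianCycleEnum G e)
    (h : s(e 0, e 1) ∉ cycleEdges c) : HasMinor G (⊤ : SimpleGraph (Fin 4)) := by
  obtain ⟨r, hr⟩ := hc.bijective.surjective (e 0)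
  have hd := hc.rotate r
  rw [← cycleEdges_rotate c r] at h
  set d := fun i => c (r + i)
  have hd0 : d 0 = e 0 := by simp only [d, add_zero, hr]
  set s := hd.pos (e 1)
  have hds : d s = e 1 := hd.apply_pos _
  have hs0 : s ≠ 0 := fun hs => (he.adj 0).ne <| by
    rw [zero_add, ← hds, ← hd0, hs, Nat.cast_zero]
  have hs1 : s ≠ 1 := fun hs => h <| by
    simpa only [← hd0, ← hds, hs, Nat.cast_one, zero_add] using mem_cycleEdges d 0
  have hsn : s ≠ n - 1 := fun hs => h <| by
    have := mem_cycleEdges d ((n - 1 : ℕ) : Fin n)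
    rwa [← Nat.cast_add_one, Nat.sub_add_cancel NeZero.one_le, Fin.natCast_self, hd0, ← hs, hds,
      Sym2.eq_swap] at this
  have hs_lt : s < n := hd.pos_lt (e 1)
  obtain ⟨p, q, hp, hps, hsq, hq, hpq⟩ :=
    hd.exists_crossing_chord he (s := s) (by omega) (by omega) hd0.symm hds.symm
  refine hd.hasMinor_top_fin_four_of_crossing_chords hp hps hsq hq ?_ hpq
  simpa only [hd0, hds, zero_add] using he.adj 0

end IsHamiltonianCycleEnum

end SimpleGraph

theorem stmt_12_general {V : Type*} [Fintype V] (G : SimpleGraph V)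
    (hcard : 3 ≤ Fintype.card V)
    (c₁ c₂ : Fin (Fintype.card V) → V)
    (hbij₁ : Function.Bijective c₁) (hbij₂ : Function.Bijective c₂)
    (hcyc₁ : ∀ i j : Fin (Fintype.card V),
      ((i : ℕ) + 1) % Fintype.card V = (j : ℕ) → G.Adj (c₁ i) (c₁ j))
    (hcyc₂ : ∀ i j : Fin (Fintype.card V),
      ((i : ℕ) + 1) % Fintype.card V = (j : ℕ) → G.Adj (c₂ i) (c₂ j))
    (hdistinct : ∃ i j : Fin (Fintype.card V),
      ((i : ℕ) + 1) % Fintype.card V = (j : ℕ) ∧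
      ¬ ∃ i' j' : Fin (Fintype.card V),
        ((i' : ℕ) + 1) % Fintype.card V = (j' : ℕ) ∧
        s(c₂ i', c₂ j') = s(c₁ i, c₁ j)) :
    HasMinor G (⊤ : SimpleGraph (Fin 4)) := by
  classical
  have : NeZero (Fintype.card V) := ⟨by omega⟩
  have hsucc (i j : Fin (Fintype.card V)) :
      ((i : ℕ) + 1) % Fintype.card V = j ↔ j = i + 1 := by
    rw [Fin.ext_iff, Fin.val_add, Fin.val_one', Nat.add_mod_mod, eq_comm]
  have hc₁ : IsHamiltonianCycleEnum G c₁ := ⟨hbij₁, fun i => hcyc₁ i _ ((hsucc _ _).2 rfl)⟩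
  have hc₂ : IsHamiltonianCycleEnum G c₂ := ⟨hbij₂, fun i => hcyc₂ i _ ((hsucc _ _).2 rfl)⟩
  obtain ⟨i, j, hij, hnot⟩ := hdistinct
  obtain rfl := (hsucc i j).1 hij
  have hsub : ¬ cycleEdges c₁ ⊆ cycleEdges c₂ := fun hsub => hnot <| by
    obtain ⟨k, -, hk⟩ := mem_image.1 (hsub (mem_cycleEdges c₁ i))
    exact ⟨k, k + 1, (hsucc _ _).2 rfl, hk⟩
  obtain ⟨k, hk⟩ := exists_notMem_cycleEdges hcard hbij₁.injective hbij₂.injective hsub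
  exact hc₁.hasMinor_top_fin_four_of_notMem_cycleEdges (hc₂.rotate k) (by simpa using hk)

/-- A 2-connected graph (at least three vertices, connected, no cut vertex)
with two distinct Hamiltonian cycles contains a K₄ minor.  (Hence the
Hamiltonian cycle of the core of an outer-planar graph bounding the outer face
is unique.) -/
theorem stmt_12 {V : Type*} [Fintype V] (G : SimpleGraph V)
    (hcard : 3 ≤ Fintype.card V) (hconn : G.Connected)
    (hnocut : ∀ x : V, (G.induce {y | y ≠ x}).Connected)
    (c₁ c₂ : Fin (Fintype.card V) → V)
    (hbij₁ : Function.Bijective c₁) (hbij₂ : Function.Bijective c₂)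
    (hcyc₁ : ∀ i j : Fin (Fintype.card V),
      ((i : ℕ) + 1) % Fintype.card V = (j : ℕ) → G.Adj (c₁ i) (c₁ j))
    (hcyc₂ : ∀ i j : Fin (Fintype.card V),
      ((i : ℕ) + 1) % Fintype.card V = (j : ℕ) → G.Adj (c₂ i) (c₂ j))
    (hdistinct : ∃ i j : Fin (Fintype.card V),
      ((i : ℕ) + 1) % Fintype.card V = (j : ℕ) ∧
      ¬ ∃ i' j' : Fin (Fintype.card V),
        ((i' : ℕ) + 1) % Fintype.card V = (j' : ℕ) ∧
        s(c₂ i', c₂ j') = s(c₁ i, c₁ j)) :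
    HasMinor G (⊤ : SimpleGraph (Fin 4)) :=
  stmt_12_general G hcard c₁ c₂ hbij₁ hbij₂ hcyc₁ hcyc₂ hdistinct
end

section
/- Let G be a graph and G' a graph obtained from G by subdividing one edge. Then the maximum nullity satisfies M(G') = M(G) or M(G') = M(G) + 1. -/
/-- The maximum nullity of a graph `G` on `Fin n`: the largest nullity of a
real symmetric matrix whose off-diagonal zero/nonzero pattern is given by the
adjacency of `G` (diagonal entries are free). -/
noncomputable def maxNullity {n : ℕ} (G : SimpleGraph (Fin n)) : ℕ :=
  sSup {k | ∃ A : Matrix (Fin n) (Fin n) ℝ, A.IsSymm ∧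
    (∀ i j, i ≠ j → (A i j ≠ 0 ↔ G.Adj i j)) ∧ n - A.rank = k}

/-!
A bordered matrix `[[A, b], [bᵀ, d]]` with `d ≠ 0` has rank `rank (A - d⁻¹ b bᵀ) + 1` (Schur
complement). Given `A ∈ S(G)`, take `b = e_u - A u v • e_v`: off the diagonal, `A + b bᵀ` differs
from `A` only in the entry at `uv`, which it kills, so bordering `A + b bᵀ` by `b` and `1` gives a
matrix in `S(G')` with the nullity of `A`. Conversely, given `A' ∈ S(G')`, resetting its corner to
`1` raises the rank by at most one, and the Schur complement then lies in `S(G)` (its entry at `uv`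
is `-b_u b_v ≠ 0`), so it has rank at most that of `A'`.
-/

open Matrix Module

theorem Submodule.finrank_prod {R V W : Type*} [Field R] [AddCommGroup V] [Module R V]
    [AddCommGroup W] [Module R W] [FiniteDimensional R V] [FiniteDimensional R W]
    (p : Submodule R V) (q : Submodule R W) :
    finrank R (p.prod q) = finrank R p + finrank R q := by
  let e : p.prod q ≃ₗ[R] p × q :=
    { toFun := fun x => (⟨x.1.1, x.2.1⟩, ⟨x.1.2, x.2.2⟩)
      invFun := fun y => ⟨(y.1, y.2), y.1.2, y.2.2⟩
      map_add' := fun _ _ => rfl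
      map_smul' := fun _ _ => rfl }
  rw [e.finrank_eq, Module.finrank_prod]

namespace Matrix

section Field

variable {R : Type*} [Field R]

theorem rank_add_le {m n : Type*} [Fintype n] (A B : Matrix m n R) :
    (A + B).rank ≤ A.rank + B.rank := by
  rw [rank, rank, rank, mulVecLin_add]
  exact (Submodule.finrank_mono (LinearMap.range_add_le _ _)).trans
    (Submodule.finrank_add_le_finrank_add_finrank _ _)

theorem rank_fromBlocks_zero_zero {m m' n n' : Type*} [Fintype m] [Fintype m'] [Fintype n]
    [Fintype n'] (A : Matrix m m' R) (D : Matrix n n' R) :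
    (fromBlocks A 0 0 D).rank = A.rank + D.rank := by
  have h : (fromBlocks A 0 0 D).mulVecLin =
      (LinearEquiv.sumArrowLequivProdArrow m n R R).symm.toLinearMap ∘ₗ
        A.mulVecLin.prodMap D.mulVecLin ∘ₗ
          (LinearEquiv.sumArrowLequivProdArrow m' n' R R).toLinearMap := by
    ext x (i | i) <;> simp [fromBlocks_mulVec] <;> rfl
  rw [rank, h, LinearMap.range_comp, LinearMap.range_comp_of_range_eq_top _ (LinearEquiv.range _),
    LinearEquiv.finrank_map_eq, LinearMap.range_prodMap, Submodule.finrank_prod]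
  rfl

theorem rank_fromBlocks_of_invertible₂₂ {m n : Type*} [Fintype m] [Fintype n] [DecidableEq m]
    [DecidableEq n] (A : Matrix m m R) (B : Matrix m n R) (C : Matrix n m R) (D : Matrix n n R)
    [Invertible D] : (fromBlocks A B C D).rank = (A - B * ⅟D * C).rank + Fintype.card n := by
  rw [fromBlocks_eq_of_invertible₂₂, rank_mul_eq_left_of_isUnit_det,
    rank_mul_eq_right_of_isUnit_det, rank_fromBlocks_zero_zero,
    rank_of_isUnit D (isUnit_of_invertible D)] <;> simp

end Field

section Border

variable {R : Type*} {n : ℕ}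

/-- The matrix `[[A, b], [cᵀ, d]]`, with the border in the last row and column. -/
def border (A : Matrix (Fin n) (Fin n) R) (b c : Fin n → R) (d : R) :
    Matrix (Fin (n + 1)) (Fin (n + 1)) R :=
  reindex finSumFinEquiv finSumFinEquiv
    (fromBlocks A (replicateCol (Fin 1) b) (replicateRow (Fin 1) c) (of fun _ _ => d))

variable (A : Matrix (Fin n) (Fin n) R) (b c : Fin n → R) (d : R)

@[simp]
theorem border_castSucc_castSucc (i j : Fin n) : border A b c d i.castSucc j.castSucc = A i j := by
  simp [border]

@[simp]
theorem border_castSucc_last (i : Fin n) : border A b c d i.castSucc (Fin.last n) = b i := by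
  simp [border]

@[simp]
theorem border_last_castSucc (j : Fin n) : border A b c d (Fin.last n) j.castSucc = c j := by
  simp [border]

@[simp]
theorem border_last_last : border A b c d (Fin.last n) (Fin.last n) = d := by
  simp [border]

theorem border_eq_self (M : Matrix (Fin (n + 1)) (Fin (n + 1)) R) :
    border (M.submatrix Fin.castSucc Fin.castSucc) (fun i => M i.castSucc (Fin.last n))
      (fun j => M (Fin.last n) j.castSucc) (M (Fin.last n) (Fin.last n)) = M := by
  ext p q
  induction p using Fin.lastCases <;> induction q using Fin.lastCases <;> simp

variable [Field R]

theorem rank_border (hd : d ≠ 0) :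
    (border A b c d).rank = (A - d⁻¹ • vecMulVec b c).rank + 1 := by
  have hinv : (of fun _ _ => d : Matrix (Fin 1) (Fin 1) R) * of (fun _ _ => d⁻¹) = 1 := by
    ext i j
    fin_cases i; fin_cases j
    simp [mul_apply, hd]
  let _ := invertibleOfRightInverse _ _ hinv
  rw [border, rank_reindex, rank_fromBlocks_of_invertible₂₂, Fintype.card_fin,
    invOf_eq_right_inv hinv]
  congr 3
  ext i j
  simp [mul_apply, vecMulVec_apply]
  ring

theorem rank_border_le (d' : R) : (border A b c d).rank ≤ (border A b c d').rank + 1 := by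
  have h : border A b c d = border A b c d' +
      vecMulVec (Pi.single (Fin.last n) (d - d')) (Pi.single (Fin.last n) 1) := by
    ext p q
    induction p using Fin.lastCases <;> induction q using Fin.lastCases <;> simp [vecMulVec_apply]
  rw [h]
  exact (rank_add_le _ _).trans (by gcongr; exact rank_vecMulVec_le _ _)

end Border

end Matrix

theorem mul_ne_zero_iff_sym2_eq {α M : Type*} [MulZeroClass M] [NoZeroDivisors M] {b : α → M}
    {u v i j : α} (hb : ∀ k, b k ≠ 0 ↔ k = u ∨ k = v) (hij : i ≠ j) :
    b i * b j ≠ 0 ↔ s(i, j) = s(u, v) := by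
  rw [mul_ne_zero_iff, hb, hb, Sym2.eq_iff]
  constructor
  · rintro ⟨rfl | rfl, rfl | rfl⟩ <;> simp_all
  · rintro (⟨rfl, rfl⟩ | ⟨rfl, rfl⟩) <;> simp

section MaxNullity

variable {n : ℕ}

/-- `S(G)`. -/
def SimpleGraph.symmMatrices (G : SimpleGraph (Fin n)) : Set (Matrix (Fin n) (Fin n) ℝ) :=
  {A | A.IsSymm ∧ ∀ i j, i ≠ j → (A i j ≠ 0 ↔ G.Adj i j)}

theorem maxNullity_eq_sSup (G : SimpleGraph (Fin n)) :
    maxNullity G = sSup ((fun A => n - A.rank) '' G.symmMatrices) := by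
  simp only [maxNullity, SimpleGraph.symmMatrices, Set.image, Set.mem_ofPred_eq, and_assoc]

theorem maxNullity_le_of_forall {m : ℕ} {G : SimpleGraph (Fin n)} {H : SimpleGraph (Fin m)}
    (c : ℕ)
    (h : ∀ A ∈ G.symmMatrices, ∃ B ∈ H.symmMatrices, n - A.rank ≤ m - B.rank + c) :
    maxNullity G ≤ maxNullity H + c := by
  have hbdd : BddAbove ((fun B => m - B.rank) '' H.symmMatrices) :=
    ⟨m, by rintro _ ⟨B, -, rfl⟩; exact Nat.sub_le _ _⟩
  rw [maxNullity_eq_sSup, maxNullity_eq_sSup]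
  refine csSup_le' ?_
  rintro _ ⟨A, hA, rfl⟩
  obtain ⟨B, hB, hAB⟩ := h A hA
  exact hAB.trans (by gcongr; exact le_csSup hbdd ⟨B, hB, rfl⟩)

end MaxNullity

namespace SimpleGraph

variable {n : ℕ}

structure IsEdgeSubdivision (G' : SimpleGraph (Fin (n + 1))) (G : SimpleGraph (Fin n))
    (u v : Fin n) : Prop where
  adj : G.Adj u v
  adj_castSucc : ∀ i j, G'.Adj i.castSucc j.castSucc ↔ G.Adj i j ∧ s(i, j) ≠ s(u, v)
  adj_last : ∀ i, G'.Adj (Fin.last n) i.castSucc ↔ i = u ∨ i = v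

namespace IsEdgeSubdivision

variable {G' : SimpleGraph (Fin (n + 1))} {G : SimpleGraph (Fin n)} {u v : Fin n}

theorem border_mem_symmMatrices (hG : G'.IsEdgeSubdivision G u v)
    {A : Matrix (Fin n) (Fin n) ℝ} {b : Fin n → ℝ} (hA : A.IsSymm)
    (hA_adj : ∀ i j, i ≠ j → (A i j ≠ 0 ↔ G.Adj i j ∧ s(i, j) ≠ s(u, v)))
    (hb : ∀ i, b i ≠ 0 ↔ i = u ∨ i = v) (d : ℝ) :
    border A b b d ∈ G'.symmMatrices := by
  refine ⟨?_, fun p q hpq => ?_⟩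
  · ext p q
    induction p using Fin.lastCases <;> induction q using Fin.lastCases <;> simp [hA.apply]
  induction p using Fin.lastCases <;> induction q using Fin.lastCases
  · exact absurd rfl hpq
  · simp [hb, hG.adj_last]
  · simp [hb, G'.adj_comm _ (Fin.last n), hG.adj_last]
  · rename_i i j
    simpa [hG.adj_castSucc] using hA_adj i j (by simpa using hpq)

theorem exists_rank_eq_add_one (hG : G'.IsEdgeSubdivision G u v) {A : Matrix (Fin n) (Fin n) ℝ}
    (hA : A ∈ G.symmMatrices) : ∃ A' ∈ G'.symmMatrices, A'.rank = A.rank + 1 := by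
  obtain ⟨hA_symm, hA_adj⟩ := hA
  have huv : u ≠ v := hG.adj.ne
  have ha : A u v ≠ 0 := (hA_adj u v huv).2 hG.adj
  set b : Fin n → ℝ := Pi.single u 1 + Pi.single v (-A u v)
  have hb : ∀ i, b i ≠ 0 ↔ i = u ∨ i = v := by
    intro i
    by_cases hiu : i = u <;> by_cases hiv : i = v <;> simp_all [b]
  refine ⟨border (A + vecMulVec b b) b b 1,
    hG.border_mem_symmMatrices (hA_symm.add (transpose_vecMulVec b b)) (fun i j hij => ?_) hb 1,
    ?_⟩
  · rw [Matrix.add_apply, vecMulVec_apply]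
    by_cases h : s(i, j) = s(u, v)
    · rcases Sym2.eq_iff.1 h with ⟨rfl, rfl⟩ | ⟨rfl, rfl⟩ <;>
        simp [b, huv, huv.symm, hA_symm.apply]
    · rw [not_not.1 ((mul_ne_zero_iff_sym2_eq hb hij).not.2 h), add_zero, hA_adj i j hij]
      exact (and_iff_left h).symm
  · rw [rank_border _ _ _ _ one_ne_zero, inv_one, one_smul, add_sub_cancel_right]

theorem exists_rank_le (hG : G'.IsEdgeSubdivision G u v)
    {A' : Matrix (Fin (n + 1)) (Fin (n + 1)) ℝ}
    (hA' : A' ∈ G'.symmMatrices) : ∃ A ∈ G.symmMatrices, A.rank ≤ A'.rank := by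
  obtain ⟨hA'_symm, hA'_adj⟩ := hA'
  set A := A'.submatrix Fin.castSucc Fin.castSucc with hA_def
  set b : Fin n → ℝ := fun i => A' i.castSucc (Fin.last n)
  have hA'_eq : border A b b (A' (Fin.last n) (Fin.last n)) = A' := by
    convert border_eq_self A' using 2
    exact funext fun j => hA'_symm.apply _ _
  have hb : ∀ i, b i ≠ 0 ↔ i = u ∨ i = v := fun i => by
    rw [hA'_adj _ _ (Fin.castSucc_lt_last i).ne, G'.adj_comm, hG.adj_last]
  have hA_adj : ∀ i j, i ≠ j → (A i j ≠ 0 ↔ G.Adj i j ∧ s(i, j) ≠ s(u, v)) :=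
    fun i j hij => by
      rw [hA_def, submatrix_apply, hA'_adj _ _ (Fin.castSucc_injective n |>.ne hij),
        hG.adj_castSucc]
  refine ⟨A - vecMulVec b b, ⟨(hA'_symm.submatrix _).sub (transpose_vecMulVec b b),
    fun i j hij => ?_⟩, ?_⟩
  · rw [Matrix.sub_apply, vecMulVec_apply]
    by_cases h : s(i, j) = s(u, v)
    · have hAij : A i j = 0 := not_not.1 fun hne => ((hA_adj i j hij).1 hne).2 h
      rw [hAij, zero_sub, neg_ne_zero, mul_ne_zero_iff_sym2_eq hb hij, ← mem_edgeSet, h]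
      exact iff_of_true rfl hG.adj
    · rw [not_not.1 ((mul_ne_zero_iff_sym2_eq hb hij).not.2 h), sub_zero, hA_adj i j hij]
      exact and_iff_left h
  · have := rank_border_le A b b 1 (A' (Fin.last n) (Fin.last n))
    rw [rank_border _ _ _ _ one_ne_zero, inv_one, one_smul, hA'_eq] at this
    omega

end IsEdgeSubdivision

end SimpleGraph

/-- If G' is obtained from G by subdividing the edge uv (with new vertex
`Fin.last n`), then M(G') = M(G) or M(G') = M(G) + 1. -/
theorem stmt_13 (n : ℕ) (G : SimpleGraph (Fin n)) (u v : Fin n) (huv : G.Adj u v)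
    (G' : SimpleGraph (Fin (n + 1)))
    (hold : ∀ i j : Fin n, G'.Adj i.castSucc j.castSucc ↔
      (G.Adj i j ∧ s(i, j) ≠ s(u, v)))
    (hnew : ∀ i : Fin n, G'.Adj (Fin.last n) i.castSucc ↔ (i = u ∨ i = v)) :
    maxNullity G' = maxNullity G ∨ maxNullity G' = maxNullity G + 1 := by
  have hG : G'.IsEdgeSubdivision G u v := ⟨huv, hold, hnew⟩
  have hle : maxNullity G ≤ maxNullity G' := maxNullity_le_of_forall 0 fun A hA => by
    obtain ⟨A', hA', hrank⟩ := hG.exists_rank_eq_add_one hA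
    exact ⟨A', hA', by omega⟩
  have hle' : maxNullity G' ≤ maxNullity G + 1 := maxNullity_le_of_forall 1 fun A' hA' => by
    obtain ⟨A, hA, hrank⟩ := hG.exists_rank_le hA'
    exact ⟨A, hA, by omega⟩
  omega
end

section
/- Let G be the path graph P_n (n ≥ 2) with vertices v₁,…,v_n in path order, and let N ⊆ V(G) be an independent set with |N| ≥ 2. Let i be the smallest index with v_i ∈ N. Then B = {v₁} ∪ (N \ {v_i}) is a zero forcing set of every graph H obtained from P_n by adding any set of edges between vertices of N; hence |B| = |N| vertices suffice to zero-force all such H. -/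
/-- The zero forcing closure: vertices that eventually become blue starting
from `B`, where a blue vertex with exactly one white neighbor forces that
neighbor blue. -/
inductive ZFClosure {V : Type*} (G : SimpleGraph V) (B : Set V) : V → Prop
  | init (v : V) (hv : v ∈ B) : ZFClosure G B v
  | force (u w : V) (hu : ZFClosure G B u) (hadj : G.Adj u w)
      (h : ∀ z, G.Adj u z → z ≠ w → ZFClosure G B z) : ZFClosure G B w

/-- `B` is a zero forcing set of `G`. -/
def IsZeroForcingSet {V : Type*} (G : SimpleGraph V) (B : Set V) : Prop :=
  ∀ v, ZFClosure G B v

/-- The path graph on `Fin n` with vertices in path order. -/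
def pathG (n : ℕ) : SimpleGraph (Fin n) :=
  SimpleGraph.fromRel (fun i j => (i : ℕ) + 1 = (j : ℕ))

/-! Colour the path from left to right: `v_{k+1}` is forced by `v_k`. Besides `v_{k+1}`, the
neighbours of `v_k` are `v_{k-1}`, already blue, and, when `v_k ∈ N`, further vertices of `N`.
Those are blue from the start except for `v_i`, which lies at or before `v_k` because `i` is the
least index in `N`. -/

theorem isZeroForcingSet_of_forall_exists_forcer {V : Type*} [LT V] [WellFoundedLT V]
    (G : SimpleGraph V) (B : Set V)
    (h : ∀ v ∉ B, ∃ u < v, G.Adj u v ∧ ∀ z, G.Adj u z → z ≠ v → z < v ∨ z ∈ B) :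
    IsZeroForcingSet G B := by
  intro v
  induction v using WellFoundedLT.induction with
  | _ v ih =>
    by_cases hv : v ∈ B
    · exact .init v hv
    obtain ⟨u, huv, hadj, hother⟩ := h v hv
    exact .force u v (ih u huv) hadj fun z hz hzv =>
      (hother z hz hzv).elim (ih z) (.init z)

lemma pathG_adj {n : ℕ} {x y : Fin n} :
    (pathG n).Adj x y ↔ x ≠ y ∧ ((x : ℕ) + 1 = y ∨ (y : ℕ) + 1 = x) := by
  simp [pathG, SimpleGraph.fromRel_adj]

/-- Let N be an independent set of P_n with |N| ≥ 2, and i the smallest index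
in N.  Then B = {v₁} ∪ (N \ {v_i}) is a zero forcing set of every graph H
obtained from P_n by adding any set of edges between vertices of N. -/
theorem stmt_17 (n : ℕ) (hn : 2 ≤ n) (N : Set (Fin n))
    (i : Fin n) (himin : ∀ j ∈ N, i ≤ j)
    (H : SimpleGraph (Fin n))
    (hle : pathG n ≤ H)
    (hextra : ∀ x y, H.Adj x y → (pathG n).Adj x y ∨ (x ∈ N ∧ y ∈ N)) :
    IsZeroForcingSet H ({(⟨0, by omega⟩ : Fin n)} ∪ (N \ {i})) := by
  refine isZeroForcingSet_of_forall_exists_forcer H _ fun v hv => ?_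
  have hv0 : (v : ℕ) ≠ 0 := fun h => hv (Or.inl (Fin.ext h))
  let u : Fin n := ⟨v - 1, by omega⟩
  have huv : u < v := Fin.lt_def.2 (by simp only [u]; omega)
  have hpath : (pathG n).Adj u v := pathG_adj.2 ⟨huv.ne, Or.inl (by simp only [u]; omega)⟩
  refine ⟨u, huv, hle hpath, fun z hz hzv => ?_⟩
  rcases hextra u z hz with hp | ⟨huN, hzN⟩
  · have hzv' : (z : ℕ) ≠ v := fun h => hzv (Fin.ext h)
    obtain ⟨-, h | h⟩ := pathG_adj.1 hp <;> simp only [u] at h <;> left <;> omega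
  · by_cases hzi : z = i
    · exact .inl (hzi ▸ (himin u huN).trans_lt huv)
    · exact .inr (.inr ⟨hzN, hzi⟩)
end

section
/- Let C_n be the cycle v₁v₂…v_nv₁ (n ≥ 3) and N ⊆ V(C_n) an independent set with |N| ≥ 2. Let i be the smallest and j the largest index with v_i, v_j ∈ N. Then B = (N \ {v_i, v_j}) ∪ {v₁, v_n} is a zero forcing set of every graph H obtained from C_n by adding any set of edges between vertices of N. -/
/-- The cycle graph on `Fin n` with vertices in cyclic order v₁ … v_n v₁. -/
def cycleG (n : ℕ) : SimpleGraph (Fin n) :=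
  SimpleGraph.fromRel (fun i j => (i : ℕ) + 1 = (j : ℕ) ∨ ((i : ℕ) = n - 1 ∧ (j : ℕ) = 0))

lemma cycleG_adj_of_val_succ {n : ℕ} {a b : Fin n} (h : (a : ℕ) + 1 = b) :
    (cycleG n).Adj a b := by
  refine ⟨fun hab => ?_, Or.inl (Or.inl h)⟩
  subst hab
  omega

lemma cycleG_adj_val {n : ℕ} {a b : Fin n} (h : (cycleG n).Adj a b) :
    (a : ℕ) + 1 = b ∨ (b : ℕ) + 1 = a ∨ ((a : ℕ) = n - 1 ∧ (b : ℕ) = 0) ∨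
      ((b : ℕ) = n - 1 ∧ (a : ℕ) = 0) := by
  simp only [cycleG, SimpleGraph.fromRel_adj] at h
  tauto

theorem zfClosure_of_upperBound_le {n : ℕ} {N B : Set (Fin n)} {H : SimpleGraph (Fin n)}
    {j : Fin n} (hle : cycleG n ≤ H)
    (hextra : ∀ x y, H.Adj x y → (cycleG n).Adj x y ∨ (x ∈ N ∧ y ∈ N))
    (hj : j ∈ upperBounds N) (hfirst : ∀ v : Fin n, (v : ℕ) = 0 → v ∈ B)
    (hlast : ∀ v : Fin n, (v : ℕ) = n - 1 → v ∈ B) :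
    ∀ v, j ≤ v → ZFClosure H B v := by
  intro v
  induction v using WellFoundedGT.induction with
  | _ v ih =>
  intro hjv
  by_cases hv : (v : ℕ) = n - 1
  · exact .init v (hlast v hv)
  set u : Fin n := ⟨v + 1, by omega⟩
  have hvu : v < u := Fin.lt_def.2 (Nat.lt_succ_self _)
  refine .force u v (ih u hvu (hjv.trans hvu.le)) (hle (cycleG_adj_of_val_succ rfl).symm)
    fun z huz hzv => ?_
  have huN : u ∉ N := fun hu => (hjv.trans_lt hvu).not_ge (hj hu)
  rw [Ne, Fin.ext_iff] at hzv
  rcases cycleG_adj_val ((hextra u z huz).resolve_right fun h => huN h.1) with h | h | h | h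
  · exact ih z (Fin.lt_def.2 (by simp only [u] at h; omega)) (hjv.trans (Fin.le_def.2 (by omega)))
  · exact absurd (by simp only [u] at h; omega) hzv
  · exact .init z (hfirst z h.2)
  · simp [u] at h

theorem isZeroForcingSet_of_bounds {n : ℕ} {N B : Set (Fin n)} {H : SimpleGraph (Fin n)}
    {i j : Fin n} (hle : cycleG n ≤ H)
    (hextra : ∀ x y, H.Adj x y → (cycleG n).Adj x y ∨ (x ∈ N ∧ y ∈ N))
    (hi : i ∈ lowerBounds N) (hj : j ∈ upperBounds N) (hN : N \ {i, j} ⊆ B)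
    (hfirst : ∀ v : Fin n, (v : ℕ) = 0 → v ∈ B)
    (hlast : ∀ v : Fin n, (v : ℕ) = n - 1 → v ∈ B) :
    IsZeroForcingSet H B := by
  have hhigh := zfClosure_of_upperBound_le hle hextra hj hfirst hlast
  intro v
  induction v using WellFoundedLT.induction with
  | _ v ih =>
  by_cases hjv : j ≤ v
  · exact hhigh v hjv
  by_cases hv : (v : ℕ) = 0
  · exact .init v (hfirst v hv)
  set u : Fin n := ⟨v - 1, by omega⟩
  have huv : u < v := Fin.lt_def.2 (by simp only [u]; omega)
  refine .force u v (ih u huv) (hle (cycleG_adj_of_val_succ (by simp only [u]; omega)))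
    fun z huz hzv => ?_
  rcases lt_or_ge z v with hzv' | hvz
  · exact ih z hzv'
  by_cases hjz : j ≤ z
  · exact hhigh z hjz
  have hvz' : (v : ℕ) < z := Fin.lt_def.1 (lt_of_le_of_ne hvz (Ne.symm hzv))
  rcases hextra u z huz with hc | ⟨huN, hzN⟩
  · rcases cycleG_adj_val hc with h | h | h | h
    · simp only [u] at h; omega
    · simp only [u] at h; omega
    · simp only [u] at h; omega
    · exact .init z (hlast z h.1)
  · refine .init z (hN ⟨hzN, ?_⟩)
    rintro (rfl | rfl)
    · exact (hi huN).not_gt (huv.trans (Fin.lt_def.2 hvz'))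
    · exact hjz le_rfl

/-- Let N be an independent set of C_n (n ≥ 3) with |N| ≥ 2, i the smallest and
j the largest index in N.  Then B = (N \ {v_i, v_j}) ∪ {v₁, v_n} is a zero
forcing set of every graph H obtained from C_n by adding any set of edges
between vertices of N. -/
theorem stmt_18 (n : ℕ) (hn : 3 ≤ n) (N : Set (Fin n))
    (i j : Fin n)
    (himin : ∀ x ∈ N, i ≤ x) (hjmax : ∀ x ∈ N, x ≤ j)
    (H : SimpleGraph (Fin n))
    (hle : cycleG n ≤ H)
    (hextra : ∀ x y, H.Adj x y → (cycleG n).Adj x y ∨ (x ∈ N ∧ y ∈ N)) :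
    IsZeroForcingSet H
      ((N \ {i, j}) ∪ {(⟨0, by omega⟩ : Fin n), (⟨n - 1, by omega⟩ : Fin n)}) :=
  isZeroForcingSet_of_bounds hle hextra himin hjmax Set.subset_union_left
    (fun _ hv => Or.inr (Or.inl (Fin.ext hv))) (fun _ hv => Or.inr (Or.inr (Fin.ext hv)))
end

section
/- Let G be a graph with an independent set N, and let B be a zero forcing set (under the probe color change rule, equivalently a common zero forcing set for all graphs obtained by adding edges within N) such that N ⊄ B ∪ (reversal of B) in the following sense: B does not contain N, and N is not the set of terminal vertices of some set of forcing chains of B. Then N is a vertex cut of G. -/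
/-- The set of blue vertices after the first `t` forces of the list `L` have
been performed, starting from the initially blue set `B`. -/
def blueAt {V : Type*} (B : Set V) (L : List (V × V)) (t : ℕ) : Set V :=
  B ∪ {w | ∃ u, (u, w) ∈ L.take t}

/-- `L` is a valid chronological list of forces for the probe color change rule
on `G` with non-probe set `N` and initial blue set `B`:  at each step the
forcing vertex is blue, the forced vertex is white, all other neighbors of the
forcing vertex are blue, and a non-probe vertex may force only after all of `N`
is blue.  Each vertex forces at most once and is forced at most once, so the
forces form a set of forcing chains. -/
def IsProbeForcingProcess {V : Type*} (G : SimpleGraph V) (N B : Set V)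
    (L : List (V × V)) : Prop :=
  (L.map Prod.fst).Nodup ∧ (L.map Prod.snd).Nodup ∧
  ∀ t : Fin L.length,
    (L.get t).1 ∈ blueAt B L t ∧
    (L.get t).2 ∉ blueAt B L t ∧
    G.Adj (L.get t).1 (L.get t).2 ∧
    (∀ z, G.Adj (L.get t).1 z → z ≠ (L.get t).2 → z ∈ blueAt B L t) ∧
    ((L.get t).1 ∈ N → N ⊆ blueAt B L t)

/-- `B` is a probe zero forcing set: some valid probe forcing process colors all
of `V` blue. -/
def IsProbeZeroForcingSet {V : Type*} (G : SimpleGraph V) (N B : Set V) : Prop :=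
  ∃ L : List (V × V), IsProbeForcingProcess G N B L ∧
    ∀ v : V, v ∈ blueAt B L L.length

/-!
Let `i` be the first step at which a vertex of `N` forces. It exists: otherwise `N` lies in the
reversal, which has `|B| = |N|` vertices. Just before step `i` all of `N` is blue, and the blue set
`S` has `|B| + i` vertices, so `S \ N` has exactly `i` vertices, as many as have already forced, none
of them in `N`. Hence every vertex of `S \ N` has forced, so all its neighbours are blue and no edge
of `G - N` leaves `S \ N`. Yet `S \ N` contains a vertex of `B \ N`, while the vertex forced at
step `i` lies outside both `S` and `N`.
-/

namespace ProbeForcing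

variable {V : Type*}

def targets (l : List (V × V)) : Set V := {w | ∃ u, (u, w) ∈ l}

def sources (l : List (V × V)) : Set V := {u | ∃ w, (u, w) ∈ l}

lemma mem_targets_take {l : List (V × V)} {t : ℕ} {w : V} :
    w ∈ targets (l.take t) ↔ ∃ i, ∃ h : i < l.length, i < t ∧ l[i].2 = w := by
  simp only [targets, Set.mem_ofPred_eq, List.mem_take_iff_getElem, lt_min_iff]
  constructor
  · rintro ⟨u, i, ⟨hit, hil⟩, hget⟩
    exact ⟨i, hil, hit, by rw [hget]⟩
  · rintro ⟨i, hil, hit, rfl⟩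
    exact ⟨l[i].1, i, ⟨hit, hil⟩, rfl⟩

lemma mem_sources_take {l : List (V × V)} {t : ℕ} {u : V} :
    u ∈ sources (l.take t) ↔ ∃ i, ∃ h : i < l.length, i < t ∧ l[i].1 = u := by
  simp only [sources, Set.mem_ofPred_eq, List.mem_take_iff_getElem, lt_min_iff]
  constructor
  · rintro ⟨w, i, ⟨hit, hil⟩, hget⟩
    exact ⟨i, hil, hit, by rw [hget]⟩
  · rintro ⟨i, hil, hit, rfl⟩
    exact ⟨l[i].2, i, ⟨hit, hil⟩, rfl⟩

lemma ncard_targets {l : List (V × V)} (h : (l.map Prod.snd).Nodup) :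
    (targets l).ncard = l.length := by
  classical
  have : targets l = ↑(l.map Prod.snd).toFinset := by ext; simp [targets]
  rw [this, Set.ncard_coe_finset, List.toFinset_card_of_nodup h, List.length_map]

lemma ncard_sources {l : List (V × V)} (h : (l.map Prod.fst).Nodup) :
    (sources l).ncard = l.length := by
  classical
  have : sources l = ↑(l.map Prod.fst).toFinset := by ext; simp [sources]
  rw [this, Set.ncard_coe_finset, List.toFinset_card_of_nodup h, List.length_map]

lemma compl_sources (l : List (V × V)) : (sources l)ᶜ = {v | ∀ w, (v, w) ∉ l} := by
  ext; simp [sources]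

lemma blueAt_mono (B : Set V) (L : List (V × V)) {s t : ℕ} (h : s ≤ t) :
    blueAt B L s ⊆ blueAt B L t := by
  rintro v (hv | hv)
  · exact Or.inl hv
  · obtain ⟨i, hil, his, rfl⟩ := mem_targets_take.1 hv
    exact Or.inr (mem_targets_take.2 ⟨i, hil, his.trans_le h, rfl⟩)

end ProbeForcing

open ProbeForcing

namespace IsProbeForcingProcess

variable {V : Type*} {G : SimpleGraph V} {N B : Set V} {L : List (V × V)}
  (hL : IsProbeForcingProcess G N B L)
include hL

lemma source_mem_blueAt {i : ℕ} (hi : i < L.length) : L[i].1 ∈ blueAt B L i :=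
  (hL.2.2 ⟨i, hi⟩).1

lemma target_notMem_blueAt {i : ℕ} (hi : i < L.length) : L[i].2 ∉ blueAt B L i :=
  (hL.2.2 ⟨i, hi⟩).2.1

lemma mem_blueAt_of_adj_source {i : ℕ} (hi : i < L.length) {z : V} (hz : G.Adj L[i].1 z)
    (hzi : z ≠ L[i].2) : z ∈ blueAt B L i :=
  (hL.2.2 ⟨i, hi⟩).2.2.2.1 z hz hzi

lemma subset_blueAt_of_source_mem {i : ℕ} (hi : i < L.length) (hiN : L[i].1 ∈ N) :
    N ⊆ blueAt B L i :=
  (hL.2.2 ⟨i, hi⟩).2.2.2.2 hiN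

lemma disjoint_targets (t : ℕ) : Disjoint B (targets (L.take t)) := by
  rw [Set.disjoint_left]
  intro w hwB hw
  obtain ⟨i, hi, -, rfl⟩ := mem_targets_take.1 hw
  exact hL.target_notMem_blueAt hi (Or.inl hwB)

lemma ncard_blueAt [Finite V] {t : ℕ} (ht : t ≤ L.length) :
    (blueAt B L t).ncard = B.ncard + t := by
  have hnodup : ((L.take t).map Prod.snd).Nodup :=
    hL.2.1.sublist ((List.take_sublist _ _).map _)
  show (B ∪ targets (L.take t)).ncard = _
  rw [Set.ncard_union_eq (hL.disjoint_targets t), ncard_targets hnodup,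
    List.length_take_of_le ht]

lemma ncard_compl_sources [Finite V] (hcompl : ∀ v, v ∈ blueAt B L L.length) :
    (sources L)ᶜ.ncard = B.ncard := by
  have huniv : (Set.univ : Set V).ncard = B.ncard + L.length := by
    rw [← hL.ncard_blueAt le_rfl, Set.eq_univ_of_forall hcompl]
  have := Set.ncard_add_ncard_compl (sources L)
  rw [ncard_sources hL.1, ← Set.ncard_univ, huniv] at this
  omega

lemma exists_source_mem [Finite V] (hcompl : ∀ v, v ∈ blueAt B L L.length)
    (hcard : B.ncard = N.ncard) (hne : (sources L)ᶜ ≠ N) :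
    ∃ i, ∃ h : i < L.length, L[i].1 ∈ N := by
  by_contra! hnone
  refine hne (Set.eq_of_subset_of_ncard_le ?_ ?_).symm
  · rintro v hvN ⟨w, hvw⟩
    obtain ⟨i, hi, hget⟩ := List.mem_iff_getElem.1 hvw
    exact hnone i hi (by rw [hget]; exact hvN)
  · rw [hL.ncard_compl_sources hcompl, hcard]

lemma exists_first_source_mem [Finite V] (hcompl : ∀ v, v ∈ blueAt B L L.length)
    (hcard : B.ncard = N.ncard) (hne : (sources L)ᶜ ≠ N) :
    ∃ i, ∃ h : i < L.length, L[i].1 ∈ N ∧ Disjoint (sources (L.take i)) N := by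
  classical
  have hex := hL.exists_source_mem hcompl hcard hne
  obtain ⟨hi, hiN⟩ := Nat.find_spec hex
  refine ⟨Nat.find hex, hi, hiN, Set.disjoint_left.2 ?_⟩
  intro u hu huN
  obtain ⟨j, hj, hji, rfl⟩ := mem_sources_take.1 hu
  exact Nat.find_min hex hji ⟨hj, huN⟩

lemma mem_blueAt_of_adj_of_mem_sources_take {t : ℕ} {u z : V} (hu : u ∈ sources (L.take t))
    (huz : G.Adj u z) : z ∈ blueAt B L t := by
  obtain ⟨j, hj, hjt, rfl⟩ := mem_sources_take.1 hu
  by_cases hz : z = L[j].2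
  · exact Or.inr (mem_targets_take.2 ⟨j, hj, hjt, hz.symm⟩)
  · exact blueAt_mono B L hjt.le (hL.mem_blueAt_of_adj_source hj huz hz)

lemma sources_take_subset_diff {t : ℕ} (hdisj : Disjoint (sources (L.take t)) N) :
    sources (L.take t) ⊆ blueAt B L t \ N := by
  intro u hu
  obtain ⟨j, hj, hjt, rfl⟩ := mem_sources_take.1 hu
  exact ⟨blueAt_mono B L hjt.le (hL.source_mem_blueAt hj), hdisj.notMem_of_mem_left hu⟩

lemma sources_take_eq_diff [Finite V] {t : ℕ} (ht : t ≤ L.length) (hNt : N ⊆ blueAt B L t)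
    (hdisj : Disjoint (sources (L.take t)) N) (hcard : B.ncard = N.ncard) :
    sources (L.take t) = blueAt B L t \ N := by
  refine Set.eq_of_subset_of_ncard_le (hL.sources_take_subset_diff hdisj) ?_
  have hnodup : ((L.take t).map Prod.fst).Nodup := hL.1.sublist ((List.take_sublist _ _).map _)
  rw [Set.ncard_sdiff hNt, hL.ncard_blueAt ht, ncard_sources hnodup, List.length_take_of_le ht,
    hcard, Nat.add_sub_cancel_left]

lemma mem_blueAt_of_adj_of_mem_diff [Finite V] {t : ℕ} (ht : t ≤ L.length)
    (hNt : N ⊆ blueAt B L t) (hdisj : Disjoint (sources (L.take t)) N)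
    (hcard : B.ncard = N.ncard) {u z : V} (hu : u ∈ blueAt B L t \ N) (huz : G.Adj u z) :
    z ∈ blueAt B L t := by
  rw [← hL.sources_take_eq_diff ht hNt hdisj hcard] at hu
  exact hL.mem_blueAt_of_adj_of_mem_sources_take hu huz

end IsProbeForcingProcess

lemma SimpleGraph.not_reachable_of_forall_adj_mem {W : Type*} {H : SimpleGraph W} {U : Set W}
    (hU : ∀ u ∈ U, ∀ v, H.Adj u v → v ∈ U) {x y : W} (hx : x ∈ U) (hy : y ∉ U) :
    ¬ H.Reachable x y := by
  rintro ⟨p⟩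
  induction p with
  | nil => exact hy hx
  | cons h _ ih => exact ih (hU _ hx _ h) hy

theorem stmt_19_general {V : Type*} [Fintype V] (G : SimpleGraph V) (N B : Set V)
    (hcard : B.ncard = N.ncard)
    (hNB : ¬ N ⊆ B)
    (hrev : ∃ L : List (V × V), IsProbeForcingProcess G N B L ∧
      (∀ v : V, v ∈ blueAt B L L.length) ∧
      {v : V | ∀ w, (v, w) ∉ L} ≠ N) :
    ¬ (G.induce {v : V | v ∉ N}).Connected := by
  obtain ⟨L, hL, hcompl, hne⟩ := hrev
  rw [← compl_sources] at hne
  obtain ⟨i, hi, hiN, hdisj⟩ := hL.exists_first_source_mem hcompl hcard hne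
  have hNS : N ⊆ blueAt B L i := hL.subset_blueAt_of_source_mem hi hiN
  obtain ⟨u, huB, huN⟩ : (B \ N).Nonempty := by
    by_contra! hBN
    exact hNB (Set.eq_of_subset_of_ncard_le (Set.sdiff_eq_empty.1 hBN) hcard.ge).symm.subset
  have hc : L[i].2 ∉ blueAt B L i := hL.target_notMem_blueAt hi
  intro hconn
  refine SimpleGraph.not_reachable_of_forall_adj_mem (U := {v | ↑v ∈ blueAt B L i})
    ?_ (x := ⟨u, huN⟩) (y := ⟨L[i].2, fun h => hc (hNS h)⟩) (Or.inl huB) hc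
    (hconn.preconnected _ _)
  exact fun v hv w hvw => hL.mem_blueAt_of_adj_of_mem_diff hi.le hNS hdisj hcard ⟨hv, v.2⟩ hvw

/-- Suppose N is an independent set of G, B is a minimum probe zero forcing set
with |B| = |N|, B does not contain N, and there is a set of forcing chains of B
(a complete probe forcing process) whose reversal (set of terminal vertices,
those that force no one) is not N.  Then N is a vertex cut of G. -/
theorem stmt_19 {V : Type*} [Fintype V] (G : SimpleGraph V) (N B : Set V)
    (hind : ∀ x ∈ N, ∀ y ∈ N, ¬ G.Adj x y)
    (hB : IsProbeZeroForcingSet G N B)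
    (hmin : ∀ B' : Set V, IsProbeZeroForcingSet G N B' → B.ncard ≤ B'.ncard)
    (hcard : B.ncard = N.ncard)
    (hNB : ¬ N ⊆ B)
    (hrev : ∃ L : List (V × V), IsProbeForcingProcess G N B L ∧
      (∀ v : V, v ∈ blueAt B L L.length) ∧
      {v : V | ∀ w, (v, w) ∉ L} ≠ N) :
    ¬ (G.induce {v : V | v ∉ N}).Connected :=
  stmt_19_general G N B hcard hNB hrev
end
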